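/- arXiv:2504.15264 — 10 statements merged into one kernel-verified Lean document; each statement's English description precedes it below -/
import Mathlib

section
/- Let p be a prime and L ⊆ ℤ/pℤ with |L| = s, and let X be a finite set whose cardinality modulo p does not lie in L. Then there is no family 𝓕 of subsets of X that is closed under pairwise intersections, satisfies |F| mod p ∈ L for every F ∈ 𝓕, and covers every subset of X of size at most s (i.e., every subset of X with at most s elements is contained in some member of 𝓕). -/
open Finset

private lemma nat_choose_id (m j : ℕ) :
    m * m.choose j = (j + 1) * m.choose (j + 1) + j * m.choose j := by
  rcases le_or_gt j m with h | h
  · have h1 : m.choose (j+1) * (j+1) = m.choose j * (m - j) := Nat.choose_succ_right_eq m j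
    have h2 : m - j + j = m := Nat.sub_add_cancel h
    calc m * m.choose j = (m - j + j) * m.choose j := by rw [h2]
    _ = (m - j) * m.choose j + j * m.choose j := by ring
    _ = (j + 1) * m.choose (j + 1) + j * m.choose j := by
        rw [mul_comm (j+1), h1]; ring
  · rw [Nat.choose_eq_zero_of_lt h, Nat.choose_eq_zero_of_lt (by omega)]
    simp

private lemma cast_choose_id {R : Type*} [CommRing R] (m j : ℕ) :
    (m : R) * (m.choose j : R)
      = ((j : R) + 1) * (m.choose (j + 1) : R) + (j : R) * (m.choose j : R) := by
  exact_mod_cast congrArg (Nat.cast : ℕ → R) (nat_choose_id m j)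


private lemma exists_coeffs {R : Type*} [CommRing R] (L : Finset R) :
    ∃ a : ℕ → R, ∀ m : ℕ,
      ∏ l ∈ L, ((m : R) - l)
        = ∑ j ∈ Finset.range (L.card + 1), a j * (m.choose j : R) := by
  classical
  induction L using Finset.induction_on with
  | empty => exact ⟨fun j => if j = 0 then 1 else 0, by simp⟩
  | insert _ _ hl =>
    rename_i l L ih
    obtain ⟨a, ha⟩ := ih
    set c := L.card with hc
    refine ⟨fun j => (if 1 ≤ j then a (j-1) * (j : R) else 0)
      + (if j ≤ c then a j * ((j : R) - l) else 0), fun m => ?_⟩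
    have key : ∀ j : ℕ, ((m : R) - l) * (a j * (m.choose j : R))
        = a j * ((j:R)+1) * (m.choose (j+1) : R)
          + a j * ((j:R) - l) * (m.choose j : R) := by
      intro j
      have h := cast_choose_id (R := R) m j
      linear_combination a j * h
    have A1 : ∑ j ∈ Finset.range (c+1+1),
        (if 1 ≤ j then a (j-1) * (j : R) else 0) * (m.choose j : R)
        = ∑ j ∈ Finset.range (c+1), a j * ((j:R)+1) * (m.choose (j+1) : R) := by
      rw [Finset.sum_range_succ' (fun j => (if 1 ≤ j then a (j-1) * (j : R) else 0) * (m.choose j : R)) (c+1)]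
      simp only [Nat.le_add_left 1, if_pos, Nat.add_sub_cancel,
        if_neg (by omega : ¬ (1:ℕ) ≤ 0), zero_mul, add_zero]
      push_cast
      exact Finset.sum_congr rfl fun j _ => by ring
    have A2 : ∑ j ∈ Finset.range (c+1+1),
        (if j ≤ c then a j * ((j : R) - l) else 0) * (m.choose j : R)
        = ∑ j ∈ Finset.range (c+1), a j * ((j:R) - l) * (m.choose j : R) := by
      rw [Finset.sum_range_succ]
      rw [if_neg (by omega : ¬ c+1 ≤ c), zero_mul, add_zero]
      exact Finset.sum_congr rfl fun j hj =>
        by rw [if_pos (by simpa [Nat.lt_succ_iff] using hj)]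
    have e1 : ∑ j ∈ Finset.range (c+1+1),
        ((if 1 ≤ j then a (j-1) * (j : R) else 0)
          + (if j ≤ c then a j * ((j : R) - l) else 0)) * (m.choose j : R)
        = (∑ j ∈ Finset.range (c+1+1), (if 1 ≤ j then a (j-1) * (j : R) else 0) * (m.choose j : R))
          + ∑ j ∈ Finset.range (c+1+1), (if j ≤ c then a j * ((j : R) - l) else 0) * (m.choose j : R) := by
      rw [← Finset.sum_add_distrib]
      exact Finset.sum_congr rfl fun j _ => by ring
    rw [Finset.prod_insert hl, ha, Finset.card_insert_of_notMem hl, Finset.mul_sum]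
    rw [Finset.sum_congr rfl (fun j _ => key j), Finset.sum_add_distrib, e1, A1, A2]


private lemma sum_powerset_card_eq {α : Type*} {R : Type*} [DecidableEq α] [CommRing R]
    (F : Finset α) (s : ℕ) (a : ℕ → R) :
    ∑ A ∈ F.powerset.filter (fun A => A.card ≤ s), a A.card
      = ∑ j ∈ Finset.range (s + 1), a j * (F.card.choose j : R) := by
  classical
  rw [← Finset.sum_fiberwise_of_maps_to (g := Finset.card)
      (t := Finset.range (s+1))
      (fun A hA => by simp only [Finset.mem_filter] at hA; simp [Nat.lt_succ_iff, hA.2])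
      (fun A => a A.card)]
  refine Finset.sum_congr rfl fun j hj => ?_
  have hjs : j ≤ s := by simpa [Nat.lt_succ_iff] using hj
  have hset : (F.powerset.filter (fun A => A.card ≤ s)).filter (fun A => A.card = j)
      = F.powersetCard j := by
    ext A
    simp only [Finset.mem_filter, Finset.mem_powerset, Finset.mem_powersetCard]
    constructor
    · rintro ⟨⟨h1, _⟩, h3⟩; exact ⟨h1, h3⟩
    · rintro ⟨h1, h2⟩; exact ⟨⟨h1, h2 ▸ hjs⟩, h2⟩
  rw [hset]
  rw [Finset.sum_congr rfl (fun A hA => by rw [(Finset.mem_powersetCard.mp hA).2])]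
  rw [Finset.sum_const, Finset.card_powersetCard, nsmul_eq_mul, mul_comm]

private lemma inf_mem_family {α : Type*} [DecidableEq α] {𝓕 : Finset (Finset α)}
    (hint : ∀ F ∈ 𝓕, ∀ F' ∈ 𝓕, F ∩ F' ∈ 𝓕) :
    ∀ S : Finset (Finset α), ∀ hS : S.Nonempty, (∀ F ∈ S, F ∈ 𝓕) →
      S.inf' hS id ∈ 𝓕 := by
  intro S hS
  induction hS using Finset.Nonempty.cons_induction with
  | singleton F => intro h; simpa using h F (by simp)
  | cons F S hFS hSne ih =>
    intro h
    rw [Finset.inf'_cons hSne]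
    have h1 : F ∈ 𝓕 := h F (Finset.mem_cons_self _ _)
    have h2 : S.inf' hSne id ∈ 𝓕 := ih fun G hG => h G (Finset.mem_cons_of_mem hG)
    exact hint F h1 _ h2


theorem stmt_1 {α : Type*} [DecidableEq α] (p s : ℕ) (hp : p.Prime)
    (L : Finset (ZMod p)) (hLs : L.card = s) (X : Finset α)
    (hX : (X.card : ZMod p) ∉ L) :
    ¬ ∃ 𝓕 : Finset (Finset α),
      (∀ F ∈ 𝓕, F ⊆ X) ∧
      (∀ F ∈ 𝓕, ∀ F' ∈ 𝓕, F ∩ F' ∈ 𝓕) ∧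
      (∀ F ∈ 𝓕, (F.card : ZMod p) ∈ L) ∧
      (∀ A ⊆ X, A.card ≤ s → ∃ F ∈ 𝓕, A ⊆ F) := by
  classical
  haveI := Fact.mk hp
  rintro ⟨𝓕, hsub, hint, hcardL, hcov⟩
  obtain ⟨a, ha⟩ := exists_coeffs (R := ZMod p) L
  rw [hLs] at ha
  -- the closure operator
  set cl : Finset α → Finset α := fun A =>
    if h : (𝓕.filter (fun F => A ⊆ F)).Nonempty
    then (𝓕.filter (fun F => A ⊆ F)).inf' h id else ∅ with hcl
  have hne : ∀ A ⊆ X, A.card ≤ s → (𝓕.filter (fun F => A ⊆ F)).Nonempty := by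
    intro A hA hAs
    obtain ⟨F, hF, hAF⟩ := hcov A hA hAs
    exact ⟨F, Finset.mem_filter.mpr ⟨hF, hAF⟩⟩
  have hclmem : ∀ A ⊆ X, A.card ≤ s → cl A ∈ 𝓕 := by
    intro A hA hAs
    rw [hcl]
    simp only [dif_pos (hne A hA hAs)]
    exact inf_mem_family hint _ (hne A hA hAs)
      (fun F hF => (Finset.mem_filter.mp hF).1)
  have hclsub : ∀ A ⊆ X, A.card ≤ s → A ⊆ cl A := by
    intro A hA hAs
    rw [hcl]
    simp only [dif_pos (hne A hA hAs)]
    exact Finset.le_iff_subset.mp (Finset.le_inf' (hne A hA hAs) id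
      (fun F hF => Finset.le_iff_subset.mpr (Finset.mem_filter.mp hF).2))
  have hclmin : ∀ A ⊆ X, A.card ≤ s → ∀ F ∈ 𝓕, A ⊆ F → cl A ⊆ F := by
    intro A hA hAs F hF hAF
    rw [hcl]
    simp only [dif_pos (hne A hA hAs)]
    exact Finset.le_iff_subset.mp (Finset.inf'_le id (Finset.mem_filter.mpr ⟨hF, hAF⟩))
  -- the fiber sums
  set h : Finset α → ZMod p := fun F =>
    ∑ A ∈ (X.powerset.filter (fun A => A.card ≤ s)).filter (fun A => cl A = F),
      a A.card with hh
  -- each member sum is zero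
  have Tzero : ∀ F ∈ 𝓕,
      ∑ A ∈ F.powerset.filter (fun A => A.card ≤ s), a A.card = 0 := by
    intro F hF
    rw [sum_powerset_card_eq, ← ha F.card]
    exact Finset.prod_eq_zero (hcardL F hF) (by rw [sub_self])
  -- decomposition over members
  have hdecomp : ∀ F ∈ 𝓕,
      ∑ A ∈ F.powerset.filter (fun A => A.card ≤ s), a A.card
        = ∑ F' ∈ 𝓕.filter (fun F' => F' ⊆ F), h F' := by
    intro F hF
    have hmap : ∀ A ∈ F.powerset.filter (fun A => A.card ≤ s),
        cl A ∈ 𝓕.filter (fun F' => F' ⊆ F) := by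
      intro A hA
      rw [Finset.mem_filter, Finset.mem_powerset] at hA
      have hAX : A ⊆ X := hA.1.trans (hsub F hF)
      exact Finset.mem_filter.mpr ⟨hclmem A hAX hA.2,
        hclmin A hAX hA.2 F hF hA.1⟩
    rw [← Finset.sum_fiberwise_of_maps_to hmap (fun A => a A.card)]
    refine Finset.sum_congr rfl fun F' hF' => ?_
    rw [hh]
    refine Finset.sum_congr ?_ (fun _ _ => rfl)
    rw [Finset.mem_filter] at hF'
    ext A
    simp only [Finset.mem_filter, Finset.mem_powerset]
    constructor
    · rintro ⟨⟨h1, h2⟩, h3⟩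
      exact ⟨⟨h1.trans (hsub F hF), h2⟩, h3⟩
    · rintro ⟨⟨h1, h2⟩, h3⟩
      refine ⟨⟨?_, h2⟩, h3⟩
      exact (h3 ▸ hclsub A h1 h2).trans hF'.2
  -- Möbius inversion: every fiber sum is zero
  have hzero : ∀ n, ∀ F ∈ 𝓕, F.card = n → h F = 0 := by
    intro n
    induction n using Nat.strong_induction_on with
    | _ n ih =>
      intro F hF hFn
      have h2 : ∑ F' ∈ 𝓕.filter (fun F' => F' ⊆ F), h F' = 0 := by
        rw [← hdecomp F hF]; exact Tzero F hF
      have hFmem : F ∈ 𝓕.filter (fun F' => F' ⊆ F) :=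
        Finset.mem_filter.mpr ⟨hF, Finset.Subset.refl F⟩
      rw [← Finset.add_sum_erase _ _ hFmem] at h2
      have hrest : ∀ F' ∈ (𝓕.filter (fun F' => F' ⊆ F)).erase F, h F' = 0 := by
        intro F' hF'
        obtain ⟨hne', hmem'⟩ := Finset.mem_erase.mp hF'
        rw [Finset.mem_filter] at hmem'
        have hlt : F'.card < F.card :=
          Finset.card_lt_card (Finset.ssubset_iff_subset_ne.mpr ⟨hmem'.2, hne'⟩)
        exact ih F'.card (hFn ▸ hlt) F' hmem'.1 rfl
      rw [Finset.sum_eq_zero hrest, add_zero] at h2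
      exact h2
  -- total sum decomposition
  have hmapX : ∀ A ∈ X.powerset.filter (fun A => A.card ≤ s), cl A ∈ 𝓕 := by
    intro A hA
    rw [Finset.mem_filter, Finset.mem_powerset] at hA
    exact hclmem A hA.1 hA.2
  have htot : ∏ l ∈ L, ((X.card : ZMod p) - l) = 0 := by
    rw [ha, ← sum_powerset_card_eq,
      ← Finset.sum_fiberwise_of_maps_to hmapX (fun A => a A.card)]
    exact Finset.sum_eq_zero fun F hF => hzero F.card F hF rfl
  obtain ⟨l, hl, h0⟩ := Finset.prod_eq_zero_iff.mp htot
  exact hX (sub_eq_zero.mp h0 ▸ hl)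
end

section
/- For any positive integers k, m, n with k ≥ 2, there exists a graph G whose vertex set is partitioned into sets V_1, ..., V_k such that: (1) every edge of G goes between V_i and V_{i+1} for some i ∈ {1,...,k-1}; (2) |V_i| = n^{k-i-1} m^i for all i ∈ {1,...,k-1} and |V_k| = m^{k-1}; (3) for all i ∈ {1,...,k-1}, every vertex in V_i has exactly m neighbours in V_{i+1}; (4) every vertex in V_i has exactly n neighbours in V_{i-1} for all i ∈ {2,...,k-1}, and every vertex in V_k has exactly m neighbours in V_{k-1}; (5) for all i < j in {1,...,k} and all u ∈ V_i, v ∈ V_j, there is at most one path with j-i edges starting at u, passing through V_{i+1}, V_{i+2}, ..., V_{j-1} in order, and ending at v. -/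
namespace Stmt4Aux

def dig (b c p : ℕ) : ℕ := c / b ^ p % b

def enc (b : ℕ) (f : ℕ → ℕ) (L : ℕ) : ℕ := ∑ p ∈ Finset.range L, f p * b ^ p

lemma dig_lt {b : ℕ} (hb : 0 < b) (c p : ℕ) : dig b c p < b := Nat.mod_lt _ hb

lemma dig_zero (b c : ℕ) : dig b c 0 = c % b := by simp [dig]

lemma dig_succ (b c p : ℕ) : dig b c (p + 1) = dig b (c / b) p := by
  rw [dig, dig, pow_succ', ← Nat.div_div_eq_div_mul]

lemma digits_inj {b : ℕ} (hb : 0 < b) :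
    ∀ L c c', c < b ^ L → c' < b ^ L → (∀ p < L, dig b c p = dig b c' p) → c = c' := by
  intro L
  induction L with
  | zero => intro c c' hc hc' _; simp at hc hc'; omega
  | succ L ih =>
    intro c c' hc hc' h
    have h0 : c % b = c' % b := by
      have := h 0 (Nat.succ_pos L); simpa [dig_zero] using this
    have hdc : c / b < b ^ L := by
      rw [Nat.div_lt_iff_lt_mul hb, ← pow_succ]; exact hc
    have hdc' : c' / b < b ^ L := by
      rw [Nat.div_lt_iff_lt_mul hb, ← pow_succ]; exact hc'
    have hq : c / b = c' / b := ih _ _ hdc hdc' (fun p hp => by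
      have := h (p + 1) (by omega); simpa [dig_succ] using this)
    have e1 := Nat.div_add_mod c b
    have e2 := Nat.div_add_mod c' b
    rw [← e1, ← e2, hq, h0]

lemma enc_succ (b : ℕ) (f : ℕ → ℕ) (L : ℕ) :
    enc b f (L + 1) = f 0 + b * enc b (fun p => f (p + 1)) L := by
  rw [enc, Finset.sum_range_succ', enc, Finset.mul_sum]
  simp only [pow_zero, mul_one, pow_succ']
  rw [add_comm]
  congr 1
  apply Finset.sum_congr rfl
  intro p _
  ring

lemma enc_lt {b : ℕ} (hb : 0 < b) :
    ∀ L (f : ℕ → ℕ), (∀ p < L, f p < b) → enc b f L < b ^ L := by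
  intro L
  induction L with
  | zero => intro f _; simp [enc]
  | succ L ih =>
    intro f hf
    rw [enc_succ]
    have h1 : enc b (fun p => f (p + 1)) L < b ^ L := ih _ (fun p hp => hf (p + 1) (by omega))
    have h0 : f 0 < b := hf 0 (by omega)
    calc f 0 + b * enc b (fun p => f (p + 1)) L
        < b + b * enc b (fun p => f (p + 1)) L := by omega
      _ = b * (enc b (fun p => f (p + 1)) L + 1) := by ring
      _ ≤ b * b ^ L := Nat.mul_le_mul_left _ (by omega)
      _ = b ^ (L + 1) := (pow_succ' b L).symm

lemma dig_enc {b : ℕ} (hb : 0 < b) :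
    ∀ L (f : ℕ → ℕ), (∀ p < L, f p < b) → ∀ p < L, dig b (enc b f L) p = f p := by
  intro L
  induction L with
  | zero => intro f _ p hp; omega
  | succ L ih =>
    intro f hf p hp
    rw [enc_succ]
    match p with
    | 0 =>
      rw [dig_zero, Nat.add_mul_mod_self_left, Nat.mod_eq_of_lt (hf 0 (by omega))]
    | p + 1 =>
      rw [dig_succ, Nat.add_mul_div_left _ _ hb, Nat.div_eq_of_lt (hf 0 (by omega)),
        Nat.zero_add]
      exact ih _ (fun q hq => hf (q + 1) (by omega)) p (by omega)

lemma card_digit_filter {b : ℕ} (hb : 0 < b) :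
    ∀ L (c : ℕ → ℕ), (∀ p < L, c p ≤ b) →
      ((Finset.range (b ^ L)).filter (fun d => ∀ p < L, dig b d p < c p)).card
        = ∏ p ∈ Finset.range L, c p := by
  intro L
  induction L with
  | zero =>
    intro c _
    rw [Finset.filter_true_of_mem (fun d _ => by omega)]
    simp
  | succ L ih =>
    intro c hc
    rw [Finset.prod_range_succ']
    have key : ((Finset.range (b ^ (L + 1))).filter (fun d => ∀ p < L + 1, dig b d p < c p)).card
        = (((Finset.range (b ^ L)).filter (fun d => ∀ p < L, dig b d p < c (p + 1))) ×ˢ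
            Finset.range (c 0)).card := by
      apply Finset.card_nbij' (fun d => (d / b, d % b)) (fun x => x.2 + b * x.1)
      · intro d hd
        simp only [Finset.mem_coe, Finset.mem_filter, Finset.mem_range] at hd
        simp only [Finset.mem_coe, Finset.mem_product, Finset.mem_filter, Finset.mem_range]
        refine ⟨⟨?_, ?_⟩, ?_⟩
        · rw [Nat.div_lt_iff_lt_mul hb, ← pow_succ]; exact hd.1
        · intro p hp
          have := hd.2 (p + 1) (by omega)
          rwa [dig_succ] at this
        · have := hd.2 0 (by omega)
          rwa [dig_zero] at this
      · intro x hx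
        simp only [Finset.mem_coe, Finset.mem_product, Finset.mem_filter, Finset.mem_range] at hx
        obtain ⟨⟨hq, hdig⟩, hr⟩ := hx
        have hrb : x.2 < b := lt_of_lt_of_le hr (hc 0 (by omega))
        simp only [Finset.mem_coe, Finset.mem_filter, Finset.mem_range]
        constructor
        · calc x.2 + b * x.1 < b + b * x.1 := by omega
            _ = b * (x.1 + 1) := by ring
            _ ≤ b * b ^ L := Nat.mul_le_mul_left _ (by omega)
            _ = b ^ (L + 1) := (pow_succ' b L).symm
        · intro p hp
          match p with
          | 0 => rw [dig_zero, Nat.add_mul_mod_self_left, Nat.mod_eq_of_lt hrb]; exact hr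
          | p + 1 =>
            rw [dig_succ, Nat.add_mul_div_left _ _ hb, Nat.div_eq_of_lt hrb, Nat.zero_add]
            exact hdig p (by omega)
      · intro d _
        exact Nat.mod_add_div d b
      · intro x hx
        simp only [Finset.mem_coe, Finset.mem_product, Finset.mem_filter, Finset.mem_range] at hx
        have hrb : x.2 < b := lt_of_lt_of_le hx.2 (hc 0 (by omega))
        have h1 : (x.2 + b * x.1) / b = x.1 := by
          rw [Nat.add_mul_div_left _ _ hb, Nat.div_eq_of_lt hrb, Nat.zero_add]
        have h2 : (x.2 + b * x.1) % b = x.2 := by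
          rw [Nat.add_mul_mod_self_left, Nat.mod_eq_of_lt hrb]
        simp only [h1, h2]
    rw [key, Finset.card_product, Finset.card_range, ih _ (fun p hp => hc (p + 1) (by omega))]




def B (k m n i p : ℕ) : ℕ := if p + 1 < i ∨ p + 2 = k then m else n

def D (k m n i : ℕ) : Finset ℕ :=
  (Finset.range ((m + n) ^ (k - 1))).filter
    (fun d => ∀ p < k - 1, dig (m + n) d p < B k m n i p)

def V (k m n i : ℕ) : Finset ℕ :=
  if 1 ≤ i ∧ i ≤ k then (D k m n i).image (fun d => (i - 1) + k * d) else ∅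

lemma B_le (k m n i p : ℕ) : B k m n i p ≤ m + n := by
  unfold B; split <;> omega

lemma mem_D {k m n i d : ℕ} :
    d ∈ D k m n i ↔ d < (m + n) ^ (k - 1) ∧ ∀ p < k - 1, dig (m + n) d p < B k m n i p := by
  simp [D]

lemma mem_V {k m n i u : ℕ} :
    u ∈ V k m n i ↔ 1 ≤ i ∧ i ≤ k ∧ u % k = i - 1 ∧ u / k ∈ D k m n i := by
  unfold V
  split
  case isTrue h =>
    simp only [Finset.mem_image]
    constructor
    · rintro ⟨d, hd, rfl⟩
      have hk0 : 0 < k := by omega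
      have hmod : (i - 1 + k * d) % k = i - 1 := by
        rw [Nat.add_mul_mod_self_left]; exact Nat.mod_eq_of_lt (by omega)
      have hdiv : (i - 1 + k * d) / k = d := by
        rw [Nat.add_mul_div_left _ _ hk0, Nat.div_eq_of_lt (by omega), Nat.zero_add]
      exact ⟨h.1, h.2, hmod, by rw [hdiv]; exact hd⟩
    · rintro ⟨-, -, hmod, hdiv⟩
      refine ⟨u / k, hdiv, ?_⟩
      have := Nat.div_add_mod u k
      omega
  case isFalse h =>
    simp only [Finset.notMem_empty, false_iff]
    rintro ⟨h1, h2, -⟩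
    exact h ⟨h1, h2⟩

lemma V_disj {k m n i j : ℕ} (hij : i ≠ j) : Disjoint (V k m n i) (V k m n j) := by
  rw [Finset.disjoint_left]
  intro u hui huj
  rw [mem_V] at hui huj
  omega

def R (k m n u v : ℕ) : Prop :=
  u % k + 2 ≤ k ∧ u ∈ V k m n (u % k + 1) ∧ v ∈ V k m n (u % k + 2) ∧
    ∀ p < k - 1, p + 1 ≠ u % k + 1 → dig (m + n) (u / k) p = dig (m + n) (v / k) p

instance instDecR (k m n u v : ℕ) : Decidable (R k m n u v) := by
  unfold R; exact inferInstance

def G (k m n : ℕ) : SimpleGraph ℕ where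
  Adj u v := R k m n u v ∨ R k m n v u
  symm := ⟨fun u v h => Or.symm h⟩
  loopless := by
    constructor
    intro u h
    have : ∀ w : ℕ, ¬ R k m n w w := by
      intro w hw
      obtain ⟨-, h2, h3, -⟩ := hw
      rw [mem_V] at h2 h3
      omega
    rcases h with h | h <;> exact this u h

instance instDecAdj (k m n : ℕ) : DecidableRel (G k m n).Adj :=
  fun u v => inferInstanceAs (Decidable (R k m n u v ∨ R k m n v u))

lemma adj_iff {k m n u v j : ℕ} (hj1 : 1 ≤ j) (hjk : j + 1 ≤ k)
    (hv : v ∈ V k m n j) (hu : u ∈ V k m n (j + 1)) :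
    (G k m n).Adj v u ↔
      ∀ p < k - 1, p + 1 ≠ j → dig (m + n) (v / k) p = dig (m + n) (u / k) p := by
  have hvmod : v % k = j - 1 := (mem_V.mp hv).2.2.1
  have humod : u % k = j := by
    have := (mem_V.mp hu).2.2.1; omega
  constructor
  · rintro (h | h)
    · obtain ⟨-, -, -, hd⟩ := h
      intro p hp hpj
      exact hd p hp (by omega)
    · exfalso
      obtain ⟨-, -, h3, -⟩ := h
      rw [humod] at h3
      exact Finset.disjoint_left.mp (V_disj (by omega : j ≠ j + 2)) hv h3
  · intro hd
    left
    refine ⟨by omega, ?_, ?_, ?_⟩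
    · rw [hvmod]
      have : j - 1 + 1 = j := by omega
      rw [this]; exact hv
    · rw [hvmod]
      have : j - 1 + 2 = j + 1 := by omega
      rw [this]; exact hu
    · intro p hp hpj
      exact hd p hp (by omega)

lemma eq_of_V_digits {k m n i u u' : ℕ} (hb : 0 < m + n)
    (hu : u ∈ V k m n i) (hu' : u' ∈ V k m n i)
    (h : ∀ p < k - 1, dig (m + n) (u / k) p = dig (m + n) (u' / k) p) : u = u' := by
  rw [mem_V] at hu hu'
  have h1 : u / k = u' / k :=
    digits_inj hb (k - 1) _ _ (mem_D.mp hu.2.2.2).1 (mem_D.mp hu'.2.2.2).1 h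
  have e1 := Nat.div_add_mod u k
  have e2 := Nat.div_add_mod u' k
  rw [← e1, ← e2, h1]
  omega




lemma code_mod {k i d : ℕ} (h1 : 1 ≤ i) (h2 : i ≤ k) : (i - 1 + k * d) % k = i - 1 := by
  rw [Nat.add_mul_mod_self_left]; exact Nat.mod_eq_of_lt (by omega)

lemma code_div {k i d : ℕ} (h1 : 1 ≤ i) (h2 : i ≤ k) : (i - 1 + k * d) / k = d := by
  rw [Nat.add_mul_div_left _ _ (by omega : 0 < k), Nat.div_eq_of_lt (by omega), Nat.zero_add]

lemma card_match {k m n t q c : ℕ} (hb : 0 < m + n) (ht1 : 1 ≤ t) (htk : t ≤ k)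
    (hq : q < k - 1) (hdig : ∀ p < k - 1, p ≠ q → dig (m + n) c p < B k m n t p) :
    ((V k m n t).filter
      (fun u => ∀ p < k - 1, p ≠ q → dig (m + n) (u / k) p = dig (m + n) c p)).card
      = B k m n t q := by
  set b := m + n with hbdef
  set L := k - 1 with hLdef
  set F : ℕ → ℕ := fun a => (t - 1) + k * enc b (fun p => if p = q then a else dig b c p) L
    with hF
  have hfa_lt : ∀ a, a < B k m n t q → ∀ p, p < L → (if p = q then a else dig b c p) < b := by
    intro a ha p _
    split
    · exact lt_of_lt_of_le ha (B_le k m n t q)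
    · exact dig_lt hb c p
  have himg : (V k m n t).filter
      (fun u => ∀ p < L, p ≠ q → dig b (u / k) p = dig b c p)
      = (Finset.range (B k m n t q)).image F := by
    ext u
    simp only [Finset.mem_filter, Finset.mem_image, Finset.mem_range]
    constructor
    · rintro ⟨huV, hmatch⟩
      obtain ⟨-, -, hmod, hD⟩ := mem_V.mp huV
      rw [mem_D] at hD
      refine ⟨dig b (u / k) q, hD.2 q hq, ?_⟩
      have henc : enc b (fun p => if p = q then dig b (u / k) q else dig b c p) L = u / k := by
        apply digits_inj hb L _ _ (enc_lt hb L _ (hfa_lt _ (hD.2 q hq))) hD.1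
        intro p hp
        rw [dig_enc hb L _ (hfa_lt _ (hD.2 q hq)) p hp]
        split
        case isTrue h => rw [h]
        case isFalse h => exact (hmatch p hp h).symm
      rw [hF]
      simp only
      rw [henc]
      have := Nat.div_add_mod u k
      omega
    · rintro ⟨a, ha, rfl⟩
      have hlt := enc_lt hb L _ (hfa_lt a ha)
      have hdivF : F a / k = enc b (fun p => if p = q then a else dig b c p) L :=
        code_div ht1 htk
      have hmodF : F a % k = t - 1 := code_mod ht1 htk
      have hdigF : ∀ p, p < L → dig b (F a / k) p = (if p = q then a else dig b c p) := by
        intro p hp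
        rw [hdivF]
        exact dig_enc hb L _ (hfa_lt a ha) p hp
      constructor
      · rw [mem_V]
        refine ⟨ht1, htk, hmodF, ?_⟩
        rw [mem_D]
        refine ⟨by rw [hdivF]; exact hlt, ?_⟩
        intro p hp
        rw [hdigF p hp]
        split
        case isTrue h => rw [h]; exact ha
        case isFalse h => exact hdig p hp h
      · intro p hp hpq
        rw [hdigF p hp, if_neg hpq]
  rw [himg]
  have hinj : Set.InjOn F (Finset.range (B k m n t q)) := by
    intro a ha a' ha' hEq
    simp only [Finset.coe_range, Set.mem_Iio] at ha ha'
    have hk0 : 0 < k := by omega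
    simp only [hF] at hEq
    have h2 := Nat.add_left_cancel hEq
    have h1 := Nat.eq_of_mul_eq_mul_left hk0 h2
    have := dig_enc hb L _ (hfa_lt a ha) q hq
    rw [h1, dig_enc hb L _ (hfa_lt a' ha') q hq] at this
    simpa using this.symm
  rw [Finset.card_image_of_injOn hinj, Finset.card_range]

lemma deg_fwd {k m n j v : ℕ} (hb : 0 < m + n) (hj1 : 1 ≤ j) (hjk : j + 1 ≤ k)
    (hv : v ∈ V k m n j) :
    ((V k m n (j + 1)).filter (fun u => (G k m n).Adj v u)).card = m := by
  have hq : j - 1 < k - 1 := by omega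
  have hvD := (mem_V.mp hv).2.2.2
  rw [mem_D] at hvD
  have hre : (V k m n (j + 1)).filter (fun u => (G k m n).Adj v u)
      = (V k m n (j + 1)).filter
        (fun u => ∀ p < k - 1, p ≠ j - 1 → dig (m + n) (u / k) p = dig (m + n) (v / k) p) := by
    apply Finset.filter_congr
    intro u hu
    rw [adj_iff hj1 hjk hv hu]
    constructor
    · intro h p hp hpq; exact (h p hp (by omega)).symm
    · intro h p hp hpq; exact (h p hp (by omega)).symm
  have hdig : ∀ p < k - 1, p ≠ j - 1 → dig (m + n) (v / k) p < B k m n (j + 1) p := by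
    intro p hp hpq
    have h1 := hvD.2 p hp
    have h2 : B k m n j p = B k m n (j + 1) p := by
      unfold B; split_ifs <;> omega
    omega
  rw [hre, card_match hb (by omega) hjk hq hdig]
  unfold B; split_ifs <;> omega

lemma deg_bwd {k m n j v : ℕ} (hb : 0 < m + n) (hj1 : 1 ≤ j) (hjk : j + 1 ≤ k)
    (hv : v ∈ V k m n (j + 1)) :
    ((V k m n j).filter (fun u => (G k m n).Adj v u)).card = B k m n j (j - 1) := by
  have hq : j - 1 < k - 1 := by omega
  have hvD := (mem_V.mp hv).2.2.2
  rw [mem_D] at hvD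
  have hre : (V k m n j).filter (fun u => (G k m n).Adj v u)
      = (V k m n j).filter
        (fun u => ∀ p < k - 1, p ≠ j - 1 → dig (m + n) (u / k) p = dig (m + n) (v / k) p) := by
    apply Finset.filter_congr
    intro u hu
    rw [SimpleGraph.adj_comm, adj_iff hj1 hjk hu hv]
    constructor
    · intro h p hp hpq; exact h p hp (by omega)
    · intro h p hp hpq; exact h p hp (by omega)
  have hdig : ∀ p < k - 1, p ≠ j - 1 → dig (m + n) (v / k) p < B k m n j p := by
    intro p hp hpq
    have h1 := hvD.2 p hp
    have h2 : B k m n j p = B k m n (j + 1) p := by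
      unfold B; split_ifs <;> omega
    omega
  rw [hre, card_match hb hj1 (by omega) hq hdig]

lemma card_V {k m n i : ℕ} (hb : 0 < m + n) (h1 : 1 ≤ i) (h2 : i ≤ k) :
    (V k m n i).card = ∏ p ∈ Finset.range (k - 1), B k m n i p := by
  unfold V
  rw [if_pos ⟨h1, h2⟩, Finset.card_image_of_injective _
    (fun a b hab => Nat.eq_of_mul_eq_mul_left (show 0 < k by omega) (Nat.add_left_cancel hab))]
  unfold D
  exact card_digit_filter hb (k - 1) _ (fun p _ => B_le k m n i p)

lemma prod_B_top {k m n : ℕ} (hk : 2 ≤ k) :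
    ∏ p ∈ Finset.range (k - 1), B k m n k p = m ^ (k - 1) := by
  have hc : ∀ p ∈ Finset.range (k - 1), B k m n k p = m := by
    intro p hp
    simp only [Finset.mem_range] at hp
    unfold B; split_ifs <;> omega
  rw [Finset.prod_congr rfl hc, Finset.prod_const, Finset.card_range]

lemma prod_B_mid {k m n i : ℕ} (hk : 2 ≤ k) (h1 : 1 ≤ i) (h2 : i ≤ k - 1) :
    ∏ p ∈ Finset.range (k - 1), B k m n i p = n ^ (k - i - 1) * m ^ i := by
  unfold B
  rw [Finset.prod_ite (fun _ => m) (fun _ => n), Finset.prod_const, Finset.prod_const]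
  have hfil : (Finset.range (k - 1)).filter (fun p => p + 1 < i ∨ p + 2 = k)
      = insert (k - 2) (Finset.range (i - 1)) := by
    ext p
    simp only [Finset.mem_filter, Finset.mem_range, Finset.mem_insert]
    omega
  have hfil2 : (Finset.range (k - 1)).filter (fun p => ¬(p + 1 < i ∨ p + 2 = k))
      = Finset.Ico (i - 1) (k - 2) := by
    ext p
    simp only [Finset.mem_filter, Finset.mem_range, Finset.mem_Ico]
    omega
  rw [hfil, hfil2, Finset.card_insert_of_notMem (by simp; omega), Finset.card_range,
    Nat.card_Ico]
  have e1 : i - 1 + 1 = i := by omega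
  have e2 : k - 2 - (i - 1) = k - i - 1 := by omega
  rw [e1, e2, mul_comm]

lemma path_digits {k m n i j : ℕ} (f : ℕ → ℕ) (hi : 1 ≤ i) (hjk : j ≤ k)
    (hadj : ∀ r, i ≤ r → r < j → (G k m n).Adj (f r) (f (r + 1)))
    (hVm : ∀ r, i ≤ r → r ≤ j → f r ∈ V k m n r) :
    ∀ r s, i ≤ r → r ≤ s → s ≤ j → ∀ p < k - 1, (p + 1 < r ∨ s ≤ p + 1) →
      dig (m + n) (f s / k) p = dig (m + n) (f r / k) p := by
  intro r s hir hrs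
  induction s, hrs using Nat.le_induction with
  | base => intro _ p hp _; rfl
  | succ s hs ih =>
    intro hsj p hp hcond
    have hs1 : 1 ≤ s := by omega
    have hstep : ∀ p' < k - 1, p' + 1 ≠ s →
        dig (m + n) (f s / k) p' = dig (m + n) (f (s + 1) / k) p' :=
      (adj_iff hs1 (by omega) (hVm s (by omega) (by omega))
        (hVm (s + 1) (by omega) (by omega))).mp (hadj s (by omega) (by omega))
    have h1 : dig (m + n) (f (s + 1) / k) p = dig (m + n) (f s / k) p :=
      (hstep p hp (by omega)).symm
    rw [h1]
    exact ih (by omega) p hp (by omega)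

end Stmt4Aux

theorem stmt_4 (k m n : ℕ) (hk : 2 ≤ k) (hm : 1 ≤ m) (hn : 1 ≤ n) :
    ∃ (V : ℕ → Finset ℕ) (G : SimpleGraph ℕ) (_ : DecidableRel G.Adj),
      (∀ i j, i ≠ j → Disjoint (V i) (V j)) ∧
      -- (1) every edge goes between V i and V (i+1) for some i ∈ [1, k-1]
      (∀ u v, G.Adj u v → ∃ i, 1 ≤ i ∧ i + 1 ≤ k ∧
        ((u ∈ V i ∧ v ∈ V (i + 1)) ∨ (v ∈ V i ∧ u ∈ V (i + 1)))) ∧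
      -- (2) sizes of the parts
      (∀ i, 1 ≤ i → i ≤ k - 1 → (V i).card = n ^ (k - i - 1) * m ^ i) ∧
      (V k).card = m ^ (k - 1) ∧
      -- (3) forward degrees
      (∀ i, 1 ≤ i → i ≤ k - 1 → ∀ v ∈ V i, ((V (i + 1)).filter (fun u => G.Adj v u)).card = m) ∧
      -- (4) backward degrees
      (∀ i, 2 ≤ i → i ≤ k - 1 → ∀ v ∈ V i, ((V (i - 1)).filter (fun u => G.Adj v u)).card = n) ∧
      (∀ v ∈ V k, ((V (k - 1)).filter (fun u => G.Adj v u)).card = m) ∧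
      -- (5) uniqueness of layered paths
      (∀ i j, 1 ≤ i → i < j → j ≤ k → ∀ u ∈ V i, ∀ v ∈ V j,
        ∀ f g : ℕ → ℕ,
          (f i = u ∧ f j = v ∧ (∀ r, i ≤ r → r < j → G.Adj (f r) (f (r + 1))) ∧
            (∀ r, i ≤ r → r ≤ j → f r ∈ V r)) →
          (g i = u ∧ g j = v ∧ (∀ r, i ≤ r → r < j → G.Adj (g r) (g (r + 1))) ∧
            (∀ r, i ≤ r → r ≤ j → g r ∈ V r)) →
          ∀ r, i ≤ r → r ≤ j → f r = g r) := by
  have hb : 0 < m + n := by omega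
  refine ⟨Stmt4Aux.V k m n, Stmt4Aux.G k m n, Stmt4Aux.instDecAdj k m n,
    ?_, ?_, ?_, ?_, ?_, ?_, ?_, ?_⟩
  · exact fun i j hij => Stmt4Aux.V_disj hij
  · intro u v h
    rcases h with h | h
    · obtain ⟨h1, h2, h3, -⟩ := h
      exact ⟨u % k + 1, by omega, by omega, Or.inl ⟨h2, h3⟩⟩
    · obtain ⟨h1, h2, h3, -⟩ := h
      exact ⟨v % k + 1, by omega, by omega, Or.inr ⟨h2, h3⟩⟩
  · intro i h1 h2
    rw [Stmt4Aux.card_V hb h1 (by omega), Stmt4Aux.prod_B_mid hk h1 h2]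
  · rw [Stmt4Aux.card_V hb (by omega) le_rfl, Stmt4Aux.prod_B_top hk]
  · intro i h1 h2 v hv
    exact Stmt4Aux.deg_fwd hb h1 (by omega) hv
  · intro i h1 h2 v hv
    have e : i - 1 + 1 = i := by omega
    have hv' : v ∈ Stmt4Aux.V k m n (i - 1 + 1) := by rw [e]; exact hv
    have hd := Stmt4Aux.deg_bwd hb (j := i - 1) (by omega) (by omega) hv'
    rw [hd]
    unfold Stmt4Aux.B; split_ifs <;> omega
  · intro v hv
    have e : k - 1 + 1 = k := by omega
    have hv' : v ∈ Stmt4Aux.V k m n (k - 1 + 1) := by rw [e]; exact hv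
    have hd := Stmt4Aux.deg_bwd hb (j := k - 1) (by omega) (by omega) hv'
    rw [hd]
    unfold Stmt4Aux.B; split_ifs <;> omega
  · intro i j hi hij hjk u hu v hv f g hf hg r hir hrj
    obtain ⟨hfi, hfj, hfadj, hfV⟩ := hf
    obtain ⟨hgi, hgj, hgadj, hgV⟩ := hg
    have hdigs : ∀ F : ℕ → ℕ, F i = u → F j = v →
        (∀ r, i ≤ r → r < j → (Stmt4Aux.G k m n).Adj (F r) (F (r + 1))) →
        (∀ r, i ≤ r → r ≤ j → F r ∈ Stmt4Aux.V k m n r) →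
        ∀ p < k - 1, Stmt4Aux.dig (m + n) (F r / k) p
          = (if p + 1 < r then Stmt4Aux.dig (m + n) (v / k) p
              else Stmt4Aux.dig (m + n) (u / k) p) := by
      intro F hFi hFj hFadj hFV p hp
      split
      case isTrue h =>
        have := Stmt4Aux.path_digits F hi hjk hFadj hFV r j hir hrj le_rfl p hp (Or.inl h)
        rw [hFj] at this
        exact this.symm
      case isFalse h =>
        have := Stmt4Aux.path_digits F hi hjk hFadj hFV i r le_rfl hir hrj p hp
          (Or.inr (by omega))
        rw [hFi] at this
        exact this
    have hfr := hdigs f hfi hfj hfadj hfV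
    have hgr := hdigs g hgi hgj hgadj hgV
    exact Stmt4Aux.eq_of_V_digits hb (hfV r hir hrj) (hgV r hir hrj)
      (fun p hp => by rw [hfr p hp, hgr p hp])
end

section
/- Let 𝓕 be a family of k-element subsets of {1,...,n} and let m ≥ 2 be an integer. Then there exists a subfamily 𝓕' ⊆ 𝓕 with |𝓕'| ≥ (25·2^k·k·m)^{-k} · |𝓕| such that for every F ∈ 𝓕' there exists an intersection-closed family 𝓘_F with I(F,𝓕') ⊆ 𝓘_F ⊆ 2^F \ {F}, where every element of 𝓘_F is the kernel of a sunflower with m petals in 𝓕. In particular, for every two distinct F_1, F_2 ∈ 𝓕', the set F_1 ∩ F_2 is the kernel of a sunflower in 𝓕 with m petals. -/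
open Finset

/-- `A` is the kernel of a sunflower with `m` petals in `𝓕`. -/
def IsSunflowerKernel {α : Type*} [DecidableEq α] (𝓕 : Finset (Finset α)) (m : ℕ)
    (A : Finset α) : Prop :=
  ∃ S ⊆ 𝓕, S.card = m ∧ ∀ F₁ ∈ S, ∀ F₂ ∈ S, F₁ ≠ F₂ → F₁ ∩ F₂ = A

lemma aux_sum_pow (p q : ℝ) (hpq : p + q = 1) (s : Finset ℕ) :
    ∑ R ∈ s.powerset, p ^ R.card * q ^ (s.card - R.card) = 1 := by
  classical
  induction s using Finset.induction with
  | empty => simp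
  | insert _ _ ha ih =>
    rename_i a s
    rw [Finset.sum_powerset_insert ha]
    have h1 : ∑ t ∈ s.powerset, p ^ t.card * q ^ ((insert a s).card - t.card)
        = q * ∑ t ∈ s.powerset, p ^ t.card * q ^ (s.card - t.card) := by
      rw [Finset.mul_sum]
      refine Finset.sum_congr rfl fun t ht => ?_
      have htc : t.card ≤ s.card := Finset.card_le_card (Finset.mem_powerset.1 ht)
      rw [Finset.card_insert_of_notMem ha]
      have : s.card + 1 - t.card = (s.card - t.card) + 1 := by omega
      rw [this, pow_succ]
      ring
    have h2 : ∑ t ∈ s.powerset, p ^ (insert a t).card * q ^ ((insert a s).card - (insert a t).card)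
        = p * ∑ t ∈ s.powerset, p ^ t.card * q ^ (s.card - t.card) := by
      rw [Finset.mul_sum]
      refine Finset.sum_congr rfl fun t ht => ?_
      have hts : t ⊆ s := Finset.mem_powerset.1 ht
      have hat : a ∉ t := fun h => ha (hts h)
      have htc : t.card ≤ s.card := Finset.card_le_card hts
      rw [Finset.card_insert_of_notMem ha, Finset.card_insert_of_notMem hat]
      have : s.card + 1 - (t.card + 1) = s.card - t.card := by omega
      rw [this, pow_succ]
      ring
    rw [h1, h2, ih]
    linarith

lemma aux_sum_ge (p q : ℝ) (hp : 0 ≤ p) (hq : 0 ≤ q) (hpq : p + q = 1)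
    (E X Y : Finset ℕ) (hX : X ⊆ E) (hY : Y ⊆ E) (hXY : Disjoint X Y) :
    p ^ X.card * q ^ Y.card ≤
      ∑ R ∈ E.powerset.filter (fun R => X ⊆ R ∧ Y ∩ R = ∅),
        p ^ R.card * q ^ (E.card - R.card) := by
  classical
  set E' := E \ (X ∪ Y) with hE'
  have hEcard : E.card = E'.card + X.card + Y.card := by
    have hsub : X ∪ Y ⊆ E := Finset.union_subset hX hY
    have h1 : E'.card = E.card - (X ∪ Y).card := Finset.card_sdiff_of_subset hsub
    have h2 : (X ∪ Y).card = X.card + Y.card := Finset.card_union_of_disjoint hXY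
    have h3 : (X ∪ Y).card ≤ E.card := Finset.card_le_card hsub
    omega
  have himg : (E'.powerset).image (fun R' => R' ∪ X) ⊆
      E.powerset.filter (fun R => X ⊆ R ∧ Y ∩ R = ∅) := by
    intro R hR
    obtain ⟨R', hR', rfl⟩ := Finset.mem_image.1 hR
    have hR'E : R' ⊆ E' := Finset.mem_powerset.1 hR'
    refine Finset.mem_filter.2 ⟨Finset.mem_powerset.2 ?_, Finset.subset_union_right, ?_⟩
    · exact Finset.union_subset (hR'E.trans (Finset.sdiff_subset)) hX
    · apply Finset.eq_empty_of_forall_notMem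
      intro x hx
      rw [Finset.mem_inter, Finset.mem_union] at hx
      obtain ⟨hxY, hxR' | hxX⟩ := hx
      · have := hR'E hxR'
        rw [hE', Finset.mem_sdiff, Finset.mem_union] at this
        exact this.2 (Or.inr hxY)
      · exact (Finset.disjoint_left.1 hXY) hxX hxY
  have hinj : Set.InjOn (fun R' => R' ∪ X) (E'.powerset : Set (Finset ℕ)) := by
    intro a ha b hb hab
    have hdA : Disjoint a X := by
      have : a ⊆ E' := Finset.mem_powerset.1 (by simpa using ha)
      exact Finset.disjoint_left.2 fun x hx =>
        fun hxX => (by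
          have := this hx
          rw [hE', Finset.mem_sdiff, Finset.mem_union] at this
          exact this.2 (Or.inl hxX))
    have hdB : Disjoint b X := by
      have : b ⊆ E' := Finset.mem_powerset.1 (by simpa using hb)
      exact Finset.disjoint_left.2 fun x hx =>
        fun hxX => (by
          have := this hx
          rw [hE', Finset.mem_sdiff, Finset.mem_union] at this
          exact this.2 (Or.inl hxX))
    simp only at hab
    have : (a ∪ X) \ X = (b ∪ X) \ X := by rw [hab]
    rwa [Finset.union_sdiff_right, Finset.union_sdiff_right,
      Finset.sdiff_eq_self_of_disjoint hdA, Finset.sdiff_eq_self_of_disjoint hdB] at this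
  have hsum_img : ∑ R ∈ (E'.powerset).image (fun R' => R' ∪ X),
      p ^ R.card * q ^ (E.card - R.card) = p ^ X.card * q ^ Y.card := by
    rw [Finset.sum_image (fun a ha b hb => hinj (by simpa using ha) (by simpa using hb))]
    have : ∀ R' ∈ E'.powerset,
        p ^ (R' ∪ X).card * q ^ (E.card - (R' ∪ X).card)
        = (p ^ X.card * q ^ Y.card) * (p ^ R'.card * q ^ (E'.card - R'.card)) := by
      intro R' hR'
      have hR'E : R' ⊆ E' := Finset.mem_powerset.1 hR'
      have hd : Disjoint R' X := by
        refine Finset.disjoint_left.2 fun x hx hxX => ?_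
        have := hR'E hx
        rw [hE', Finset.mem_sdiff, Finset.mem_union] at this
        exact this.2 (Or.inl hxX)
      have hcard : (R' ∪ X).card = R'.card + X.card := Finset.card_union_of_disjoint hd
      have hle : R'.card ≤ E'.card := Finset.card_le_card hR'E
      have hexp : E.card - (R' ∪ X).card = (E'.card - R'.card) + Y.card := by
        rw [hcard]; omega
      rw [hexp, hcard, pow_add, pow_add]
      ring
    rw [Finset.sum_congr rfl this, ← Finset.mul_sum, aux_sum_pow p q hpq E', mul_one]
  rw [← hsum_img]
  refine Finset.sum_le_sum_of_subset_of_nonneg himg fun R _ _ => ?_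
  positivity

theorem stmt_6 (n k m : ℕ) (hm : 2 ≤ m) (𝓕 : Finset (Finset ℕ))
    (h𝓕 : ∀ F ∈ 𝓕, F ⊆ Finset.Icc 1 n ∧ F.card = k) :
    ∃ 𝓕' ⊆ 𝓕,
      ((25 * 2 ^ k * k * m : ℝ))⁻¹ ^ k * (𝓕.card : ℝ) ≤ (𝓕'.card : ℝ) ∧
      (∀ F ∈ 𝓕', ∃ 𝓘 : Finset (Finset ℕ),
        (∀ I ∈ 𝓘, ∀ J ∈ 𝓘, I ∩ J ∈ 𝓘) ∧
        (∀ F' ∈ 𝓕', F' ≠ F → F ∩ F' ∈ 𝓘) ∧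
        (∀ I ∈ 𝓘, I ⊆ F ∧ I ≠ F) ∧
        (∀ I ∈ 𝓘, IsSunflowerKernel 𝓕 m I)) ∧
      (∀ F₁ ∈ 𝓕', ∀ F₂ ∈ 𝓕', F₁ ≠ F₂ → IsSunflowerKernel 𝓕 m (F₁ ∩ F₂)) := by
  classical
  by_cases hk0 : k = 0
  · subst hk0
    refine ⟨𝓕, subset_rfl, by simp, fun F hF => ⟨∅, by simp, ?_, by simp, by simp⟩, ?_⟩
    · intro F' hF' hne
      exact absurd (by
        have h1 : F = ∅ := Finset.card_eq_zero.1 (h𝓕 F hF).2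
        have h2 : F' = ∅ := Finset.card_eq_zero.1 (h𝓕 F' hF').2
        rw [h1, h2]) hne
    · intro F₁ h₁ F₂ h₂ hne
      exact absurd (by
        have h1 : F₁ = ∅ := Finset.card_eq_zero.1 (h𝓕 F₁ h₁).2
        have h2 : F₂ = ∅ := Finset.card_eq_zero.1 (h𝓕 F₂ h₂).2
        rw [h1, h2]) hne
  have hk : 1 ≤ k := Nat.one_le_iff_ne_zero.2 hk0
  set E := Finset.Icc 1 n with hEdef
  -- maximal partial sunflowers with core A
  have hPA : ∀ A : Finset ℕ, ∃ S, (S ⊆ 𝓕 ∧ (∀ F ∈ S, A ⊆ F) ∧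
      (∀ F₁ ∈ S, ∀ F₂ ∈ S, F₁ ≠ F₂ → F₁ ∩ F₂ = A)) ∧
      ∀ S', (S' ⊆ 𝓕 ∧ (∀ F ∈ S', A ⊆ F) ∧
        (∀ F₁ ∈ S', ∀ F₂ ∈ S', F₁ ≠ F₂ → F₁ ∩ F₂ = A)) → S'.card ≤ S.card := by
    intro A
    obtain ⟨S, hS, hmax⟩ := Finset.exists_max_image
      (𝓕.powerset.filter (fun S => (∀ F ∈ S, A ⊆ F) ∧
        (∀ F₁ ∈ S, ∀ F₂ ∈ S, F₁ ≠ F₂ → F₁ ∩ F₂ = A))) Finset.card ⟨∅, by simp⟩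
    simp only [Finset.mem_filter, Finset.mem_powerset] at hS
    refine ⟨S, ⟨hS.1, hS.2.1, hS.2.2⟩, fun S' hS' => ?_⟩
    refine hmax S' ?_
    simp only [Finset.mem_filter, Finset.mem_powerset]
    exact ⟨hS'.1, hS'.2.1, hS'.2.2⟩
  choose Sf hSf hSmax using hPA
  set u : Finset ℕ → Finset ℕ := fun A => ((Sf A).biUnion id) \ A with hudef
  have hScard : ∀ A : Finset ℕ, ¬ IsSunflowerKernel 𝓕 m A → (Sf A).card < m := by
    intro A hNK
    by_contra h
    push_neg at h
    obtain ⟨S', hS'sub, hS'card⟩ := Finset.exists_subset_card_eq h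
    exact hNK ⟨S', hS'sub.trans (hSf A).1, hS'card,
      fun F₁ h₁ F₂ h₂ hne => (hSf A).2.2 F₁ (hS'sub h₁) F₂ (hS'sub h₂) hne⟩
  have hucard : ∀ A : Finset ℕ, ¬ IsSunflowerKernel 𝓕 m A → (u A).card ≤ (m - 1) * k := by
    intro A hNK
    calc (u A).card ≤ ((Sf A).biUnion id).card := Finset.card_le_card Finset.sdiff_subset
    _ ≤ ∑ F ∈ Sf A, (id F).card := Finset.card_biUnion_le
    _ = ∑ F ∈ Sf A, k := by
        refine Finset.sum_congr rfl fun F hF => ?_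
        exact (h𝓕 F ((hSf A).1 hF)).2
    _ = (Sf A).card * k := by rw [Finset.sum_const, smul_eq_mul]
    _ ≤ (m - 1) * k := Nat.mul_le_mul_right k (by have := hScard A hNK; omega)
  have huE : ∀ A : Finset ℕ, u A ⊆ E := by
    intro A x hx
    rw [hudef] at hx
    simp only [Finset.mem_sdiff, Finset.mem_biUnion, id] at hx
    obtain ⟨⟨F, hF, hxF⟩, -⟩ := hx
    exact (h𝓕 F ((hSf A).1 hF)).1 hxF
  have huA : ∀ A : Finset ℕ, ∀ x ∈ u A, x ∉ A := by
    intro A x hx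
    exact (Finset.mem_sdiff.1 hx).2
  -- blocking property
  have hblock : ∀ A : Finset ℕ, ¬ IsSunflowerKernel 𝓕 m A →
      ∀ F' ∈ 𝓕, A ⊆ F' → A ≠ F' → (F' ∩ u A).Nonempty := by
    intro A hNK F' hF' hAF' hne
    rw [Finset.nonempty_iff_ne_empty]
    intro hempty
    have hxu : ∀ x ∈ F', x ∉ A → x ∈ (Sf A).biUnion id → False := by
      intro x hxF hxA hmem
      have h1 : x ∈ u A := Finset.mem_sdiff.2 ⟨hmem, hxA⟩
      have h2 : x ∈ F' ∩ u A := Finset.mem_inter.2 ⟨hxF, h1⟩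
      rw [hempty] at h2
      exact absurd h2 (Finset.notMem_empty x)
    by_cases hFS : F' ∈ Sf A
    · obtain ⟨x, hxF, hxA⟩ := Finset.exists_of_ssubset
        (Finset.ssubset_iff_subset_ne.2 ⟨hAF', hne⟩)
      exact hxu x hxF hxA (Finset.mem_biUnion.2 ⟨F', hFS, hxF⟩)
    · have hprop : insert F' (Sf A) ⊆ 𝓕 ∧ (∀ F ∈ insert F' (Sf A), A ⊆ F) ∧
          (∀ F₁ ∈ insert F' (Sf A), ∀ F₂ ∈ insert F' (Sf A), F₁ ≠ F₂ → F₁ ∩ F₂ = A) := by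
        refine ⟨Finset.insert_subset hF' (hSf A).1, ?_, ?_⟩
        · intro F hF
          rcases Finset.mem_insert.1 hF with rfl | hF
          · exact hAF'
          · exact (hSf A).2.1 F hF
        · have key : ∀ G ∈ Sf A, F' ∩ G = A := by
            intro G hG
            apply Finset.Subset.antisymm
            · intro x hx
              rcases Finset.mem_inter.1 hx with ⟨hx1, hx2⟩
              by_contra hxA
              exact hxu x hx1 hxA (Finset.mem_biUnion.2 ⟨G, hG, hx2⟩)
            · exact Finset.subset_inter hAF' ((hSf A).2.1 G hG)
          intro F₁ h₁ F₂ h₂ hne'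
          rcases Finset.mem_insert.1 h₁ with e₁ | hm₁
          · rcases Finset.mem_insert.1 h₂ with e₂ | hm₂
            · exact absurd (e₁.trans e₂.symm) hne'
            · rw [e₁]; exact key F₂ hm₂
          · rcases Finset.mem_insert.1 h₂ with e₂ | hm₂
            · rw [e₂, Finset.inter_comm]; exact key F₁ hm₁
            · exact (hSf A).2.2 F₁ hm₁ F₂ hm₂ hne'
      have := hSmax A _ hprop
      rw [Finset.card_insert_of_notMem hFS] at this
      omega
  set B : ℕ := 2 ^ k * m * k with hBdef
  set W : Finset ℕ → Finset ℕ := fun F => (F.powerset.erase F).biUnion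
    (fun A => if IsSunflowerKernel 𝓕 m A then ∅ else u A) with hWdef
  have hWE : ∀ F : Finset ℕ, W F ⊆ E := by
    intro F x hx
    rw [hWdef] at hx
    simp only [Finset.mem_biUnion] at hx
    obtain ⟨A, hA, hxA⟩ := hx
    by_cases hKA : IsSunflowerKernel 𝓕 m A
    · rw [if_pos hKA] at hxA; exact absurd hxA (Finset.notMem_empty x)
    · rw [if_neg hKA] at hxA; exact huE A hxA
  have hWcard : ∀ F ∈ 𝓕, (W F).card ≤ B := by
    intro F hF
    calc (W F).card
        ≤ ∑ A ∈ F.powerset.erase F,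
            (if IsSunflowerKernel 𝓕 m A then (∅ : Finset ℕ) else u A).card :=
          Finset.card_biUnion_le
    _ ≤ ∑ _A ∈ F.powerset.erase F, (m - 1) * k := by
        refine Finset.sum_le_sum fun A hA => ?_
        by_cases hKA : IsSunflowerKernel 𝓕 m A
        · simp [hKA]
        · rw [if_neg hKA]; exact hucard A hKA
    _ = (F.powerset.erase F).card * ((m - 1) * k) := by rw [Finset.sum_const, smul_eq_mul]
    _ ≤ 2 ^ k * ((m - 1) * k) := by
        refine Nat.mul_le_mul_right _ ?_
        calc (F.powerset.erase F).card ≤ F.powerset.card :=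
              Finset.card_le_card (Finset.erase_subset _ _)
        _ = 2 ^ F.card := Finset.card_powerset F
        _ = 2 ^ k := by rw [(h𝓕 F hF).2]
    _ ≤ B := by
        rw [hBdef]
        calc 2 ^ k * ((m - 1) * k) ≤ 2 ^ k * (m * k) :=
              Nat.mul_le_mul_left _ (Nat.mul_le_mul_right _ (by omega))
        _ = 2 ^ k * m * k := by ring
  set G : Finset ℕ → Finset (Finset ℕ) := fun R => 𝓕.filter
    (fun F => W F ∩ F ⊆ R ∧ (W F \ F) ∩ R = ∅) with hGdef
  have hGsub : ∀ R, G R ⊆ 𝓕 := fun R => Finset.filter_subset _ _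
  -- the key lemma: intersections realized in G R are kernels
  have hkey : ∀ R : Finset ℕ, ∀ T : Finset (Finset ℕ), T ⊆ G R →
      ∀ A : Finset ℕ, (∀ G' ∈ T, A ⊆ G') → (∀ x : ℕ, (∀ G' ∈ T, x ∈ G') → x ∈ A) →
      (∃ F₁ ∈ T, ∃ F₂ ∈ T, F₁ ≠ F₂) → IsSunflowerKernel 𝓕 m A := by
    intro R T hT A hAsub hAmem hpair
    obtain ⟨F₁, hF₁, F₂, hF₂, hne⟩ := hpair
    by_contra hNK
    have hTF : ∀ G' ∈ T, G' ∈ 𝓕 := fun G' h => hGsub R (hT h)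
    have hTcond : ∀ G' ∈ T, W G' ∩ G' ⊆ R ∧ (W G' \ G') ∩ R = ∅ := by
      intro G' h
      have := hT h
      rw [hGdef] at this
      exact (Finset.mem_filter.1 this).2
    have hproper : ∀ G' ∈ T, A ≠ G' := by
      intro G' hG' hEq
      have e1 : G' = F₁ := Finset.eq_of_subset_of_card_le (hEq ▸ hAsub F₁ hF₁)
        (by rw [(h𝓕 F₁ (hTF F₁ hF₁)).2, (h𝓕 G' (hTF G' hG')).2])
      have e2 : G' = F₂ := Finset.eq_of_subset_of_card_le (hEq ▸ hAsub F₂ hF₂)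
        (by rw [(h𝓕 F₂ (hTF F₂ hF₂)).2, (h𝓕 G' (hTF G' hG')).2])
      exact hne (e1 ▸ e2 ▸ rfl)
    obtain ⟨x, hx⟩ := hblock A hNK F₁ (hTF F₁ hF₁) (hAsub F₁ hF₁) (hproper F₁ hF₁)
    rw [Finset.mem_inter] at hx
    obtain ⟨hxF₁, hxu⟩ := hx
    have huW : ∀ G' ∈ T, u A ⊆ W G' := by
      intro G' hG'
      have hApow : A ∈ G'.powerset.erase G' :=
        Finset.mem_erase.2 ⟨hproper G' hG', Finset.mem_powerset.2 (hAsub G' hG')⟩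
      have hsub := Finset.subset_biUnion_of_mem
        (fun A => if IsSunflowerKernel 𝓕 m A then (∅ : Finset ℕ) else u A) hApow
      simp only [if_neg hNK] at hsub
      rw [hWdef]
      exact hsub
    have hxR : x ∈ R := (hTcond F₁ hF₁).1 (Finset.mem_inter.2 ⟨huW F₁ hF₁ hxu, hxF₁⟩)
    have hxT : ∀ G' ∈ T, x ∈ G' := by
      intro G' hG'
      by_contra hxG'
      have h2 := (hTcond G' hG').2
      have hmem : x ∈ (W G' \ G') ∩ R :=
        Finset.mem_inter.2 ⟨Finset.mem_sdiff.2 ⟨huW G' hG' hxu, hxG'⟩, hxR⟩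
      rw [h2] at hmem
      exact absurd hmem (Finset.notMem_empty x)
    exact huA A x hxu (hAmem x hxT)
  -- probabilistic counting
  have hBpos : 0 < B := by
    rw [hBdef]
    exact Nat.mul_pos (Nat.mul_pos (pow_pos (by norm_num) k) (by omega)) hk
  have hB1 : (1 : ℝ) ≤ (B : ℝ) := by exact_mod_cast hBpos
  set p : ℝ := (2 * (B : ℝ))⁻¹ with hpdef
  set q : ℝ := 1 - p with hqdef
  have hp0 : 0 < p := by rw [hpdef]; positivity
  have hphalf : p ≤ 1 / 2 := by
    rw [hpdef]
    have h2 : (2:ℝ) ≤ 2 * (B:ℝ) := by linarith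
    calc (2 * (B:ℝ))⁻¹ ≤ (2:ℝ)⁻¹ := by
          apply inv_anti₀ (by norm_num) h2
    _ = 1/2 := by norm_num
  have hp1 : p ≤ 1 := le_trans hphalf (by norm_num)
  have hq0 : 0 ≤ q := by rw [hqdef]; linarith
  have hq1 : q ≤ 1 := by rw [hqdef]; linarith
  have hpq : p + q = 1 := by rw [hqdef]; ring
  have hpB : (B : ℝ) * p = 1 / 2 := by
    rw [hpdef]
    field_simp
  have hqB : (1 : ℝ) / 2 ≤ q ^ B := by
    have h := one_add_mul_le_pow (a := -p) (by linarith) B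
    have : (1 : ℝ) + B * (-p) = 1 / 2 := by
      rw [mul_neg]
      rw [hpB]
      ring
    rw [this] at h
    calc (1:ℝ)/2 ≤ (1 + -p) ^ B := h
    _ = q ^ B := by rw [hqdef]; ring_nf
  -- per-F lower bound
  have hperF : ∀ F ∈ 𝓕, p ^ k * (1 / 2) ≤
      ∑ R ∈ E.powerset.filter (fun R => W F ∩ F ⊆ R ∧ (W F \ F) ∩ R = ∅),
        p ^ R.card * q ^ (E.card - R.card) := by
    intro F hF
    have hXE : W F ∩ F ⊆ E := Finset.inter_subset_right.trans (h𝓕 F hF).1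
    have hYE : W F \ F ⊆ E := Finset.sdiff_subset.trans (hWE F)
    have hdisj : Disjoint (W F ∩ F) (W F \ F) := by
      rw [Finset.disjoint_left]
      intro a ha hb
      exact (Finset.mem_sdiff.1 hb).2 (Finset.mem_inter.1 ha).2
    refine le_trans ?_ (aux_sum_ge p q hp0.le hq0 hpq E _ _ hXE hYE hdisj)
    have h1 : p ^ k ≤ p ^ (W F ∩ F).card := by
      refine pow_le_pow_of_le_one hp0.le hp1 ?_
      calc (W F ∩ F).card ≤ F.card := Finset.card_le_card Finset.inter_subset_right
      _ = k := (h𝓕 F hF).2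
    have h2 : (1 : ℝ) / 2 ≤ q ^ (W F \ F).card := by
      refine le_trans hqB (pow_le_pow_of_le_one hq0 hq1 ?_)
      calc (W F \ F).card ≤ (W F).card := Finset.card_le_card Finset.sdiff_subset
      _ ≤ B := hWcard F hF
    exact mul_le_mul h1 h2 (by norm_num) (by positivity)
  -- swap sums
  have hswap : ∑ F ∈ 𝓕,
      (∑ R ∈ E.powerset.filter (fun R => W F ∩ F ⊆ R ∧ (W F \ F) ∩ R = ∅),
        p ^ R.card * q ^ (E.card - R.card))
      = ∑ R ∈ E.powerset, (p ^ R.card * q ^ (E.card - R.card)) * ((G R).card : ℝ) := by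
    have step1 : ∀ F ∈ 𝓕,
        (∑ R ∈ E.powerset.filter (fun R => W F ∩ F ⊆ R ∧ (W F \ F) ∩ R = ∅),
          p ^ R.card * q ^ (E.card - R.card))
        = ∑ R ∈ E.powerset, (if W F ∩ F ⊆ R ∧ (W F \ F) ∩ R = ∅ then
            p ^ R.card * q ^ (E.card - R.card) else 0) := by
      intro F hF
      rw [Finset.sum_filter]
    rw [Finset.sum_congr rfl step1, Finset.sum_comm]
    refine Finset.sum_congr rfl fun R hR => ?_
    have : ∑ F ∈ 𝓕, (if W F ∩ F ⊆ R ∧ (W F \ F) ∩ R = ∅ then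
        p ^ R.card * q ^ (E.card - R.card) else 0)
        = ∑ F ∈ G R, (p ^ R.card * q ^ (E.card - R.card)) := by
      rw [hGdef]
      rw [Finset.sum_filter]
    rw [this, Finset.sum_const, nsmul_eq_mul, mul_comm]
  -- choose the best R
  obtain ⟨R₀, hR₀mem, hR₀max⟩ := Finset.exists_max_image E.powerset
    (fun R => (G R).card) ⟨∅, by simp⟩
  have htotal : (𝓕.card : ℝ) * (p ^ k * (1 / 2)) ≤ ((G R₀).card : ℝ) := by
    calc (𝓕.card : ℝ) * (p ^ k * (1 / 2)) = ∑ _F ∈ 𝓕, p ^ k * (1 / 2) := by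
          rw [Finset.sum_const, nsmul_eq_mul]
    _ ≤ ∑ F ∈ 𝓕,
        (∑ R ∈ E.powerset.filter (fun R => W F ∩ F ⊆ R ∧ (W F \ F) ∩ R = ∅),
          p ^ R.card * q ^ (E.card - R.card)) := Finset.sum_le_sum hperF
    _ = ∑ R ∈ E.powerset, (p ^ R.card * q ^ (E.card - R.card)) * ((G R).card : ℝ) := hswap
    _ ≤ ∑ R ∈ E.powerset, (p ^ R.card * q ^ (E.card - R.card)) * ((G R₀).card : ℝ) := by
        refine Finset.sum_le_sum fun R hR => ?_
        refine mul_le_mul_of_nonneg_left ?_ (by positivity)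
        exact_mod_cast hR₀max R hR
    _ = (∑ R ∈ E.powerset, p ^ R.card * q ^ (E.card - R.card)) * ((G R₀).card : ℝ) := by
        rw [← Finset.sum_mul]
    _ = ((G R₀).card : ℝ) := by rw [aux_sum_pow p q hpq E, one_mul]
  -- final numeric bound
  have hnum : ((25 * 2 ^ k * k * m : ℝ))⁻¹ ^ k ≤ p ^ k * (1 / 2) := by
    have hbpos : (0:ℝ) < 2 * (B:ℝ) := by linarith
    have hab : (25 * 2 ^ k * k * m : ℝ) = (25/2) * (2 * (B:ℝ)) := by
      rw [hBdef]; push_cast; ring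
    have h1 : (2:ℝ) ≤ (25/2) ^ k := le_trans (by norm_num) (le_self_pow₀ (by norm_num) hk0)
    have h2 : (0:ℝ) < (2*(B:ℝ))^k := by positivity
    have hclaim : 2 * (2*(B:ℝ)) ^ k ≤ (25 * 2 ^ k * k * m : ℝ) ^ k := by
      rw [hab]
      calc 2 * (2*(B:ℝ))^k ≤ (25/2)^k * (2*(B:ℝ))^k := by nlinarith [h1, h2]
      _ = (25/2 * (2*(B:ℝ)))^k := (mul_pow _ _ k).symm
    calc ((25 * 2 ^ k * k * m : ℝ))⁻¹ ^ k = ((25 * 2 ^ k * k * m : ℝ) ^ k)⁻¹ := by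
          rw [inv_pow]
    _ ≤ (2 * (2*(B:ℝ))^k)⁻¹ := by
          apply inv_anti₀ (by positivity) hclaim
    _ = p ^ k * (1/2) := by
          rw [hpdef, inv_pow, mul_inv]; ring
  have hbound : ((25 * 2 ^ k * k * m : ℝ))⁻¹ ^ k * (𝓕.card : ℝ) ≤ ((G R₀).card : ℝ) := by
    calc ((25 * 2 ^ k * k * m : ℝ))⁻¹ ^ k * (𝓕.card : ℝ)
        ≤ (p ^ k * (1 / 2)) * (𝓕.card : ℝ) :=
          mul_le_mul_of_nonneg_right hnum (Nat.cast_nonneg _)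
    _ = (𝓕.card : ℝ) * (p ^ k * (1 / 2)) := mul_comm _ _
    _ ≤ ((G R₀).card : ℝ) := htotal
  obtain ⟨𝓕₀, h𝓕₀sub, hkey₀, hbound₀⟩ :
      ∃ 𝓕₀ : Finset (Finset ℕ), 𝓕₀ ⊆ 𝓕 ∧
        (∀ T : Finset (Finset ℕ), T ⊆ 𝓕₀ →
          ∀ A : Finset ℕ, (∀ G' ∈ T, A ⊆ G') →
            (∀ x : ℕ, (∀ G' ∈ T, x ∈ G') → x ∈ A) →
            (∃ F₁ ∈ T, ∃ F₂ ∈ T, F₁ ≠ F₂) → IsSunflowerKernel 𝓕 m A) ∧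
        ((25 * 2 ^ k * k * m : ℝ))⁻¹ ^ k * (𝓕.card : ℝ) ≤ (𝓕₀.card : ℝ) :=
    ⟨G R₀, hGsub R₀, hkey R₀, hbound⟩
  clear hkey hbound htotal hnum hswap hperF hR₀max hR₀mem hqB hpB hpq hq1 hq0 hp1 hphalf hp0
  clear hWcard hWE hblock huA huE hucard hScard hSmax hSf hGsub
  clear_value u W G
  clear hudef hWdef hGdef u W G Sf hB1 hBpos hpdef hqdef p q B hBdef
  refine ⟨𝓕₀, h𝓕₀sub, hbound₀, ?_, ?_⟩
  · -- structure of each member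
    intro F hF
    refine ⟨((𝓕₀.erase F).powerset.filter (fun T => T.Nonempty)).image
      (fun T => F.filter (fun x => ∀ G' ∈ T, x ∈ G')), ?_, ?_, ?_, ?_⟩
    · intro I hI J hJ
      obtain ⟨T₁, hT₁, rfl⟩ := Finset.mem_image.1 hI
      obtain ⟨T₂, hT₂, rfl⟩ := Finset.mem_image.1 hJ
      rw [Finset.mem_filter, Finset.mem_powerset] at hT₁ hT₂
      refine Finset.mem_image.2 ⟨T₁ ∪ T₂, ?_, ?_⟩
      · rw [Finset.mem_filter, Finset.mem_powerset]
        exact ⟨Finset.union_subset hT₁.1 hT₂.1, hT₁.2.mono Finset.subset_union_left⟩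
      · ext x
        constructor
        · intro hx
          rw [Finset.mem_filter] at hx
          rw [Finset.mem_inter, Finset.mem_filter, Finset.mem_filter]
          exact ⟨⟨hx.1, fun G' hG' => hx.2 G' (Finset.mem_union_left _ hG')⟩,
            ⟨hx.1, fun G' hG' => hx.2 G' (Finset.mem_union_right _ hG')⟩⟩
        · intro hx
          obtain ⟨h1, h2⟩ := Finset.mem_inter.1 hx
          rw [Finset.mem_filter] at h1 h2 ⊢
          exact ⟨h1.1, fun G' hG' => (Finset.mem_union.1 hG').elim (h1.2 G') (h2.2 G')⟩
    · intro F' hF' hne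
      refine Finset.mem_image.2 ⟨{F'}, ?_, ?_⟩
      · rw [Finset.mem_filter, Finset.mem_powerset]
        exact ⟨Finset.singleton_subset_iff.2 (Finset.mem_erase.2 ⟨hne, hF'⟩),
          Finset.singleton_nonempty _⟩
      · ext x
        rw [Finset.mem_filter, Finset.mem_inter]
        constructor
        · intro hx
          exact ⟨hx.1, hx.2 F' (Finset.mem_singleton_self _)⟩
        · intro hx
          exact ⟨hx.1, fun G' hG' => by rw [Finset.mem_singleton.1 hG']; exact hx.2⟩
    · intro I hI
      obtain ⟨T, hT, rfl⟩ := Finset.mem_image.1 hI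
      rw [Finset.mem_filter, Finset.mem_powerset] at hT
      obtain ⟨G₀, hG₀⟩ := hT.2
      have hG₀e := hT.1 hG₀
      refine ⟨Finset.filter_subset _ _, ?_⟩
      intro hEq
      have hFG : F ⊆ G₀ := by
        intro x hxF
        have hx : x ∈ F.filter (fun x => ∀ G' ∈ T, x ∈ G') := by rw [hEq]; exact hxF
        exact (Finset.mem_filter.1 hx).2 G₀ hG₀
      have hcards : G₀.card ≤ F.card := by
        rw [(h𝓕 F (h𝓕₀sub hF)).2,
          (h𝓕 G₀ (h𝓕₀sub (Finset.mem_of_mem_erase hG₀e))).2]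
      have hFeq : F = G₀ := Finset.eq_of_subset_of_card_le hFG hcards
      exact (Finset.mem_erase.1 hG₀e).1 hFeq.symm
    · intro I hI
      obtain ⟨T, hT, rfl⟩ := Finset.mem_image.1 hI
      rw [Finset.mem_filter, Finset.mem_powerset] at hT
      obtain ⟨G₀, hG₀⟩ := hT.2
      refine hkey₀ (insert F T) ?_ _ ?_ ?_
        ⟨F, Finset.mem_insert_self _ _, G₀, Finset.mem_insert_of_mem hG₀, ?_⟩
      · exact Finset.insert_subset hF ((hT.1).trans (Finset.erase_subset _ _))
      · intro G' hG'
        rcases Finset.mem_insert.1 hG' with rfl | hG'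
        · exact Finset.filter_subset _ _
        · intro x hx
          exact (Finset.mem_filter.1 hx).2 G' hG'
      · intro x hx
        exact Finset.mem_filter.2 ⟨hx F (Finset.mem_insert_self _ _),
          fun G' hG' => hx G' (Finset.mem_insert_of_mem hG')⟩
      · exact fun h => (Finset.mem_erase.1 (hT.1 hG₀)).1 h.symm
  · intro F₁ h₁ F₂ h₂ hne
    refine hkey₀ {F₁, F₂} ?_ (F₁ ∩ F₂) ?_ ?_
      ⟨F₁, by simp, F₂, by simp, hne⟩
    · intro G' hG'
      rcases Finset.mem_insert.1 hG' with rfl | hG'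
      · exact h₁
      · rw [Finset.mem_singleton] at hG'
        subst hG'
        exact h₂
    · intro G' hG'
      rcases Finset.mem_insert.1 hG' with rfl | hG'
      · exact Finset.inter_subset_left
      · rw [Finset.mem_singleton] at hG'
        subst hG'
        exact Finset.inter_subset_right
    · intro x hx
      exact Finset.mem_inter.2 ⟨hx F₁ (by simp), hx F₂ (by simp)⟩
end

section
/- Let k, d, m be positive integers with k ≥ d. Let 𝓕 be a family of subsets of a finite set X, each of size at most k and each of size divisible by d, such that 𝓕 does not contain m members with pairwise intersection sizes all nonzero modulo d. Let w : 𝓕 → ℝ_{≥0} be a weighting, and define w'(F) = (1/(d·C(k,d-1)·m))^{|F|/d} · w(F) for each F ∈ 𝓕, where C(k,d-1) is the binomial coefficient. Then there exist a non-negative integer s and pairwise disjoint subsets X_1, ..., X_s of X each of size d such that the subfamily 𝓕' = {F ∈ 𝓕 : F is a union of some of the sets X_i} satisfies Σ_{F ∈ 𝓕'} w(F) ≥ Σ_{F ∈ 𝓕} w'(F). -/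
open Finset

private lemma div_sub_one' {d c : ℕ} (hd : 0 < d) (hdvd : d ∣ c) :
    (c - d) / d = c / d - 1 := by
  obtain ⟨q, rfl⟩ := hdvd
  cases q with
  | zero => simp
  | succ q =>
      have h1 : d * (q + 1) - d = d * q := by rw [Nat.mul_succ]; omega
      rw [h1, Nat.mul_div_cancel_left _ hd, Nat.mul_div_cancel_left _ hd]
      omega

private lemma inv_mul_pow' {r : ℝ} (hr : r ≠ 0) {q : ℕ} (hq : 1 ≤ q) :
    r⁻¹ * r ^ q = r ^ (q - 1) := by
  have h : q = (q - 1) + 1 := by omega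
  conv_lhs => rw [h]
  rw [pow_succ, ← mul_assoc, mul_comm (r⁻¹), mul_assoc, inv_mul_cancel₀ hr, mul_one]

private lemma dc_aux {α β : Type*} [DecidableEq α] (𝒟 : Finset β) (𝓕 : Finset (Finset α))
    (t : Finset α → ℝ) (ht : ∀ F ∈ 𝓕, 0 ≤ t F)
    (p : β → Finset α → Prop) [∀ b F, Decidable (p b F)]
    (q : Finset α → Prop) [DecidablePred q]
    (hcov : ∀ F ∈ 𝓕, q F → ∃ b ∈ 𝒟, p b F) :
    ∑ F ∈ 𝓕.filter q, t F ≤ ∑ b ∈ 𝒟, ∑ F ∈ 𝓕.filter (fun F => p b F), t F := by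
  have h1 : ∀ b, ∑ F ∈ 𝓕.filter (fun F => p b F), t F
      = ∑ F ∈ 𝓕, if p b F then t F else 0 := fun b => Finset.sum_filter _ _
  simp only [h1]
  rw [Finset.sum_comm, Finset.sum_filter]
  refine Finset.sum_le_sum ?_
  intro F hF
  by_cases hq : q F
  · rw [if_pos hq]
    obtain ⟨b, hb, hp⟩ := hcov F hF hq
    calc t F = if p b F then t F else 0 := by rw [if_pos hp]
      _ ≤ ∑ b ∈ 𝒟, if p b F then t F else 0 :=
          Finset.single_le_sum (f := fun b => if p b F then t F else 0)
            (fun b _ => by split <;> [exact ht F hF; exact le_rfl]) hb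
  · rw [if_neg hq]
    exact Finset.sum_nonneg fun b _ => by split <;> [exact ht F hF; exact le_rfl]

private lemma triv_branch {α : Type*} [DecidableEq α] (d : ℕ) (c : ℝ) (X : Finset α)
    (𝓕 : Finset (Finset α)) (w : Finset α → ℝ)
    (h0 : ∑ F ∈ 𝓕.filter (fun F => ¬ F = ∅), (c ^ (F.card / d) * w F) ≤ 0) :
    ∃ (s : ℕ) (Xs : ℕ → Finset α) (𝓕' : Finset (Finset α)),
      (∀ i < s, Xs i ⊆ X ∧ (Xs i).card = d) ∧
      (∀ i < s, ∀ j < s, i ≠ j → Disjoint (Xs i) (Xs j)) ∧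
      (∀ F, F ∈ 𝓕' ↔ F ∈ 𝓕 ∧ ∃ I ⊆ Finset.range s, F = I.biUnion Xs) ∧
      (∑ F ∈ 𝓕, (c ^ (F.card / d) * w F)) ≤ ∑ F ∈ 𝓕', w F := by
  classical
  refine ⟨0, fun _ => ∅, 𝓕.filter (fun F => F = ∅), ?_, ?_, ?_, ?_⟩
  · intro i hi; omega
  · intro i hi; omega
  · intro F
    simp only [Finset.mem_filter, Finset.range_zero]
    constructor
    · rintro ⟨h1, h2⟩
      exact ⟨h1, ∅, by simp, by simp [h2]⟩
    · rintro ⟨h1, I, hI, hF⟩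
      have hIe : I = ∅ := Finset.subset_empty.mp hI
      subst hIe
      simp only [Finset.biUnion_empty] at hF
      exact ⟨h1, hF⟩
  · rw [← Finset.sum_filter_add_sum_filter_not 𝓕 (fun F => F = ∅)]
    have h1 : ∑ F ∈ 𝓕.filter (fun F => F = ∅), (c ^ (F.card / d) * w F)
        = ∑ F ∈ 𝓕.filter (fun F => F = ∅), w F := by
      refine Finset.sum_congr rfl ?_
      intro F hF
      have hFe : F = ∅ := (Finset.mem_filter.mp hF).2
      subst hFe
      simp
    linarith

private lemma aux_main {α : Type*} [DecidableEq α] (k d m : ℕ) (hd : 1 ≤ d) (hm : 1 ≤ m)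
    (hdk : d ≤ k) :
    ∀ (n : ℕ) (X : Finset α) (𝓕 : Finset (Finset α)) (w : Finset α → ℝ),
      X.card ≤ n →
      (∀ F ∈ 𝓕, F ⊆ X) →
      (∀ F ∈ 𝓕, F.card ≤ k ∧ d ∣ F.card) →
      (¬ ∃ S ⊆ 𝓕, S.card = m ∧ ∀ F₁ ∈ S, ∀ F₂ ∈ S, F₁ ≠ F₂ → ¬ d ∣ (F₁ ∩ F₂).card) →
      (∀ F ∈ 𝓕, 0 ≤ w F) →
      ∃ (s : ℕ) (Xs : ℕ → Finset α) (𝓕' : Finset (Finset α)),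
        (∀ i < s, Xs i ⊆ X ∧ (Xs i).card = d) ∧
        (∀ i < s, ∀ j < s, i ≠ j → Disjoint (Xs i) (Xs j)) ∧
        (∀ F, F ∈ 𝓕' ↔ F ∈ 𝓕 ∧ ∃ I ⊆ Finset.range s, F = I.biUnion Xs) ∧
        (∑ F ∈ 𝓕, (((d : ℝ) * (Nat.choose k (d - 1) : ℝ) * (m : ℝ))⁻¹ ^ (F.card / d) * w F))
          ≤ ∑ F ∈ 𝓕', w F := by
  intro n
  induction n with
  | zero =>
      intro X 𝓕 w hXn hsub hsize hclique hw
      classical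
      have hX : X = ∅ := Finset.card_eq_zero.mp (Nat.le_zero.mp hXn)
      have hfe : 𝓕.filter (fun F => ¬ F = ∅) = ∅ := by
        rw [Finset.filter_eq_empty_iff]
        intro F hF
        simp only [not_not]
        exact Finset.subset_empty.mp (hX ▸ hsub F hF)
      exact triv_branch d _ X 𝓕 w (by rw [hfe]; simp)
  | succ n ih =>
      intro X 𝓕 w hXn hsub hsize hclique hw
      classical
      set c : ℝ := ((d : ℝ) * (Nat.choose k (d - 1) : ℝ) * (m : ℝ))⁻¹ with hc_def
      by_cases h0 : ∑ F ∈ 𝓕.filter (fun F => ¬ F = ∅), (c ^ (F.card / d) * w F) ≤ 0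
      · exact triv_branch d c X 𝓕 w h0
      push_neg at h0
      have hchoose : 0 < Nat.choose k (d - 1) := Nat.choose_pos (by omega)
      have hd1 : (0 : ℝ) < (d : ℝ) := by exact_mod_cast hd
      have hd2 : (0 : ℝ) < (Nat.choose k (d - 1) : ℝ) := by exact_mod_cast hchoose
      have hd3 : (0 : ℝ) < (m : ℝ) := by exact_mod_cast hm
      have hcpos : 0 < c := by
        rw [hc_def]
        exact inv_pos.mpr (mul_pos (mul_pos hd1 hd2) hd3)
      have htnn : ∀ F ∈ 𝓕, 0 ≤ c ^ (F.card / d) * w F :=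
        fun F hF => mul_nonneg (pow_nonneg hcpos.le _) (hw F hF)
      -- find a positive-weight nonempty member
      have h0' : ∃ F ∈ 𝓕.filter (fun F => ¬ F = ∅), 0 < c ^ (F.card / d) * w F := by
        by_contra hcon
        push_neg at hcon
        have := Finset.sum_nonpos hcon
        linarith
      obtain ⟨F₀, hF₀mem, hF₀pos⟩ := h0'
      obtain ⟨hF₀𝓕, hF₀ne⟩ := Finset.mem_filter.mp hF₀mem
      obtain ⟨y₀, hy₀⟩ := Finset.nonempty_iff_ne_empty.mpr hF₀ne
      have hy₀X : y₀ ∈ X := hsub F₀ hF₀𝓕 hy₀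
      have hXne : X.Nonempty := ⟨y₀, hy₀X⟩
      -- the element x of maximum weighted degree
      set μ : α → ℝ := fun y => ∑ F ∈ 𝓕.filter (fun F => y ∈ F), (c ^ (F.card / d) * w F)
        with hμ
      obtain ⟨x, hxX, hxmax⟩ := Finset.exists_max_image X μ hXne
      have hμx : 0 < μ x := by
        have h1 : c ^ (F₀.card / d) * w F₀ ≤ μ y₀ :=
          Finset.single_le_sum (fun F hF => htnn F (Finset.mem_filter.mp hF).1)
            (Finset.mem_filter.mpr ⟨hF₀𝓕, hy₀⟩)
        have h2 := hxmax y₀ hy₀X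
        linarith
      -- maximum clique in the star of x
      have hempty : (∅ : Finset (Finset α)) ∈
          (𝓕.filter (fun F => x ∈ F)).powerset.filter
            (fun S => ∀ F₁ ∈ S, ∀ F₂ ∈ S, F₁ ≠ F₂ → ¬ d ∣ (F₁ ∩ F₂).card) :=
        Finset.mem_filter.mpr ⟨Finset.empty_mem_powerset _,
          fun F₁ h => absurd h (Finset.notMem_empty _)⟩
      obtain ⟨S, hScl, hSmax⟩ := Finset.exists_max_image
        ((𝓕.filter (fun F => x ∈ F)).powerset.filter
          (fun S => ∀ F₁ ∈ S, ∀ F₂ ∈ S, F₁ ≠ F₂ → ¬ d ∣ (F₁ ∩ F₂).card))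
        (fun S => S.card) ⟨∅, hempty⟩
      have hSsub : S ⊆ 𝓕.filter (fun F => x ∈ F) :=
        Finset.mem_powerset.mp (Finset.mem_filter.mp hScl).1
      have hSCl : ∀ F₁ ∈ S, ∀ F₂ ∈ S, F₁ ≠ F₂ → ¬ d ∣ (F₁ ∩ F₂).card :=
        (Finset.mem_filter.mp hScl).2
      have hScard : S.card < m := by
        by_contra hcon
        push_neg at hcon
        obtain ⟨T, hTsub, hTcard⟩ := Finset.exists_subset_card_eq hcon
        exact hclique ⟨T, fun F hF => (Finset.mem_filter.mp (hSsub (hTsub hF))).1, hTcard,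
          fun F₁ h₁ F₂ h₂ hne => hSCl F₁ (hTsub h₁) F₂ (hTsub h₂) hne⟩
      -- every set through x has a d-divisible intersection with a clique member
      have cover6 : ∀ F ∈ 𝓕, x ∈ F → ∃ A ∈ S, d ∣ (F ∩ A).card := by
        intro F hF hxF
        by_cases hFS : F ∈ S
        · exact ⟨F, hFS, by rw [Finset.inter_self]; exact (hsize F hF).2⟩
        · have hS' : insert F S ∈ (𝓕.filter (fun F => x ∈ F)).powerset :=
            Finset.mem_powerset.mpr
              (Finset.insert_subset (Finset.mem_filter.mpr ⟨hF, hxF⟩) hSsub)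
          have hnotcl : ¬ ∀ F₁ ∈ insert F S, ∀ F₂ ∈ insert F S,
              F₁ ≠ F₂ → ¬ d ∣ (F₁ ∩ F₂).card := by
            intro hcl
            have hle : (insert F S).card ≤ S.card :=
              hSmax _ (Finset.mem_filter.mpr ⟨hS', hcl⟩)
            rw [Finset.card_insert_of_notMem hFS] at hle
            omega
          push_neg at hnotcl
          obtain ⟨F₁, h₁, F₂, h₂, hne, hdvd⟩ := hnotcl
          rw [Finset.mem_insert] at h₁ h₂
          rcases h₁ with rfl | h₁
          · rcases h₂ with rfl | h₂
            · exact absurd rfl hne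
            · exact ⟨F₂, h₂, hdvd⟩
          · rcases h₂ with rfl | h₂
            · exact ⟨F₁, h₁, by rwa [Finset.inter_comm]⟩
            · exact absurd hdvd (hSCl F₁ h₁ F₂ h₂ hne)
      -- the covering family of d-sets
      set 𝒟 := S.biUnion (fun A => ((A.erase x).powersetCard (d - 1)).image (insert x ·))
        with h𝒟
      have h𝒟mem : ∀ D ∈ 𝒟, x ∈ D ∧ D.card = d ∧ D ⊆ X := by
        intro D hD
        rw [h𝒟, Finset.mem_biUnion] at hD
        obtain ⟨A, hAS, hD⟩ := hD
        rw [Finset.mem_image] at hD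
        obtain ⟨B, hB, rfl⟩ := hD
        rw [Finset.mem_powersetCard] at hB
        obtain ⟨hBsub, hBcard⟩ := hB
        have hxB : x ∉ B := fun h => (Finset.mem_erase.mp (hBsub h)).1 rfl
        have hA𝓕 : A ∈ 𝓕 := (Finset.mem_filter.mp (hSsub hAS)).1
        refine ⟨Finset.mem_insert_self _ _, ?_, ?_⟩
        · rw [Finset.card_insert_of_notMem hxB, hBcard]; omega
        · exact Finset.insert_subset hxX
            ((hBsub.trans (Finset.erase_subset _ _)).trans (hsub A hA𝓕))
      have h𝒟card : 𝒟.card ≤ m * Nat.choose k (d - 1) := by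
        calc 𝒟.card ≤ ∑ A ∈ S, (((A.erase x).powersetCard (d - 1)).image (insert x ·)).card :=
              Finset.card_biUnion_le
          _ ≤ ∑ A ∈ S, Nat.choose k (d - 1) := by
              refine Finset.sum_le_sum ?_
              intro A hAS
              calc (((A.erase x).powersetCard (d - 1)).image (insert x ·)).card
                  ≤ ((A.erase x).powersetCard (d - 1)).card := Finset.card_image_le
                _ = Nat.choose (A.erase x).card (d - 1) := Finset.card_powersetCard _ _
                _ ≤ Nat.choose k (d - 1) := Nat.choose_le_choose _
                    (le_trans Finset.card_erase_le
                      (hsize A (Finset.mem_filter.mp (hSsub hAS)).1).1)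
          _ = S.card * Nat.choose k (d - 1) := by rw [Finset.sum_const, smul_eq_mul]
          _ ≤ m * Nat.choose k (d - 1) := Nat.mul_le_mul_right _ (le_of_lt hScard)
      have hcov : ∀ F ∈ 𝓕, x ∈ F → ∃ D ∈ 𝒟, D ⊆ F := by
        intro F hF hxF
        obtain ⟨A, hAS, hdvd⟩ := cover6 F hF hxF
        have hxA : x ∈ A := (Finset.mem_filter.mp (hSsub hAS)).2
        have hxFA : x ∈ F ∩ A := Finset.mem_inter.mpr ⟨hxF, hxA⟩
        have hpos : 0 < (F ∩ A).card := Finset.card_pos.mpr ⟨x, hxFA⟩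
        have hdle : d ≤ (F ∩ A).card := Nat.le_of_dvd hpos hdvd
        have hcard : d - 1 ≤ ((F ∩ A).erase x).card := by
          rw [Finset.card_erase_of_mem hxFA]; omega
        obtain ⟨B, hBsub, hBcard⟩ := Finset.exists_subset_card_eq hcard
        refine ⟨insert x B, ?_, ?_⟩
        · rw [h𝒟, Finset.mem_biUnion]
          exact ⟨A, hAS, Finset.mem_image.mpr ⟨B, Finset.mem_powersetCard.mpr
            ⟨hBsub.trans (Finset.erase_subset_erase x Finset.inter_subset_right), hBcard⟩, rfl⟩⟩
        · exact Finset.insert_subset hxF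
            ((hBsub.trans (Finset.erase_subset _ _)).trans Finset.inter_subset_left)
      -- 𝒟 is nonempty; pick the heaviest D
      have h𝓕x_ne : (𝓕.filter (fun F => x ∈ F)).Nonempty := by
        rw [Finset.nonempty_iff_ne_empty]
        intro h
        rw [hμ] at hμx
        simp only [h, Finset.sum_empty] at hμx
        exact lt_irrefl _ hμx
      obtain ⟨Fx, hFx⟩ := h𝓕x_ne
      obtain ⟨D₀, hD₀, _⟩ := hcov Fx (Finset.mem_filter.mp hFx).1 (Finset.mem_filter.mp hFx).2
      set ψ : Finset α → ℝ :=
        fun D => ∑ F ∈ 𝓕.filter (fun F => D ⊆ F), (c ^ (F.card / d) * w F) with hψ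
      obtain ⟨D, hD𝒟, hDmax⟩ := Finset.exists_max_image 𝒟 ψ ⟨D₀, hD₀⟩
      obtain ⟨hxD, hDcard, hDX⟩ := h𝒟mem D hD𝒟
      have hψnn : 0 ≤ ψ D :=
        Finset.sum_nonneg (fun F hF => htnn F (Finset.mem_filter.mp hF).1)
      have key1 : μ x ≤ (𝒟.card : ℝ) * ψ D := by
        have h1 : μ x ≤ ∑ D' ∈ 𝒟, ψ D' := by
          rw [hμ]
          exact dc_aux 𝒟 𝓕 (fun F => c ^ (F.card / d) * w F) htnn
            (fun D' F => D' ⊆ F) (fun F => x ∈ F) (fun F hF hx => hcov F hF hx)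
        have h2 : ∑ D' ∈ 𝒟, ψ D' ≤ 𝒟.card • ψ D := Finset.sum_le_card_nsmul _ _ _ hDmax
        rw [nsmul_eq_mul] at h2
        linarith
      have key2 : ∑ F ∈ 𝓕.filter (fun F => ¬ Disjoint F D), (c ^ (F.card / d) * w F)
          ≤ (d : ℝ) * μ x := by
        have h1 := dc_aux D 𝓕 (fun F => c ^ (F.card / d) * w F) htnn
          (fun y F => y ∈ F) (fun F => ¬ Disjoint F D)
          (fun F hF hnd => by
            obtain ⟨a, haF, haD⟩ := Finset.not_disjoint_iff.mp hnd
            exact ⟨a, haD, haF⟩)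
        have h2 : ∑ y ∈ D, ∑ F ∈ 𝓕.filter (fun F => y ∈ F), (c ^ (F.card / d) * w F)
            ≤ ∑ _y ∈ D, μ x := by
          refine Finset.sum_le_sum ?_
          intro y hy
          have h3 : μ y ≤ μ x := hxmax y (hDX hy)
          rw [hμ] at h3
          exact h3
        rw [Finset.sum_const, nsmul_eq_mul, hDcard] at h2
        linarith
      have key3 : (d : ℝ) * (Nat.choose k (d - 1) : ℝ) * (m : ℝ) * ψ D
          = ∑ F ∈ 𝓕.filter (fun F => D ⊆ F), (c ^ (F.card / d - 1) * w F) := by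
        rw [hψ, Finset.mul_sum]
        refine Finset.sum_congr rfl ?_
        intro F hF
        obtain ⟨hF𝓕, hDF⟩ := Finset.mem_filter.mp hF
        have hdle : d ≤ F.card := hDcard ▸ Finset.card_le_card hDF
        have h1 : 1 ≤ F.card / d := (Nat.one_le_div_iff (by omega)).mpr hdle
        have hXc : (d : ℝ) * (Nat.choose k (d - 1) : ℝ) * (m : ℝ) = c⁻¹ := by
          rw [hc_def, inv_inv]
        rw [← mul_assoc, hXc, inv_mul_pow' (ne_of_gt hcpos) h1]
      have key4 : ∑ F ∈ 𝓕.filter (fun F => ¬ Disjoint F D), (c ^ (F.card / d) * w F)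
          ≤ ∑ F ∈ 𝓕.filter (fun F => D ⊆ F), (c ^ (F.card / d - 1) * w F) := by
        rw [← key3]
        have h𝒟card' : (𝒟.card : ℝ) ≤ (m : ℝ) * (Nat.choose k (d - 1) : ℝ) := by
          exact_mod_cast h𝒟card
        have h5 : μ x ≤ (m : ℝ) * (Nat.choose k (d - 1) : ℝ) * ψ D :=
          le_trans key1 (mul_le_mul_of_nonneg_right h𝒟card' hψnn)
        calc ∑ F ∈ 𝓕.filter (fun F => ¬ Disjoint F D), (c ^ (F.card / d) * w F)
            ≤ (d : ℝ) * μ x := key2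
          _ ≤ (d : ℝ) * ((m : ℝ) * (Nat.choose k (d - 1) : ℝ) * ψ D) :=
              mul_le_mul_of_nonneg_left h5 hd1.le
          _ = (d : ℝ) * (Nat.choose k (d - 1) : ℝ) * (m : ℝ) * ψ D := by ring
      -- the reduced family on X \ D
      set 𝓗 := ((𝓕.filter (fun F => D ⊆ F)).image (fun F => F \ D))
          ∪ 𝓕.filter (fun F => Disjoint F D) with h𝓗
      set w' : Finset α → ℝ :=
        fun G => (if G ∪ D ∈ 𝓕 then w (G ∪ D) else 0) + (if G ∈ 𝓕 then w G else 0) with hw'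
      have h𝓗disj : ∀ G ∈ 𝓗, Disjoint G D := by
        intro G hG
        rw [h𝓗, Finset.mem_union] at hG
        rcases hG with hG | hG
        · obtain ⟨F, hF, rfl⟩ := Finset.mem_image.mp hG
          exact Finset.sdiff_disjoint
        · exact (Finset.mem_filter.mp hG).2
      have h𝓗sub : ∀ G ∈ 𝓗, G ⊆ X \ D := by
        intro G hG
        rw [Finset.subset_sdiff]
        refine ⟨?_, h𝓗disj G hG⟩
        rw [h𝓗, Finset.mem_union] at hG
        rcases hG with hG | hG
        · obtain ⟨F, hF, rfl⟩ := Finset.mem_image.mp hG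
          exact (Finset.sdiff_subset).trans (hsub F (Finset.mem_filter.mp hF).1)
        · exact hsub G (Finset.mem_filter.mp hG).1
      have h𝓗size : ∀ G ∈ 𝓗, G.card ≤ k ∧ d ∣ G.card := by
        intro G hG
        rw [h𝓗, Finset.mem_union] at hG
        rcases hG with hG | hG
        · obtain ⟨F, hF, rfl⟩ := Finset.mem_image.mp hG
          obtain ⟨hF𝓕, hDF⟩ := Finset.mem_filter.mp hF
          rw [Finset.card_sdiff_of_subset hDF, hDcard]
          obtain ⟨hk, hdvd⟩ := hsize F hF𝓕
          exact ⟨by omega, Nat.dvd_sub hdvd dvd_rfl⟩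
        · exact hsize G (Finset.mem_filter.mp hG).1
      have h𝓗w : ∀ G ∈ 𝓗, 0 ≤ w' G := by
        intro G hG
        rw [hw']
        refine add_nonneg ?_ ?_ <;> split
        · next h => exact hw _ h
        · exact le_rfl
        · next h => exact hw _ h
        · exact le_rfl
      have h𝓗clique : ¬ ∃ S' ⊆ 𝓗, S'.card = m ∧
          ∀ F₁ ∈ S', ∀ F₂ ∈ S', F₁ ≠ F₂ → ¬ d ∣ (F₁ ∩ F₂).card := by
        rintro ⟨S', hS'sub, hS'card, hS'cl⟩
        apply hclique
        have hφdisj : ∀ G ∈ S', Disjoint G D := fun G hG => h𝓗disj G (hS'sub hG)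
        have hφmem : ∀ G ∈ S', (if G ∪ D ∈ 𝓕 then G ∪ D else G) ∈ 𝓕 := by
          intro G hG
          split
          · next h => exact h
          · next hGD =>
            have hG𝓗 := hS'sub hG
            rw [h𝓗, Finset.mem_union] at hG𝓗
            rcases hG𝓗 with h | h
            · obtain ⟨F, hF, rfl⟩ := Finset.mem_image.mp h
              obtain ⟨hF𝓕, hDF⟩ := Finset.mem_filter.mp hF
              rw [Finset.sdiff_union_of_subset hDF] at hGD
              exact absurd hF𝓕 hGD
            · exact (Finset.mem_filter.mp h).1
        have hφinj : ∀ G₁ ∈ S', ∀ G₂ ∈ S',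
            (if G₁ ∪ D ∈ 𝓕 then G₁ ∪ D else G₁) = (if G₂ ∪ D ∈ 𝓕 then G₂ ∪ D else G₂) →
            G₁ = G₂ := by
          intro G₁ h₁ G₂ h₂ heq
          split at heq <;> split at heq
          · have e1 := congrArg (· \ D) heq
            simpa [Finset.union_sdiff_cancel_right (hφdisj G₁ h₁),
              Finset.union_sdiff_cancel_right (hφdisj G₂ h₂)] using e1
          · exfalso
            have hD2 : x ∈ G₂ := heq ▸ Finset.mem_union_right G₁ hxD
            exact (Finset.disjoint_left.mp (hφdisj G₂ h₂) hD2) hxD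
          · exfalso
            have hD1 : x ∈ G₁ := heq ▸ Finset.mem_union_right G₂ hxD
            exact (Finset.disjoint_left.mp (hφdisj G₁ h₁) hD1) hxD
          · exact heq
        have hkey : ∀ G₁ ∈ S', ∀ G₂ ∈ S', ¬ d ∣ (G₁ ∩ G₂).card →
            ¬ d ∣ ((if G₁ ∪ D ∈ 𝓕 then G₁ ∪ D else G₁) ∩
              (if G₂ ∪ D ∈ 𝓕 then G₂ ∪ D else G₂)).card := by
          intro G₁ h₁ G₂ h₂ hnd
          have hd1' := hφdisj G₁ h₁
          have hd2' := hφdisj G₂ h₂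
          split <;> split
          · have he : (G₁ ∪ D) ∩ (G₂ ∪ D) = (G₁ ∩ G₂) ∪ D := by
              ext a
              simp only [Finset.mem_inter, Finset.mem_union]
              tauto
            rw [he, Finset.card_union_of_disjoint
              (Finset.disjoint_of_subset_left Finset.inter_subset_left hd1'), hDcard]
            intro hdvd
            have h6 := Nat.dvd_sub hdvd (dvd_refl d)
            rw [Nat.add_sub_cancel] at h6
            exact hnd h6
          · have he : (G₁ ∪ D) ∩ G₂ = G₁ ∩ G₂ := by
              ext a
              simp only [Finset.mem_inter, Finset.mem_union]
              constructor
              · rintro ⟨h | h, h2⟩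
                · exact ⟨h, h2⟩
                · exact absurd h2 (Finset.disjoint_right.mp hd2' h)
              · tauto
            rw [he]; exact hnd
          · have he : G₁ ∩ (G₂ ∪ D) = G₁ ∩ G₂ := by
              ext a
              simp only [Finset.mem_inter, Finset.mem_union]
              constructor
              · rintro ⟨h1, h | h⟩
                · exact ⟨h1, h⟩
                · exact absurd h1 (Finset.disjoint_right.mp hd1' h)
              · rintro ⟨h1, h2⟩; exact ⟨h1, Or.inl h2⟩
            rw [he]; exact hnd
          · exact hnd
        refine ⟨S'.image (fun G => if G ∪ D ∈ 𝓕 then G ∪ D else G), ?_, ?_, ?_⟩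
        · intro F hF
          obtain ⟨G, hG, rfl⟩ := Finset.mem_image.mp hF
          exact hφmem G hG
        · rw [Finset.card_image_of_injOn, hS'card]
          intro a ha b hb
          exact hφinj a (by simpa using ha) b (by simpa using hb)
        · intro F₁ hF₁ F₂ hF₂ hne hdvd
          obtain ⟨G₁, hG₁, rfl⟩ := Finset.mem_image.mp hF₁
          obtain ⟨G₂, hG₂, rfl⟩ := Finset.mem_image.mp hF₂
          have hGne : G₁ ≠ G₂ := fun h => hne (by rw [h])
          exact hkey G₁ hG₁ G₂ hG₂ (hS'cl G₁ hG₁ G₂ hG₂ hGne) hdvd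
      have hXcard : (X \ D).card ≤ n := by
        rw [Finset.card_sdiff_of_subset hDX, hDcard]
        have h7 : 1 ≤ X.card := Finset.card_pos.mpr hXne
        omega
      obtain ⟨s', Ys, 𝓗', hY1, hY2, hY3, hY4⟩ :=
        ih (X \ D) 𝓗 w' hXcard h𝓗sub h𝓗size h𝓗clique h𝓗w
      -- split the reduced-family sum
      have hE1 : 𝓗.filter (fun G => G ∪ D ∈ 𝓕)
          = (𝓕.filter (fun F => D ⊆ F)).image (fun F => F \ D) := by
        ext G
        simp only [Finset.mem_filter, Finset.mem_image]
        constructor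
        · rintro ⟨hG𝓗, hGD⟩
          exact ⟨G ∪ D, ⟨hGD, Finset.subset_union_right⟩,
            Finset.union_sdiff_cancel_right (h𝓗disj G hG𝓗)⟩
        · rintro ⟨F, ⟨hF𝓕, hDF⟩, rfl⟩
          refine ⟨?_, by rw [Finset.sdiff_union_of_subset hDF]; exact hF𝓕⟩
          rw [h𝓗]
          exact Finset.mem_union_left _
            (Finset.mem_image_of_mem _ (Finset.mem_filter.mpr ⟨hF𝓕, hDF⟩))
      have hE2 : 𝓗.filter (fun G => G ∈ 𝓕) = 𝓕.filter (fun F => Disjoint F D) := by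
        ext G
        simp only [Finset.mem_filter]
        constructor
        · rintro ⟨hG𝓗, hG𝓕⟩
          exact ⟨hG𝓕, h𝓗disj G hG𝓗⟩
        · rintro ⟨hG𝓕, hGdisj⟩
          refine ⟨?_, hG𝓕⟩
          rw [h𝓗]
          exact Finset.mem_union_right _ (Finset.mem_filter.mpr ⟨hG𝓕, hGdisj⟩)
      have hsdiffinj : ∀ F₁ ∈ 𝓕.filter (fun F => D ⊆ F), ∀ F₂ ∈ 𝓕.filter (fun F => D ⊆ F),
          F₁ \ D = F₂ \ D → F₁ = F₂ := by
        intro F₁ h₁ F₂ h₂ he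
        have e1 := congrArg (· ∪ D) he
        simpa [Finset.sdiff_union_of_subset (Finset.mem_filter.mp h₁).2,
          Finset.sdiff_union_of_subset (Finset.mem_filter.mp h₂).2] using e1
      have hΦ𝓗 : ∑ G ∈ 𝓗, (c ^ (G.card / d) * w' G)
          = ∑ F ∈ 𝓕.filter (fun F => D ⊆ F), (c ^ (F.card / d - 1) * w F)
            + ∑ F ∈ 𝓕.filter (fun F => Disjoint F D), (c ^ (F.card / d) * w F) := by
        have hsplit : ∀ G ∈ 𝓗, c ^ (G.card / d) * w' G
            = (if G ∪ D ∈ 𝓕 then c ^ (G.card / d) * w (G ∪ D) else 0)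
              + (if G ∈ 𝓕 then c ^ (G.card / d) * w G else 0) := by
          intro G hG
          rw [hw']
          dsimp only
          rw [mul_add, mul_ite, mul_zero, mul_ite, mul_zero]
        rw [Finset.sum_congr rfl hsplit, Finset.sum_add_distrib]
        congr 1
        · rw [← Finset.sum_filter, hE1, Finset.sum_image hsdiffinj]
          refine Finset.sum_congr rfl ?_
          intro F hF
          obtain ⟨hF𝓕, hDF⟩ := Finset.mem_filter.mp hF
          rw [Finset.sdiff_union_of_subset hDF, Finset.card_sdiff_of_subset hDF, hDcard,
            div_sub_one' (by omega) (hsize F hF𝓕).2]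
        · rw [← Finset.sum_filter, hE2]
      have hΦle : ∑ F ∈ 𝓕, (c ^ (F.card / d) * w F)
          ≤ ∑ G ∈ 𝓗, (c ^ (G.card / d) * w' G) := by
        rw [hΦ𝓗, ← Finset.sum_filter_add_sum_filter_not 𝓕 (fun F => Disjoint F D)]
        linarith
      -- assemble the final block system
      set XsN : ℕ → Finset α := fun i => if i = s' then D else Ys i with hXsN
      set 𝓕fin := 𝓕.filter (fun F => ∃ I ∈ (Finset.range (s' + 1)).powerset,
          F = I.biUnion XsN) with h𝓕fin
      have hXs' : XsN s' = D := by simp [hXsN]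
      have hXslt : ∀ i, i < s' → XsN i = Ys i := by
        intro i hi
        rw [hXsN]
        exact if_neg (by omega)
      have hmem𝓕fin : ∀ F, F ∈ 𝓕fin ↔ F ∈ 𝓕 ∧
          ∃ I ∈ (Finset.range (s' + 1)).powerset, F = I.biUnion XsN := by
        intro F
        simp only [h𝓕fin, Finset.mem_filter]
      refine ⟨s' + 1, XsN, 𝓕fin, ?_, ?_, ?_, ?_⟩
      · intro i hi
        by_cases hieq : i = s'
        · rw [hieq, hXs']
          exact ⟨hDX, hDcard⟩
        · have hilt : i < s' := by omega
          rw [hXslt i hilt]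
          obtain ⟨hsub', hcard'⟩ := hY1 i hilt
          exact ⟨hsub'.trans Finset.sdiff_subset, hcard'⟩
      · intro i hi j hj hne
        by_cases hieq : i = s'
        · have hjlt : j < s' := by omega
          rw [hieq, hXs', hXslt j hjlt]
          exact ((Finset.subset_sdiff.mp (hY1 j hjlt).1).2).symm
        · by_cases hjeq : j = s'
          · have hilt : i < s' := by omega
            rw [hjeq, hXs', hXslt i hilt]
            exact (Finset.subset_sdiff.mp (hY1 i hilt).1).2
          · rw [hXslt i (by omega), hXslt j (by omega)]
            exact hY2 i (by omega) j (by omega) hne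
      · intro F
        rw [hmem𝓕fin F]
        constructor
        · rintro ⟨h1, I, hI, h2⟩
          exact ⟨h1, I, Finset.mem_powerset.mp hI, h2⟩
        · rintro ⟨h1, I, hI, h2⟩
          exact ⟨h1, I, Finset.mem_powerset.mpr hI, h2⟩
      · -- the weight inequality
        have h𝓗'sub : ∀ G ∈ 𝓗', G ∈ 𝓗 := fun G hG => ((hY3 G).mp hG).1
        have hsum2 : ∑ G ∈ 𝓗', w' G
            = ∑ G ∈ 𝓗'.filter (fun G => G ∪ D ∈ 𝓕), w (G ∪ D)
              + ∑ G ∈ 𝓗'.filter (fun G => G ∈ 𝓕), w G := by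
          rw [hw']
          dsimp only
          rw [Finset.sum_add_distrib, ← Finset.sum_filter, ← Finset.sum_filter]
        have hsum1 : ∑ F ∈ (𝓗'.filter (fun G => G ∪ D ∈ 𝓕)).image (fun G => G ∪ D), w F
            = ∑ G ∈ 𝓗'.filter (fun G => G ∪ D ∈ 𝓕), w (G ∪ D) := by
          refine Finset.sum_image ?_
          intro G₁ h₁ G₂ h₂ he
          have e1 := congrArg (· \ D) he
          simpa [Finset.union_sdiff_cancel_right
              (h𝓗disj G₁ (h𝓗'sub G₁ (Finset.mem_filter.mp h₁).1)),
            Finset.union_sdiff_cancel_right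
              (h𝓗disj G₂ (h𝓗'sub G₂ (Finset.mem_filter.mp h₂).1))] using e1
        have hABdisj : Disjoint ((𝓗'.filter (fun G => G ∪ D ∈ 𝓕)).image (fun G => G ∪ D))
            (𝓗'.filter (fun G => G ∈ 𝓕)) := by
          rw [Finset.disjoint_left]
          intro F hFA hFB
          obtain ⟨G, hG, rfl⟩ := Finset.mem_image.mp hFA
          have h2 := h𝓗disj _ (h𝓗'sub _ (Finset.mem_filter.mp hFB).1)
          exact (Finset.disjoint_left.mp h2 (Finset.mem_union_right G hxD)) hxD
        have hIY : ∀ I : Finset ℕ, I ⊆ Finset.range s' → I.biUnion XsN = I.biUnion Ys := by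
          intro I hI
          refine Finset.biUnion_congr rfl ?_
          intro i hi
          exact hXslt i (Finset.mem_range.mp (hI hi))
        have hAsub : ((𝓗'.filter (fun G => G ∪ D ∈ 𝓕)).image (fun G => G ∪ D)) ⊆ 𝓕fin := by
          intro F hF
          obtain ⟨G, hG', rfl⟩ := Finset.mem_image.mp hF
          obtain ⟨hG𝓗', hGD𝓕⟩ := Finset.mem_filter.mp hG'
          obtain ⟨hG𝓗, I, hI, hGI⟩ := (hY3 G).mp hG𝓗'
          have hs'I : s' ∉ I := fun h => by
            have := Finset.mem_range.mp (hI h); omega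
          refine (hmem𝓕fin _).mpr ⟨hGD𝓕, insert s' I, ?_, ?_⟩
          · rw [Finset.mem_powerset]
            exact Finset.insert_subset (Finset.mem_range.mpr (by omega))
              (hI.trans (Finset.range_subset_range.mpr (by omega)))
          · rw [Finset.biUnion_insert, hXs', hIY I hI, ← hGI, Finset.union_comm]
        have hBsub : (𝓗'.filter (fun G => G ∈ 𝓕)) ⊆ 𝓕fin := by
          intro G hG'
          obtain ⟨hG𝓗'', hG𝓕⟩ := Finset.mem_filter.mp hG'
          obtain ⟨hG𝓗, I, hI, hGI⟩ := (hY3 G).mp hG𝓗''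
          refine (hmem𝓕fin _).mpr ⟨hG𝓕, I, ?_, ?_⟩
          · rw [Finset.mem_powerset]
            exact hI.trans (Finset.range_subset_range.mpr (by omega))
          · rw [hIY I hI]; exact hGI
        have h𝓕finsub : ∀ F ∈ 𝓕fin, F ∈ 𝓕 := fun F hF => ((hmem𝓕fin F).mp hF).1
        calc ∑ F ∈ 𝓕, (c ^ (F.card / d) * w F)
            ≤ ∑ G ∈ 𝓗, (c ^ (G.card / d) * w' G) := hΦle
          _ ≤ ∑ G ∈ 𝓗', w' G := hY4
          _ = ∑ F ∈ ((𝓗'.filter (fun G => G ∪ D ∈ 𝓕)).image (fun G => G ∪ D))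
                ∪ (𝓗'.filter (fun G => G ∈ 𝓕)), w F := by
              rw [Finset.sum_union hABdisj, hsum1, hsum2]
          _ ≤ ∑ F ∈ 𝓕fin, w F := by
              refine Finset.sum_le_sum_of_subset_of_nonneg
                (Finset.union_subset hAsub hBsub) ?_
              intro F hF _
              exact hw F (h𝓕finsub F hF)

theorem stmt_9 {α : Type*} [DecidableEq α] (k d m : ℕ) (hd : 1 ≤ d) (hm : 1 ≤ m)
    (hdk : d ≤ k) (X : Finset α) (𝓕 : Finset (Finset α))
    (hsub : ∀ F ∈ 𝓕, F ⊆ X)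
    (hsize : ∀ F ∈ 𝓕, F.card ≤ k ∧ d ∣ F.card)
    (hclique : ¬ ∃ S ⊆ 𝓕, S.card = m ∧
      ∀ F₁ ∈ S, ∀ F₂ ∈ S, F₁ ≠ F₂ → ¬ d ∣ (F₁ ∩ F₂).card)
    (w : Finset α → ℝ) (hw : ∀ F ∈ 𝓕, 0 ≤ w F) :
    ∃ (s : ℕ) (Xs : ℕ → Finset α) (𝓕' : Finset (Finset α)),
      (∀ i < s, Xs i ⊆ X ∧ (Xs i).card = d) ∧
      (∀ i < s, ∀ j < s, i ≠ j → Disjoint (Xs i) (Xs j)) ∧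
      (∀ F, F ∈ 𝓕' ↔ F ∈ 𝓕 ∧ ∃ I ⊆ Finset.range s, F = I.biUnion Xs) ∧
      (∑ F ∈ 𝓕, (((d : ℝ) * (Nat.choose k (d - 1) : ℝ) * (m : ℝ))⁻¹ ^ (F.card / d) * w F))
        ≤ ∑ F ∈ 𝓕', w F := by
  exact aux_main k d m hd hm hdk X.card X 𝓕 w le_rfl hsub hsize hclique hw
end

section
/- Let G be a graph with no independent set of size m, and let w : V(G) → ℝ_{≥0} be a weighting of the vertices. Then there exists a vertex v ∈ V(G) such that the total weight of the closed neighbourhood of v (i.e., w(v) plus the sum of w(u) over neighbours u of v) is at least (1/m) · Σ_{u ∈ V(G)} w(u). -/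
theorem stmt_11 {V : Type*} [Fintype V] [Nonempty V] (G : SimpleGraph V)
    [DecidableRel G.Adj] (m : ℕ) (hm : 1 ≤ m)
    (hInd : ¬ ∃ S : Finset V, S.card = m ∧ ∀ u ∈ S, ∀ v ∈ S, u ≠ v → ¬ G.Adj u v)
    (w : V → ℝ) (hw : ∀ v, 0 ≤ w v) :
    ∃ v : V, (1 / (m : ℝ)) * ∑ u, w u
      ≤ w v + ∑ u ∈ Finset.univ.filter (fun u => G.Adj v u), w u := by
  classical
  set T := ∑ u, w u with hT
  have hmpos : (0:ℝ) < m := by exact_mod_cast hm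
  by_cases hT0 : T ≤ 0
  · obtain ⟨v⟩ := ‹Nonempty V›
    refine ⟨v, ?_⟩
    have h1 : (1 / (m:ℝ)) * T ≤ 0 :=
      mul_nonpos_of_nonneg_of_nonpos (by positivity) hT0
    have h2 : (0:ℝ) ≤ ∑ u ∈ Finset.univ.filter (fun u => G.Adj v u), w u :=
      Finset.sum_nonneg (fun u _ => hw u)
    linarith [hw v]
  push_neg at hT0
  by_contra hcon
  push_neg at hcon
  have hTm : 0 < T / m := div_pos hT0 hmpos
  have heq : (1 / (m:ℝ)) * T = T / m := by ring
  have key : ∀ k, k ≤ m → ∃ S : Finset V, S.card = k ∧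
      (∀ u ∈ S, ∀ v ∈ S, u ≠ v → ¬ G.Adj u v) ∧
      T - k * (T / m) ≤ ∑ u ∈ Finset.univ.filter
        (fun a => ∀ s ∈ S, ¬ G.Adj s a ∧ s ≠ a), w u := by
    intro k
    induction k with
    | zero =>
      intro _
      refine ⟨∅, rfl, by simp, ?_⟩
      simp [hT]
    | succ k ih =>
      intro hk
      obtain ⟨S, hcard, hind, hsum⟩ := ih (Nat.le_of_succ_le hk)
      set A := Finset.univ.filter (fun a => ∀ s ∈ S, ¬ G.Adj s a ∧ s ≠ a) with hA
      have hApos : 0 < ∑ u ∈ A, w u := by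
        have hk' : (k:ℝ) < m := by exact_mod_cast hk
        have h1 : (k:ℝ) * (T/m) < m * (T/m) := mul_lt_mul_of_pos_right hk' hTm
        have hmm : (m:ℝ) * (T/m) = T := by field_simp
        linarith
      have hAne : A.Nonempty := by
        by_contra h
        rw [Finset.not_nonempty_iff_eq_empty] at h
        rw [h] at hApos
        simp at hApos
      obtain ⟨v, hv⟩ := hAne
      have hv' := Finset.mem_filter.mp hv
      refine ⟨insert v S, ?_, ?_, ?_⟩
      · rw [Finset.card_insert_of_notMem, hcard]
        intro hvS
        exact (hv'.2 v hvS).2 rfl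
      · intro a ha b hb hab
        rw [Finset.mem_insert] at ha hb
        rcases ha with rfl | ha <;> rcases hb with rfl | hb
        · exact absurd rfl hab
        · intro hadj; exact (hv'.2 b hb).1 hadj.symm
        · exact (hv'.2 a ha).1
        · exact hind a ha b hb hab
      · set A' := Finset.univ.filter
          (fun a => ∀ s ∈ insert v S, ¬ G.Adj s a ∧ s ≠ a) with hA'
        have hsub : A' ⊆ A := by
          intro a ha
          rw [hA', Finset.mem_filter] at ha
          rw [hA, Finset.mem_filter]
          exact ⟨ha.1, fun s hs => ha.2 s (Finset.mem_insert_of_mem hs)⟩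
        have hdiff : A \ A' ⊆ insert v (Finset.univ.filter (fun u => G.Adj v u)) := by
          intro a ha
          obtain ⟨haA, haA'⟩ := Finset.mem_sdiff.mp ha
          have haA2 := Finset.mem_filter.mp haA
          rw [Finset.mem_insert, Finset.mem_filter]
          by_contra h
          push_neg at h
          apply haA'
          rw [hA', Finset.mem_filter]
          refine ⟨Finset.mem_univ a, ?_⟩
          intro s hs
          rw [Finset.mem_insert] at hs
          rcases hs with rfl | hs
          · exact ⟨h.2 (Finset.mem_univ a), fun he => h.1 he.symm⟩
          · exact haA2.2 s hs
        have hle1 : ∑ u ∈ A \ A', w u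
            ≤ ∑ u ∈ insert v (Finset.univ.filter (fun u => G.Adj v u)), w u :=
          Finset.sum_le_sum_of_subset_of_nonneg hdiff (fun u _ _ => hw u)
        have hvnotmem : v ∉ Finset.univ.filter (fun u => G.Adj v u) := by
          simp [G.loopless.irrefl v]
        have hins : ∑ u ∈ insert v (Finset.univ.filter (fun u => G.Adj v u)), w u
            = w v + ∑ u ∈ Finset.univ.filter (fun u => G.Adj v u), w u :=
          Finset.sum_insert hvnotmem
        have hcv := hcon v
        rw [heq] at hcv
        have hsplit : ∑ u ∈ A \ A', w u + ∑ u ∈ A', w u = ∑ u ∈ A, w u :=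
          Finset.sum_sdiff hsub
        have hcast : ((k+1 : ℕ) : ℝ) = (k:ℝ) + 1 := by push_cast; ring
        rw [hcast]
        nlinarith [hsum]
  obtain ⟨S, hcard, hind, _⟩ := key m le_rfl
  exact hInd ⟨S, hcard, hind⟩
end

section
/- Let k > ℓ ≥ 2 be integers. For every subset 𝓘 of the ℓ-element subsets of {1,...,k}, and for every sufficiently large prime p, there exist d = C(k,ℓ) (the binomial coefficient) and d-dimensional subspaces V^(1), ..., V^(k) of F_p^{ℓd} such that: (i) for every ℓ-element subset I of {1,...,k} not in 𝓘, the sum of the subspaces V^(i) for i ∈ I has dimension ℓd (i.e., is the whole space, with the sum direct); (ii) for every I ∈ 𝓘, the sum of the subspaces V^(i) for i ∈ I has dimension ℓd - 1; (iii) for every (ℓ+1)-element subset I of {1,...,k}, the sum of the subspaces V^(i) for i ∈ I equals F_p^{ℓd}. -/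
open Module Submodule
set_option maxHeartbeats 1000000
set_option synthInstance.maxHeartbeats 1000000

section helpers
variable {F : Type*} [Field F]

noncomputable def mom (n : ℕ) (x : F) : Fin n → F := fun j => x ^ (j : ℕ)

lemma li_mom {n : ℕ} {ι : Type*} (a : ι → F) (ha : Function.Injective a)
    (T : Finset ι) (hT : T.card = n) :
    LinearIndependent F (fun i : T => mom n (a i)) := by
  classical
  let e : Fin n ≃ T := (T.equivFin.trans (finCongr hT)).symm
  rw [← linearIndependent_equiv e]
  have hrows : ((fun i : T => mom n (a i)) ∘ e)
      = fun i => (Matrix.vandermonde fun i : Fin n => a (e i)) i := by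
    funext i j
    simp [mom, Matrix.vandermonde_apply]
  rw [hrows]
  refine (Matrix.linearIndependent_rows_iff_isUnit (A := Matrix.vandermonde fun i : Fin n => a (e i))).2 ?_
  rw [Matrix.isUnit_iff_isUnit_det, isUnit_iff_ne_zero]
  rw [Ne, Matrix.det_vandermonde_eq_zero_iff]
  push_neg
  intro i j hij
  exact e.injective (Subtype.ext (ha hij))

lemma li_mom_le {n k : ℕ} (a : Fin k → F) (ha : Function.Injective a)
    (hkn : n ≤ k) (S : Finset (Fin k)) (hS : S.card ≤ n) :
    LinearIndependent F (fun i : S => mom n (a i)) := by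
  have hcard : n ≤ (Finset.univ : Finset (Fin k)).card := by
    simpa using hkn
  obtain ⟨T, hST, -, hT⟩ := Finset.exists_subsuperset_card_eq S.subset_univ hS hcard
  have h2 := (li_mom a ha T hT).comp (fun i : S => (⟨i.1, hST i.2⟩ : T))
    (fun x y hxy => Subtype.ext (by have := congrArg Subtype.val hxy; exact this))
  exact h2

lemma finrank_span_image {k m : ℕ} (w : Fin k → (Fin m → F)) (S : Finset (Fin k))
    (h : LinearIndependent F (fun i : S => w i)) :
    finrank F (span F (w '' ↑S)) = S.card := by
  rw [Set.image_eq_range]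
  have h2 := finrank_span_eq_card (R := F) h
  simp only [Fintype.card_coe] at h2
  exact h2
end helpers

section part2
variable {F : Type*} [Field F]

def subPiEquiv {ι : Type*} [Fintype ι] {φ : ι → Type*} [∀ i, AddCommGroup (φ i)]
    [∀ i, Module F (φ i)] (q : ∀ i, Submodule F (φ i)) :
    ↥(Submodule.pi Set.univ q) ≃ₗ[F] ∀ i, ↥(q i) where
  toFun f := fun i => ⟨f.1 i, f.2 i trivial⟩
  map_add' f g := rfl
  map_smul' c f := rfl
  invFun x := ⟨fun i => x i, fun i _ => (x i).2⟩
  left_inv f := rfl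
  right_inv x := rfl

lemma finrank_pi_submodule {ι : Type*} [Fintype ι] {φ : ι → Type*} [∀ i, AddCommGroup (φ i)]
    [∀ i, Module F (φ i)] [∀ i, FiniteDimensional F (φ i)] (q : ∀ i, Submodule F (φ i)) :
    finrank F (Submodule.pi Set.univ q) = ∑ i, finrank F (q i) := by
  rw [(subPiEquiv q).finrank_eq]
  exact Module.finrank_pi_fintype F

lemma biSup_pi {ι κ : Type*} [Fintype ι] {φ : ι → Type*} [∀ i, AddCommGroup (φ i)]
    [∀ i, Module F (φ i)] (I : Finset κ) (q : κ → ∀ i, Submodule F (φ i)) :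
    ⨆ j ∈ I, Submodule.pi Set.univ (q j)
      = Submodule.pi Set.univ (fun b => ⨆ j ∈ I, q j b) := by
  classical
  apply le_antisymm
  · exact iSup₂_le fun j hj => Submodule.pi_mono fun b _ =>
      le_iSup₂_of_le j hj le_rfl
  · rw [← Submodule.iSup_map_single]
    refine iSup_le fun b => ?_
    rw [Submodule.map_iSup]
    refine iSup_le fun j => ?_
    rw [Submodule.map_iSup]
    refine iSup_le fun hj => ?_
    exact le_iSup₂_of_le j hj
      (Submodule.map_le_iff_le_comap.2 (Submodule.le_comap_single_pi _))

lemma exists_avoiding {p m : ℕ} [Fact p.Prime] (S : Submodule (ZMod p) (Fin m → ZMod p))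
    (𝒯 : Finset (Submodule (ZMod p) (Fin m → ZMod p)))
    (hS : 0 < finrank (ZMod p) S)
    (h : ∀ t ∈ 𝒯, ¬ S ≤ t) (hcard : 𝒯.card < p) :
    ∃ z ∈ S, ∀ t ∈ 𝒯, z ∉ t := by
  classical
  haveI : NeZero p := ⟨(Fact.out (p := p.Prime)).pos.ne'⟩
  by_contra hcon
  push_neg at hcon
  have hsub : (Finset.univ.filter (· ∈ S))
      ⊆ 𝒯.biUnion (fun t => Finset.univ.filter (· ∈ S ⊓ t)) := by
    intro z hz
    simp only [Finset.mem_filter, Finset.mem_univ, true_and] at hz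
    obtain ⟨t, ht, hzt⟩ := hcon z hz
    simp only [Finset.mem_biUnion]
    exact ⟨t, ht, by simp [Finset.mem_filter, Submodule.mem_inf, hz, hzt]⟩
  have hcount : ∀ (W : Submodule (ZMod p) (Fin m → ZMod p)),
      (Finset.univ.filter (· ∈ W)).card = p ^ finrank (ZMod p) W := by
    intro W
    rw [← Fintype.card_subtype]
    rw [card_eq_pow_finrank (K := ZMod p) (V := ↥W), ZMod.card]
  have h2 : ∀ t ∈ 𝒯, p ^ finrank (ZMod p) ↥(S ⊓ t) ≤ p ^ (finrank (ZMod p) S - 1) := by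
    intro t ht
    have hlt : S ⊓ t < S := lt_of_le_of_ne inf_le_left
      (fun he => h t ht (inf_eq_left.mp he))
    have := Submodule.finrank_lt_finrank_of_lt hlt
    exact Nat.pow_le_pow_right (Fact.out (p := p.Prime)).pos (by omega)
  have hmain : p ^ finrank (ZMod p) S ≤ 𝒯.card * p ^ (finrank (ZMod p) S - 1) := by
    calc p ^ finrank (ZMod p) S = (Finset.univ.filter (· ∈ S)).card := (hcount S).symm
      _ ≤ (𝒯.biUnion (fun t => Finset.univ.filter (· ∈ S ⊓ t))).card :=
          Finset.card_le_card hsub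
      _ ≤ ∑ t ∈ 𝒯, (Finset.univ.filter (· ∈ S ⊓ t)).card := Finset.card_biUnion_le
      _ = ∑ t ∈ 𝒯, p ^ finrank (ZMod p) ↥(S ⊓ t) := by
          exact Finset.sum_congr rfl fun t _ => hcount _
      _ ≤ 𝒯.card * p ^ (finrank (ZMod p) S - 1) := by
          simpa using Finset.sum_le_card_nsmul 𝒯 _ _ h2
  have hfin : p ^ finrank (ZMod p) S = p * p ^ (finrank (ZMod p) S - 1) := by
    conv_lhs => rw [show finrank (ZMod p) S = (finrank (ZMod p) S - 1) + 1 by omega]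
    ring
  rw [hfin] at hmain
  have hp0 : 0 < p ^ (finrank (ZMod p) S - 1) :=
    pow_pos (Fact.out (p := p.Prime)).pos _
  nlinarith [hmain, hcard, hp0]
end part2

section blocks
variable {p : ℕ} [Fact p.Prime]

lemma param_inj {k : ℕ} (hkp : k < p) :
    Function.Injective (fun i : Fin k => ((i : ℕ) : ZMod p)) := by
  intro i j hij
  have h2 : ((i : ℕ) : ZMod p).val = ((j : ℕ) : ZMod p).val := congrArg ZMod.val hij
  rw [ZMod.val_natCast_of_lt (lt_trans i.2 hkp),
    ZMod.val_natCast_of_lt (lt_trans j.2 hkp)] at h2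
  exact Fin.ext h2

lemma blockGeneric {k ℓ : ℕ} (hℓ : 0 < ℓ) (hℓk : ℓ ≤ k) (hkp : k < p) :
    ∃ w : Fin k → (Fin ℓ → ZMod p),
      (∀ i, w i ≠ 0) ∧
      (∀ I : Finset (Fin k), I.card = ℓ → span (ZMod p) (w '' ↑I) = ⊤) := by
  refine ⟨fun i => mom ℓ ((i : ℕ) : ZMod p), ?_, ?_⟩
  · intro i hi
    have h0 := congrFun hi ⟨0, hℓ⟩
    simp [mom] at h0
  · intro I hI
    apply Submodule.eq_top_of_finrank_eq
    rw [finrank_span_image _ _ (li_mom_le _ (param_inj hkp) hℓk I hI.le), hI,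
      Module.finrank_fin_fun]

lemma blockDegenerate {k ℓ : ℕ} (hℓ : 2 ≤ ℓ) (hk : ℓ < k) (hp : 2 ^ k + k < p)
    (J : Finset (Fin k)) (hJ : J.card = ℓ) :
    ∃ w : Fin k → (Fin ℓ → ZMod p),
      (∀ i, w i ≠ 0) ∧
      (∀ I : Finset (Fin k), I.card = ℓ → I ≠ J → span (ZMod p) (w '' ↑I) = ⊤) ∧
      finrank (ZMod p) ↥(span (ZMod p) (w '' ↑J)) = ℓ - 1 := by
  classical
  have hkp : k < p := lt_of_le_of_lt (Nat.le_add_left k _) hp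
  set a : Fin k → ZMod p := fun i => ((i : ℕ) : ZMod p) with ha_def
  have ha : Function.Injective a := param_inj hkp
  set M : Fin k → (Fin (ℓ+1) → ZMod p) := fun i => mom (ℓ+1) (a i) with hM
  have hM0 : ∀ i, M i ≠ 0 := by
    intro i hi
    have h0 := congrFun hi ⟨0, by omega⟩
    simp [hM, mom] at h0
  have hrank : ∀ I : Finset (Fin k), I.card ≤ ℓ + 1 →
      finrank (ZMod p) (span (ZMod p) (M '' ↑I)) = I.card := by
    intro I hI
    exact finrank_span_image _ _ (li_mom_le a ha (by omega) I hI)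
  have htop : ∀ I : Finset (Fin k), ℓ + 1 ≤ I.card → span (ZMod p) (M '' ↑I) = ⊤ := by
    intro I hI
    obtain ⟨T, hTI, hT⟩ := Finset.exists_subset_card_eq hI
    apply Submodule.eq_top_of_finrank_eq
    have h1 : finrank (ZMod p) (span (ZMod p) (M '' ↑T)) = ℓ + 1 := by
      rw [hrank T hT.le, hT]
    have h2 : finrank (ZMod p) (span (ZMod p) (M '' ↑T))
        ≤ finrank (ZMod p) (span (ZMod p) (M '' ↑I)) :=
      Submodule.finrank_mono (span_mono (Set.image_mono hTI))
    have h3 : finrank (ZMod p) (span (ZMod p) (M '' ↑I))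
        ≤ finrank (ZMod p) (Fin (ℓ+1) → ZMod p) := Submodule.finrank_le _
    rw [Module.finrank_fin_fun] at h3 ⊢
    omega
  have hproper : ∀ I : Finset (Fin k), I.card = ℓ → span (ZMod p) (M '' ↑I) ≠ ⊤ := by
    intro I hI hcon
    have h1 := hrank I (by omega)
    rw [hcon, finrank_top, Module.finrank_fin_fun, hI] at h1
    omega
  set 𝒯 : Finset (Submodule (ZMod p) (Fin (ℓ+1) → ZMod p)) :=
    ((Finset.univ : Finset (Finset (Fin k))).filter (fun I => I.card = ℓ ∧ I ≠ J)).image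
      (fun I : Finset (Fin k) => span (ZMod p) (M '' (I : Set (Fin k)))) with h𝒯
  have h𝒯card : 𝒯.card < p := by
    have h1 : 𝒯.card ≤ 2 ^ k := by
      calc 𝒯.card ≤ ((Finset.univ : Finset (Finset (Fin k))).filter
            (fun I => I.card = ℓ ∧ I ≠ J)).card := Finset.card_image_le
        _ ≤ (Finset.univ : Finset (Finset (Fin k))).card := Finset.card_filter_le _ _
        _ = 2 ^ k := by rw [Finset.card_univ, Fintype.card_finset, Fintype.card_fin]
    exact lt_of_le_of_lt (h1.trans (Nat.le_add_right _ k)) hp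
  have h𝒯mem : ∀ t ∈ 𝒯, ¬ span (ZMod p) (M '' ↑J) ≤ t := by
    intro t ht
    simp only [h𝒯, Finset.mem_image, Finset.mem_filter, Finset.mem_univ, true_and] at ht
    obtain ⟨I, ⟨hIcard, hIJ⟩, rfl⟩ := ht
    intro hle
    have hsub : span (ZMod p) (M '' ↑(I ∪ J)) ≤ span (ZMod p) (M '' ↑I) := by
      rw [Finset.coe_union, Set.image_union, span_union]
      exact sup_le le_rfl hle
    obtain ⟨x, hxJ, hxI⟩ : ∃ x ∈ J, x ∉ I := by
      by_contra hc
      push_neg at hc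
      exact hIJ (Finset.eq_of_subset_of_card_le hc (by omega)).symm
    have hcard : ℓ + 1 ≤ (I ∪ J).card := by
      calc ℓ + 1 = (insert x I).card := by
            rw [Finset.card_insert_of_notMem hxI, hIcard]
        _ ≤ (I ∪ J).card := Finset.card_le_card (by
            intro y hy
            rcases Finset.mem_insert.mp hy with h | h
            · exact Finset.mem_union_right _ (h ▸ hxJ)
            · exact Finset.mem_union_left _ h)
    exact hproper I hIcard (top_le_iff.mp ((htop _ hcard) ▸ hsub))
  have hJrank : 0 < finrank (ZMod p) (span (ZMod p) (M '' ↑J)) := by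
    rw [hrank J (by omega), hJ]; omega
  obtain ⟨z, hzJ, hz⟩ := exists_avoiding _ 𝒯 hJrank h𝒯mem h𝒯card
  have hzI : ∀ I : Finset (Fin k), I.card = ℓ → I ≠ J →
      z ∉ span (ZMod p) (M '' ↑I) := by
    intro I h1 h2
    exact hz _ (Finset.mem_image_of_mem _ (by simp [h1, h2]))
  obtain ⟨x₀, hx₀⟩ : ∃ x : Fin k, x ∉ J := by
    by_contra hc
    push_neg at hc
    have h1 : (Finset.univ : Finset (Fin k)).card ≤ J.card :=
      Finset.card_le_card (fun y _ => hc y)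
    rw [Finset.card_univ, Fintype.card_fin, hJ] at h1
    omega
  -- a helper to produce I containing i, of card ℓ, different from J
  have hInear : ∀ i : Fin k, ∃ I : Finset (Fin k), i ∈ I ∧ I.card = ℓ ∧ I ≠ J := by
    intro i
    by_cases hiJ : i ∈ J
    · obtain ⟨y, hyJ, hyi⟩ := Finset.exists_mem_ne (by omega : 1 < J.card) i
      have hx₀e : x₀ ∉ J.erase y := fun h => hx₀ (Finset.mem_of_mem_erase h)
      refine ⟨insert x₀ (J.erase y), ?_, ?_, ?_⟩
      · exact Finset.mem_insert_of_mem (Finset.mem_erase.mpr ⟨Ne.symm hyi, hiJ⟩)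
      · rw [Finset.card_insert_of_notMem hx₀e, Finset.card_erase_of_mem hyJ, hJ]
        omega
      · exact fun he => hx₀ (he ▸ Finset.mem_insert_self x₀ _)
    · obtain ⟨I, hsub1, -, hcard1⟩ := Finset.exists_subsuperset_card_eq
        (Finset.subset_univ {i}) (by rw [Finset.card_singleton]; omega : ({i} : Finset (Fin k)).card ≤ ℓ)
        (by rw [Finset.card_univ, Fintype.card_fin]; omega)
      exact ⟨I, hsub1 (Finset.mem_singleton_self i), hcard1,
        fun he => hiJ (he ▸ hsub1 (Finset.mem_singleton_self i))⟩
  have hzne : z ≠ 0 := by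
    obtain ⟨I₁, hi1, hcard1, hne1⟩ := hInear x₀
    intro h0
    exact hzI I₁ hcard1 (fun he => hx₀ (he ▸ hi1)) (h0 ▸ (span (ZMod p) _).zero_mem)
  set L : Submodule (ZMod p) (Fin (ℓ+1) → ZMod p) := span (ZMod p) {z} with hL
  have hLJ : L ≤ span (ZMod p) (M '' ↑J) := by
    rw [hL, span_le]
    simpa using hzJ
  have hLrank : finrank (ZMod p) L = 1 := finrank_span_singleton hzne
  have hQrank : finrank (ZMod p) ((Fin (ℓ+1) → ZMod p) ⧸ L) = ℓ := by
    have hq := Submodule.finrank_quotient_add_finrank L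
    rw [hLrank, Module.finrank_fin_fun] at hq
    omega
  obtain ⟨e⟩ : Nonempty (((Fin (ℓ+1) → ZMod p) ⧸ L) ≃ₗ[ZMod p] (Fin ℓ → ZMod p)) := by
    apply FiniteDimensional.nonempty_linearEquiv_of_finrank_eq
    rw [hQrank, Module.finrank_fin_fun]
  set f : (Fin (ℓ+1) → ZMod p) →ₗ[ZMod p] (Fin ℓ → ZMod p) := e.toLinearMap.comp L.mkQ with hf
  have hspan : ∀ I : Finset (Fin k), span (ZMod p) ((fun i => f (M i)) '' (I : Set (Fin k)))
      = Submodule.map f (span (ZMod p) (M '' (I : Set (Fin k)))) := by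
    intro I
    rw [← Submodule.span_image]
    congr 1
    rw [Set.image_image]
  have hmapbot : Submodule.map L.mkQ L = ⊥ := by
    rw [eq_bot_iff]
    rintro x hx
    obtain ⟨y, hy, rfl⟩ := hx
    simp only [Submodule.mkQ_apply, Submodule.mem_bot]
    exact (Submodule.Quotient.mk_eq_zero L).mpr hy
  have hetop : ∀ X : Submodule (ZMod p) ((Fin (ℓ+1) → ZMod p) ⧸ L),
      X = ⊤ → Submodule.map e.toLinearMap X = ⊤ := by
    intro X hX
    rw [hX, Submodule.map_top, LinearMap.range_eq_top]
    exact e.surjective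
  refine ⟨fun i => f (M i), ?_, ?_, ?_⟩
  · -- nonzero
    intro i h0
    have h1 : L.mkQ (M i) = 0 := by
      have h2 := congrArg e.symm h0
      rw [hf] at h2
      simpa using h2
    have h2 : M i ∈ L := (Submodule.Quotient.mk_eq_zero L).mp h1
    rw [hL, Submodule.mem_span_singleton] at h2
    obtain ⟨c, hc⟩ := h2
    have hcne : c ≠ 0 := by
      rintro rfl
      rw [zero_smul] at hc
      exact hM0 i hc.symm
    obtain ⟨I₂, hi2, hcard2, hne2⟩ := hInear i
    apply hzI I₂ hcard2 hne2
    have hMi : M i ∈ span (ZMod p) (M '' (I₂ : Set (Fin k))) :=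
      subset_span (Set.mem_image_of_mem M hi2)
    have : z = c⁻¹ • M i := by
      rw [← hc, smul_smul, inv_mul_cancel₀ hcne, one_smul]
    rw [this]
    exact Submodule.smul_mem _ _ hMi
  · -- full span
    intro I hI hIJ
    rw [hspan, hf, Submodule.map_comp]
    have hsup : span (ZMod p) (M '' (I : Set (Fin k))) ⊔ L = ⊤ := by
      apply Submodule.eq_top_of_finrank_eq
      have hlt : span (ZMod p) (M '' (I : Set (Fin k)))
          < span (ZMod p) (M '' (I : Set (Fin k))) ⊔ L := by
        refine lt_of_le_of_ne le_sup_left (fun he => ?_)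
        have hzm : z ∈ span (ZMod p) (M '' (I : Set (Fin k))) ⊔ L :=
          (le_sup_right : L ≤ _) (subset_span rfl)
        rw [← he] at hzm
        exact hzI I hI hIJ hzm
      have h1 := hrank I (by omega)
      have h2 := Submodule.finrank_lt_finrank_of_lt hlt
      have h3 : finrank (ZMod p) ↥(span (ZMod p) (M '' (I : Set (Fin k))) ⊔ L)
          ≤ finrank (ZMod p) (Fin (ℓ+1) → ZMod p) := Submodule.finrank_le _
      rw [Module.finrank_fin_fun] at h3 ⊢
      omega
    have hmk : Submodule.map L.mkQ (span (ZMod p) (M '' (I : Set (Fin k)))) = ⊤ := by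
      have : Submodule.map L.mkQ (span (ZMod p) (M '' (I : Set (Fin k))) ⊔ L)
          = Submodule.map L.mkQ (span (ZMod p) (M '' (I : Set (Fin k)))) := by
        rw [Submodule.map_sup, hmapbot, sup_bot_eq]
      rw [← this, hsup, Submodule.map_top, Submodule.range_mkQ]
    rw [hmk]
    exact hetop ⊤ rfl
  · -- degenerate rank
    rw [hspan, hf, Submodule.map_comp]
    rw [LinearEquiv.finrank_map_eq]
    have hrn := LinearMap.finrank_range_add_finrank_ker
      (L.mkQ.comp (span (ZMod p) (M '' (J : Set (Fin k)))).subtype)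
    rw [LinearMap.range_comp, Submodule.range_subtype, LinearMap.ker_comp,
      Submodule.ker_mkQ] at hrn
    have hco : finrank (ZMod p)
        ↥(Submodule.comap (span (ZMod p) (M '' (J : Set (Fin k)))).subtype L) = 1 := by
      rw [(Submodule.comapSubtypeEquivOfLe hLJ).finrank_eq, hLrank]
    rw [hco] at hrn
    have hJr := hrank J (by omega)
    rw [hJ] at hJr
    rw [hJr] at hrn
    omega

end blocks

theorem stmt_13 (k ℓ : ℕ) (hℓ : 2 ≤ ℓ) (hk : ℓ < k) :
    ∃ p₀ : ℕ, ∀ 𝓘 : Finset (Finset (Fin k)), (∀ I ∈ 𝓘, I.card = ℓ) →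
      ∀ p : ℕ, p₀ ≤ p → p.Prime →
        ∃ V : Fin k → Submodule (ZMod p) (Fin (ℓ * Nat.choose k ℓ) → ZMod p),
          (∀ i, Module.finrank (ZMod p) (V i) = Nat.choose k ℓ) ∧
          (∀ I : Finset (Fin k), I.card = ℓ → I ∉ 𝓘 →
            Module.finrank (ZMod p) ↥(⨆ i ∈ I, V i) = ℓ * Nat.choose k ℓ) ∧
          (∀ I ∈ 𝓘,
            Module.finrank (ZMod p) ↥(⨆ i ∈ I, V i) = ℓ * Nat.choose k ℓ - 1) ∧
          (∀ I : Finset (Fin k), I.card = ℓ + 1 → (⨆ i ∈ I, V i) = ⊤) := by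
  classical
  refine ⟨2 ^ k + k + 1, ?_⟩
  intro 𝓘 h𝓘 p hp hprime
  haveI : Fact p.Prime := ⟨hprime⟩
  have hp2 : 2 ^ k + k < p := by omega
  have hd : 0 < Nat.choose k ℓ := Nat.choose_pos hk.le
  have hcardB : Fintype.card {J : Finset (Fin k) // J.card = ℓ} = Nat.choose k ℓ := by
    have h1 := Fintype.card_finset_len (α := Fin k) ℓ
    simpa using h1
  set B := {J : Finset (Fin k) // J.card = ℓ} with hB
  have hblocks : ∀ b : B, ∃ w : Fin k → (Fin ℓ → ZMod p),
      (∀ i, w i ≠ 0) ∧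
      (∀ I : Finset (Fin k), I.card = ℓ → I ≠ (b : Finset (Fin k)) →
        span (ZMod p) (w '' (I : Set (Fin k))) = ⊤) ∧
      ((b : Finset (Fin k)) ∈ 𝓘 →
        finrank (ZMod p)
          ↥(span (ZMod p) (w '' ((b : Finset (Fin k)) : Set (Fin k)))) = ℓ - 1) ∧
      ((b : Finset (Fin k)) ∉ 𝓘 →
        span (ZMod p) (w '' ((b : Finset (Fin k)) : Set (Fin k))) = ⊤) := by
    intro b
    by_cases hbI : (b : Finset (Fin k)) ∈ 𝓘
    · obtain ⟨w, h1, h2, h3⟩ := blockDegenerate hℓ hk hp2 (b : Finset (Fin k)) b.2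
      exact ⟨w, h1, h2, fun _ => h3, fun hc => absurd hbI hc⟩
    · obtain ⟨w, h1, h2⟩ := blockGeneric (p := p) (k := k) (by omega) hk.le (lt_of_le_of_lt (Nat.le_add_left k _) hp2)
      exact ⟨w, h1, fun I hI _ => h2 I hI, fun hmem => absurd hmem hbI,
        fun _ => h2 _ b.2⟩
  choose w hw0 hwtop hwdeg hwgen using hblocks
  set V₀ : Fin k → Submodule (ZMod p) (B → Fin ℓ → ZMod p) :=
    fun i => Submodule.pi Set.univ (fun b => span (ZMod p) {w b i}) with hV₀
  have hsup : ∀ I : Finset (Fin k), (⨆ i ∈ I, V₀ i)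
      = Submodule.pi Set.univ
          (fun b => span (ZMod p) (w b '' (I : Set (Fin k)))) := by
    intro I
    rw [hV₀, biSup_pi I (fun i b => span (ZMod p) {w b i})]
    congr 1
    funext b
    apply le_antisymm
    · exact iSup₂_le fun i hi => span_le.mpr
        (Set.singleton_subset_iff.mpr (subset_span (Set.mem_image_of_mem _ hi)))
    · rw [span_le]
      rintro x ⟨i, hi, rfl⟩
      exact (le_iSup₂_of_le i (Finset.mem_coe.mp hi) le_rfl :
        span (ZMod p) {w b i} ≤ ⨆ j ∈ I, span (ZMod p) {w b j}) (subset_span rfl)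
  obtain ⟨E⟩ : Nonempty ((B → Fin ℓ → ZMod p) ≃ₗ[ZMod p]
      (Fin (ℓ * Nat.choose k ℓ) → ZMod p)) := by
    apply FiniteDimensional.nonempty_linearEquiv_of_finrank_eq
    rw [Module.finrank_fin_fun, Module.finrank_pi_fintype]
    simp only [Module.finrank_fin_fun, Finset.sum_const, Finset.card_univ, smul_eq_mul]
    rw [hcardB, mul_comm]
  have hmapsup : ∀ I : Finset (Fin k),
      (⨆ i ∈ I, Submodule.map E.toLinearMap (V₀ i))
        = Submodule.map E.toLinearMap (⨆ i ∈ I, V₀ i) := by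
    intro I
    simp_rw [Submodule.map_iSup]
  have hEtop : Submodule.map E.toLinearMap ⊤ = ⊤ := by
    rw [Submodule.map_top, LinearMap.range_eq_top]
    exact E.surjective
  refine ⟨fun i => Submodule.map E.toLinearMap (V₀ i), ?_, ?_, ?_, ?_⟩
  · intro i
    rw [LinearEquiv.finrank_map_eq, hV₀]
    rw [finrank_pi_submodule]
    have h1 : ∀ b : B, finrank (ZMod p) (span (ZMod p) {w b i}) = 1 :=
      fun b => finrank_span_singleton (hw0 b i)
    rw [Finset.sum_congr rfl (fun b _ => h1 b)]
    simp [hcardB]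
    exact hcardB
  · intro I hI hI𝓘
    rw [hmapsup]
    have htop : (⨆ i ∈ I, V₀ i) = ⊤ := by
      rw [hsup]
      have hb : ∀ b : B, span (ZMod p) (w b '' (I : Set (Fin k))) = ⊤ := by
        intro b
        by_cases hbeq : (b : Finset (Fin k)) = I
        · have h2 := hwgen b (by rw [hbeq]; exact hI𝓘)
          rwa [hbeq] at h2
        · exact hwtop b I hI (fun he => hbeq he.symm)
      rw [show (fun b : B => span (ZMod p) (w b '' (I : Set (Fin k))))
        = fun _ => ⊤ from funext hb]
      exact Submodule.pi_top _
    rw [htop, hEtop, finrank_top, Module.finrank_fin_fun]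
  · intro I hI𝓘
    have hI : I.card = ℓ := h𝓘 I hI𝓘
    rw [hmapsup, LinearEquiv.finrank_map_eq, hsup, finrank_pi_submodule]
    set bI : B := ⟨I, hI⟩ with hbI
    have hsum := Finset.add_sum_erase Finset.univ
      (fun b : B => finrank (ZMod p) (span (ZMod p) (w b '' (I : Set (Fin k)))))
      (Finset.mem_univ bI)
    rw [← hsum]
    beta_reduce
    have hdeg : finrank (ZMod p)
        (span (ZMod p) (w bI '' (I : Set (Fin k)))) = ℓ - 1 := hwdeg bI hI𝓘
    have hoth : ∀ b ∈ Finset.univ.erase bI,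
        finrank (ZMod p) (span (ZMod p) (w b '' (I : Set (Fin k)))) = ℓ := by
      intro b hb
      have hne : I ≠ (b : Finset (Fin k)) :=
        fun he => (Finset.mem_erase.mp hb).1 (Subtype.ext he.symm)
      rw [hwtop b I hI hne, finrank_top, Module.finrank_fin_fun]
    rw [hdeg, Finset.sum_congr rfl hoth, Finset.sum_const, smul_eq_mul,
      Finset.card_erase_of_mem (Finset.mem_univ bI), Finset.card_univ, hcardB]
    have h2 : (Nat.choose k ℓ - 1) * ℓ = Nat.choose k ℓ * ℓ - ℓ := by rw [Nat.sub_mul, one_mul]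
    have h3 : ℓ ≤ Nat.choose k ℓ * ℓ := Nat.le_mul_of_pos_left ℓ hd
    have h4 : Nat.choose k ℓ * ℓ = ℓ * Nat.choose k ℓ := mul_comm _ _
    omega
  · intro I hI
    rw [hmapsup]
    have htop : (⨆ i ∈ I, V₀ i) = ⊤ := by
      rw [hsup]
      have hb : ∀ b : B, span (ZMod p) (w b '' (I : Set (Fin k))) = ⊤ := by
        intro b
        obtain ⟨x, hxI, hxb⟩ : ∃ x ∈ I, x ∉ (b : Finset (Fin k)) := by
          by_contra hc
          push_neg at hc
          have h1 : I.card ≤ (b : Finset (Fin k)).card := Finset.card_le_card hc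
          rw [hI, b.2] at h1
          omega
        obtain ⟨y, hyI, hyx⟩ := Finset.exists_mem_ne
          (by rw [hI]; omega : 1 < I.card) x
        have hxin : x ∈ I.erase y := Finset.mem_erase.mpr ⟨Ne.symm hyx, hxI⟩
        have hcard0 : (I.erase y).card = ℓ := by
          rw [Finset.card_erase_of_mem hyI, hI]
          omega
        have hne0 : I.erase y ≠ (b : Finset (Fin k)) := fun he => hxb (he ▸ hxin)
        have h1 := hwtop b (I.erase y) hcard0 hne0
        rw [eq_top_iff, ← h1]
        exact span_mono (Set.image_mono
          (Finset.coe_subset.mpr (Finset.erase_subset _ _)))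
      rw [show (fun b : B => span (ZMod p) (w b '' (I : Set (Fin k))))
        = fun _ => ⊤ from funext hb]
      exact Submodule.pi_top _
    rw [htop, hEtop]
end

section
/- In Füredi's delta-system lemma, the constant must be doubly exponentially small in k: for all integers m ≥ 2 and k ≥ 3, if α is a constant such that every finite family 𝓕 of k-element subsets of {1,...,n} (for every n) contains a k-partite subfamily 𝓕' of size at least α·|𝓕| satisfying (1) every pairwise intersection F_1 ∩ F_2 of distinct members of 𝓕' is the kernel of a sunflower with m petals inside 𝓕', and (3) there exists a family 𝓘 ⊆ 2^{[k]} \ {[k]} with π(I(F,𝓕')) = 𝓘 for every F ∈ 𝓕' (where π is the projection to the k parts), then α ≤ k! · 2^{-C(k,⌈k/2⌉)}, where C(k,⌈k/2⌉) is the central binomial coefficient. -/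
set_option maxHeartbeats 1000000



-- Auxiliary development for the construction.
namespace SF14

variable (k p : ℕ)

def tt : ℕ := (k+1)/2
def K : Finset ℕ := Finset.Icc 1 k
def B : Finset (Finset ℕ) := Finset.powersetCard (tt k) (K k)
abbrev ι := {S : Finset ℕ // S ∈ B k}
def C : ℕ := Nat.choose k (tt k)

lemma mem_K {i : ℕ} : i ∈ K k ↔ 1 ≤ i ∧ i ≤ k := by simp [K]

lemma card_K : (K k).card = k := by simp [K]

lemma card_iota : Fintype.card (ι k) = C k := by
  rw [Fintype.card_coe, B, Finset.card_powersetCard, card_K, C]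

lemma mem_B {S : Finset ℕ} (h : S ∈ B k) : S ⊆ K k ∧ S.card = tt k := by
  simpa [B, Finset.mem_powersetCard] using h

lemma tt_lt_k (hk : 3 ≤ k) : tt k < k := by
  simp only [tt]; omega

lemma tt_pos (hk : 3 ≤ k) : 0 < tt k := by simp only [tt]; omega

abbrev Word := Finset (ι k) × (ι k → Fin (p+1))

def mask (G : Finset (ι k)) (lam : ι k → Fin (p+1)) (i : ℕ) : ι k → Fin (p+1) :=
  fun S => if S ∈ G ∧ i ∈ S.1 then 0 else lam S

noncomputable def code : Word k p → ℕ := fun x => ((Fintype.equivFin (Word k p)) x : ℕ)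

lemma code_inj : Function.Injective (code k p) := by
  intro a b h
  have := Fin.val_injective h
  exact (Fintype.equivFin (Word k p)).injective this

noncomputable def felem (G : Finset (ι k)) (lam : ι k → Fin (p+1)) (i : ℕ) : ℕ :=
  code k p (G, mask k p G lam i) * (k+1) + i

lemma felem_eq {G G' : Finset (ι k)} {lam lam' : ι k → Fin (p+1)} {i i' : ℕ}
    (hi : i ≤ k) (hi' : i' ≤ k)
    (h : felem k p G lam i = felem k p G' lam' i') :
    i = i' ∧ G = G' ∧ mask k p G lam i = mask k p G' lam' i' := by
  unfold felem at h
  have hii : i = i' := by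
    have h1 := congrArg (· % (k+1)) h
    simp only [mul_comm _ (k+1), Nat.mul_add_mod] at h1
    rwa [Nat.mod_eq_of_lt (by omega : i < k+1), Nat.mod_eq_of_lt (by omega : i' < k+1)] at h1
  subst hii
  have h2 : code k p (G, mask k p G lam i) = code k p (G', mask k p G' lam' i) := by
    have := Nat.add_right_cancel h
    exact Nat.eq_of_mul_eq_mul_right (by omega) this
  have := code_inj k p h2
  exact ⟨rfl, congrArg Prod.fst this, congrArg Prod.snd this⟩

noncomputable def FF (G : Finset (ι k)) (lam : ι k → Fin (p+1)) : Finset ℕ :=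
  (K k).image (felem k p G lam)

lemma mem_FF {G lam x} : x ∈ FF k p G lam ↔ ∃ i ∈ K k, felem k p G lam i = x := by
  simp [FF]

lemma card_FF (G lam) : (FF k p G lam).card = k := by
  rw [FF, Finset.card_image_of_injOn, card_K]
  intro a ha b hb hab
  have ha' : a ≤ k := (Finset.mem_Icc.mp ha).2
  have hb' : b ≤ k := (Finset.mem_Icc.mp hb).2
  exact (felem_eq k p ha' hb' hab).1

lemma mask_eq_lam {G : Finset (ι k)} {lam lam' : ι k → Fin (p+1)}
    (hk : 3 ≤ k)
    (h : ∀ i ∈ K k, mask k p G lam i = mask k p G lam' i) : lam = lam' := by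
  funext S
  by_cases hSG : S ∈ G
  · -- pick i ∈ K \ S.1
    have hS := mem_B k S.2
    have : ¬ (K k ⊆ S.1) := by
      intro hsub
      have := Finset.card_le_card hsub
      rw [card_K, hS.2] at this
      exact absurd this (by have := tt_lt_k k hk; omega)
    obtain ⟨i, hiK, hiS⟩ := Finset.not_subset.mp this
    have := congrFun (h i hiK) S
    simpa [mask, hiS] using this
  · have h1 : (1 : ℕ) ∈ K k := by simp [K]; omega
    have := congrFun (h 1 h1) S
    simpa [mask, hSG] using this

lemma FF_inj {G G' : Finset (ι k)} {lam lam'} (hk : 3 ≤ k)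
    (h : FF k p G lam = FF k p G' lam') : G = G' ∧ lam = lam' := by
  have key : ∀ i ∈ K k, G = G' ∧ mask k p G lam i = mask k p G' lam' i := by
    intro i hi
    have hx : felem k p G lam i ∈ FF k p G' lam' := by
      rw [← h, mem_FF]; exact ⟨i, hi, rfl⟩
    rw [mem_FF] at hx
    obtain ⟨i', hi', he⟩ := hx
    have hi'2 : i' ≤ k := (Finset.mem_Icc.mp hi').2
    have hi2 : i ≤ k := (Finset.mem_Icc.mp hi).2
    obtain ⟨h1, h2, h3⟩ := felem_eq k p hi'2 hi2 he
    subst h1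
    exact ⟨h2.symm, h3.symm⟩
  have h1 : (1:ℕ) ∈ K k := by simp [K]; omega
  have hGG : G = G' := (key 1 h1).1
  subst hGG
  exact ⟨rfl, mask_eq_lam k p hk (fun i hi => (key i hi).2)⟩

lemma FF_disjoint {G G' : Finset (ι k)} {lam lam'} (h : G ≠ G') :
    FF k p G lam ∩ FF k p G' lam' = ∅ := by
  rw [Finset.eq_empty_iff_forall_notMem]
  intro x hx
  rw [Finset.mem_inter, mem_FF, mem_FF] at hx
  obtain ⟨⟨i, hi, he⟩, ⟨i', hi', he'⟩⟩ := hx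
  have := felem_eq k p (Finset.mem_Icc.mp hi).2 (Finset.mem_Icc.mp hi').2 (he.trans he'.symm)
  exact h this.2.1

def Ag (G : Finset (ι k)) (lam lam' : ι k → Fin (p+1)) : Finset ℕ :=
  (K k).filter (fun i => ∀ T : ι k, lam T ≠ lam' T → T ∈ G ∧ i ∈ T.1)

lemma felem_eq_on_Ag {G lam lam'} {i : ℕ} (hi : i ∈ Ag k p G lam lam') :
    felem k p G lam i = felem k p G lam' i := by
  rw [Ag, Finset.mem_filter] at hi
  unfold felem
  have hm : mask k p G lam i = mask k p G lam' i := by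
    funext S
    by_cases hS : lam S = lam' S
    · simp [mask, hS]
    · have := hi.2 S hS
      simp [mask, this.1, this.2]
  rw [hm]

lemma inter_FF {G : Finset (ι k)} {lam lam'} :
    FF k p G lam ∩ FF k p G lam' = (Ag k p G lam lam').image (felem k p G lam) := by
  ext x
  rw [Finset.mem_inter, mem_FF, mem_FF, Finset.mem_image]
  constructor
  · rintro ⟨⟨i, hi, he⟩, ⟨i', hi', he'⟩⟩
    obtain ⟨h1, _, h3⟩ := felem_eq k p (Finset.mem_Icc.mp hi).2 (Finset.mem_Icc.mp hi').2
      (he.trans he'.symm)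
    subst h1
    refine ⟨i, ?_, he⟩
    rw [Ag, Finset.mem_filter]
    refine ⟨hi, fun T hT => ?_⟩
    by_contra hc
    have := congrFun h3 T
    simp only [mask] at this
    push_neg at hc
    by_cases hTG : T ∈ G
    · by_cases hiT : i ∈ T.1
      · exact hc hTG hiT
      · simp [hTG, hiT] at this; exact hT this
    · simp [hTG] at this; exact hT this
  · rintro ⟨i, hi, he⟩
    have hiK : i ∈ K k := (Finset.mem_filter.mp hi).1
    exact ⟨⟨i, hiK, he⟩, ⟨i, hiK, (felem_eq_on_Ag k p hi).symm.trans he⟩⟩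

noncomputable def Fam : Finset (Finset ℕ) :=
  Finset.univ.image (fun w : Word k p => FF k p w.1 w.2)

lemma FF_injective (hk : 3 ≤ k) :
    Function.Injective (fun w : Word k p => FF k p w.1 w.2) := by
  intro a b h
  obtain ⟨h1, h2⟩ := FF_inj k p hk h
  exact Prod.ext h1 h2

lemma card_Fam (hk : 3 ≤ k) : (Fam k p).card = 2^(C k) * (p+1)^(C k) := by
  rw [Fam, Finset.card_image_of_injective _ (FF_injective k p hk), Finset.card_univ,
    Fintype.card_prod, Fintype.card_finset, Fintype.card_fun, card_iota, Fintype.card_fin]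

lemma partite {π : ℕ → ℕ} {F : Finset ℕ} (hcard : F.card = k)
    (h : ∀ i ∈ Finset.Icc 1 k, (F.filter (fun x => π x = i)).card = 1) :
    (∀ x ∈ F, π x ∈ K k) ∧ Set.InjOn π F := by
  have hdisj : ((Finset.Icc 1 k : Finset ℕ) : Set ℕ).PairwiseDisjoint
      (fun i => F.filter (fun x => π x = i)) := by
    intro a _ b _ hab
    simp only [Function.onFun, Finset.disjoint_left, Finset.mem_filter]
    rintro x ⟨_, hxa⟩ ⟨_, hxb⟩
    exact hab (hxa ▸ hxb ▸ rfl)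
  have hb : (Finset.Icc 1 k).biUnion (fun i => F.filter (fun x => π x = i)) = F := by
    apply Finset.eq_of_subset_of_card_le
    · intro x hx
      rw [Finset.mem_biUnion] at hx
      obtain ⟨i, _, hx⟩ := hx
      exact (Finset.mem_filter.mp hx).1
    · rw [Finset.card_biUnion (fun a ha b hb hab => hdisj ha hb hab)]
      rw [Finset.sum_congr rfl h, Finset.sum_const, Nat.card_Icc]
      simp [hcard]
  have hmem : ∀ x ∈ F, π x ∈ Finset.Icc 1 k := by
    intro x hx
    rw [← hb, Finset.mem_biUnion] at hx
    obtain ⟨i, hi, hx⟩ := hx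
    rw [Finset.mem_filter] at hx
    rwa [hx.2]
  constructor
  · intro x hx
    simpa [K] using hmem x hx
  · intro x hx y hy hxy
    replace hx : x ∈ F := hx
    replace hy : y ∈ F := hy
    have hpx : π x ∈ Finset.Icc 1 k := hmem x hx
    have h1 := h (π x) hpx
    rw [Finset.card_eq_one] at h1
    obtain ⟨a, ha⟩ := h1
    have hxa : x ∈ F.filter (fun z => π z = π x) := by simp [hx]
    have hya : y ∈ F.filter (fun z => π z = π x) := by simp [hy, hxy]
    rw [ha, Finset.mem_singleton] at hxa hya
    rw [hxa, hya]

lemma main_count (hk : 3 ≤ k) (𝓕' : Finset (Finset ℕ)) (hsub : 𝓕' ⊆ Fam k p) (π : ℕ → ℕ)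
    (hπ : ∀ F ∈ 𝓕', ∀ i ∈ Finset.Icc 1 k, (F.filter (fun x => π x = i)).card = 1)
    (𝓘 : Finset (Finset ℕ))
    (h𝓘 : ∀ F ∈ 𝓕', (𝓕'.erase F).image (fun F' => (F ∩ F').image π) = 𝓘) :
    𝓕'.card ≤ k.factorial * (p+1)^(C k) + 2^(C k) * (C k * (p+1)^(C k - 1)) := by
  classical
  set W : Finset (Word k p) := Finset.univ.filter (fun w => FF k p w.1 w.2 ∈ 𝓕') with hW
  have hWmem : ∀ w : Word k p, w ∈ W ↔ FF k p w.1 w.2 ∈ 𝓕' := by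
    intro w; simp [hW]
  -- card transfer
  have hcard' : 𝓕'.card = W.card := by
    have himg : W.image (fun w => FF k p w.1 w.2) = 𝓕' := by
      apply Finset.Subset.antisymm
      · intro F hF
        rw [Finset.mem_image] at hF
        obtain ⟨w, hw, rfl⟩ := hF
        exact (hWmem w).mp hw
      · intro F hF
        have := hsub hF
        rw [Fam, Finset.mem_image] at this
        obtain ⟨w, _, rfl⟩ := this
        exact Finset.mem_image_of_mem _ ((hWmem w).mpr hF)
    rw [← himg, Finset.card_image_of_injective _ (FF_injective k p hk)]

  -- basic facts about members of 𝓕'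
  have hmemFam : ∀ F ∈ 𝓕', ∃ w : Word k p, FF k p w.1 w.2 = F := by
    intro F hF
    have := hsub hF
    rw [Fam, Finset.mem_image] at this
    obtain ⟨w, _, hw⟩ := this
    exact ⟨w, hw⟩
  have hcardk : ∀ F ∈ 𝓕', F.card = k := by
    intro F hF
    obtain ⟨w, hw⟩ := hmemFam F hF
    rw [← hw]; exact card_FF k p _ _
  have hπK : ∀ F ∈ 𝓕', ∀ x ∈ F, π x ∈ K k :=
    fun F hF => (partite k (hcardk F hF) (hπ F hF)).1
  have hπinj : ∀ F ∈ 𝓕', Set.InjOn π (F : Set ℕ) :=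
    fun F hF => (partite k (hcardk F hF) (hπ F hF)).2
  have hpat1 : ∀ F ∈ 𝓕', ∀ F' ∈ 𝓕', F' ≠ F → (F ∩ F').image π ∈ 𝓘 := by
    intro F hF F' hF' hne
    rw [← h𝓘 F hF]
    exact Finset.mem_image_of_mem _ (Finset.mem_erase.mpr ⟨hne, hF'⟩)
  have hpat2 : ∀ F ∈ 𝓕', ∀ J ∈ 𝓘, ∃ F' ∈ 𝓕', F' ≠ F ∧ (F ∩ F').image π = J := by
    intro F hF J hJ
    rw [← h𝓘 F hF, Finset.mem_image] at hJ
    obtain ⟨F', hF', hJ⟩ := hJ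
    rw [Finset.mem_erase] at hF'
    exact ⟨F', hF'.2, hF'.1, hJ⟩
  -- facts about the projection of a fixed member
  have hrho : ∀ (G : Finset (ι k)) (lam : ι k → Fin (p+1)), (G, lam) ∈ W →
      Set.InjOn (π ∘ felem k p G lam) (K k : Set ℕ) ∧
      ∀ i ∈ K k, (π ∘ felem k p G lam) i ∈ K k := by
    intro G lam hWlam
    have hF : FF k p G lam ∈ 𝓕' := (hWmem _).mp hWlam
    have hfel : ∀ i ∈ K k, felem k p G lam i ∈ FF k p G lam :=
      fun i hi => (mem_FF k p).mpr ⟨i, hi, rfl⟩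
    constructor
    · intro i hi j hj hij
      have hi' : i ∈ K k := hi
      have hj' : j ∈ K k := hj
      have h1 := hπinj _ hF (hfel i hi') (hfel j hj') hij
      exact (felem_eq k p ((mem_K k).mp hi').2 ((mem_K k).mp hj').2 h1).1
    · intro i hi
      exact hπK _ hF _ (hfel i hi)
  -- Step B : a good class is determined by the pattern
  have stepB : ∀ (G : Finset (ι k)) (lam : ι k → Fin (p+1)), (G, lam) ∈ W →
      (∀ S ∈ G, ∃ lam', (G, lam') ∈ W ∧ lam' ≠ lam ∧ ∀ T : ι k, T ≠ S → lam' T = lam T) →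
      G = Finset.univ.filter
        (fun S : ι k => S.1.image (π ∘ felem k p G lam) ∈ 𝓘) := by
    intro G lam hWlam hgood
    have hF : FF k p G lam ∈ 𝓕' := (hWmem _).mp hWlam
    obtain ⟨hρinj, hρK⟩ := hrho G lam hWlam
    apply Finset.Subset.antisymm
    · intro S hSG
      rw [Finset.mem_filter]
      refine ⟨Finset.mem_univ _, ?_⟩
      obtain ⟨lam', hW', hne', hag⟩ := hgood S hSG
      have hF' : FF k p G lam' ∈ 𝓕' := (hWmem _).mp hW'
      have hFne : FF k p G lam' ≠ FF k p G lam := fun h => hne' (FF_inj k p hk h).2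
      have hAg : Ag k p G lam lam' = S.1 := by
        ext i
        rw [Ag, Finset.mem_filter]
        constructor
        · rintro ⟨hiK, hall⟩
          have hlS : lam S ≠ lam' S := by
            intro h0
            apply hne'
            funext T
            by_cases hTS : T = S
            · rw [hTS]; exact h0.symm
            · exact hag T hTS
          exact (hall S hlS).2
        · intro hiS
          refine ⟨(mem_B k S.2).1 hiS, fun T hT => ?_⟩
          have hTS : T = S := by
            by_contra hc
            exact hT ((hag T hc).symm)
          subst hTS
          exact ⟨hSG, hiS⟩
      have hmem := hpat1 _ hF _ hF' hFne
      rwa [inter_FF, hAg, Finset.image_image] at hmem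
    · intro S hS
      rw [Finset.mem_filter] at hS
      obtain ⟨-, hJ⟩ := hS
      obtain ⟨F', hF', hne, hJeq⟩ := hpat2 _ hF _ hJ
      have hSsubK : (S.1 : Set ℕ) ⊆ (K k : Set ℕ) := by
        intro x hx; exact (mem_B k S.2).1 hx
      have hcardJ : (S.1.image (π ∘ felem k p G lam)).card = tt k := by
        rw [Finset.card_image_of_injOn (hρinj.mono hSsubK), (mem_B k S.2).2]
      obtain ⟨⟨G', lam''⟩, hw⟩ := hmemFam F' hF'
      subst hw
      dsimp only at hF' hne hJeq
      by_cases hGG : G' = G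
      · subst hGG
        have hne'' : lam'' ≠ lam := by
          intro h0; rw [h0] at hne; exact hne rfl
        rw [inter_FF, Finset.image_image] at hJeq
        set A := Ag k p G' lam lam'' with hA
        have hAK : (A : Set ℕ) ⊆ (K k : Set ℕ) := by
          intro x hx
          exact (Finset.mem_filter.mp hx).1
        have hcardA : A.card = tt k := by
          have h1 : (A.image (π ∘ felem k p G' lam)).card = A.card :=
            Finset.card_image_of_injOn (hρinj.mono hAK)
          rw [hJeq, hcardJ] at h1
          exact h1.symm
        have hDG : ∀ T : ι k, lam T ≠ lam'' T → T ∈ G' := by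
          intro T hT
          by_contra hTG
          have hAe : A = ∅ := by
            rw [Finset.eq_empty_iff_forall_notMem]
            intro i hi
            rw [hA, Ag, Finset.mem_filter] at hi
            exact hTG (hi.2 T hT).1
          rw [hAe, Finset.card_empty] at hcardA
          have := tt_pos k hk
          omega
        have hDuniq : ∀ T₁ T₂ : ι k, lam T₁ ≠ lam'' T₁ → lam T₂ ≠ lam'' T₂ → T₁ = T₂ := by
          intro T₁ T₂ h1 h2
          by_contra hc
          have hsub12 : A ⊆ T₁.1 ∩ T₂.1 := by
            intro i hi
            rw [hA, Ag, Finset.mem_filter] at hi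
            exact Finset.mem_inter.mpr ⟨(hi.2 T₁ h1).2, (hi.2 T₂ h2).2⟩
          have hne12 : T₁.1 ≠ T₂.1 := fun h => hc (Subtype.ext h)
          have hlt : (T₁.1 ∩ T₂.1).card < tt k := by
            rcases Nat.lt_or_ge (T₁.1 ∩ T₂.1).card (tt k) with h | h
            · exact h
            · exfalso
              have hsubT : T₁.1 ∩ T₂.1 ⊆ T₁.1 := Finset.inter_subset_left
              have heq1 : T₁.1 ∩ T₂.1 = T₁.1 :=
                Finset.eq_of_subset_of_card_le hsubT (by rw [(mem_B k T₁.2).2]; exact h)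
              have hsub' : T₁.1 ⊆ T₂.1 := by
                rw [← heq1]; exact Finset.inter_subset_right
              have := Finset.eq_of_subset_of_card_le hsub'
                (by rw [(mem_B k T₁.2).2, (mem_B k T₂.2).2])
              exact hne12 this
          have := Finset.card_le_card hsub12
          omega
        have hDex : ∃ T : ι k, lam T ≠ lam'' T := by
          by_contra hc
          push_neg at hc
          exact hne'' (funext fun T => (hc T).symm)
        obtain ⟨T₀, hT₀⟩ := hDex
        have hAT : A = T₀.1 := by
          ext i
          rw [hA, Ag, Finset.mem_filter]
          constructor
          · rintro ⟨-, hall⟩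
            exact (hall T₀ hT₀).2
          · intro hi
            refine ⟨(mem_B k T₀.2).1 hi, fun T hT => ?_⟩
            rw [hDuniq T T₀ hT hT₀]
            exact ⟨hDG T₀ hT₀, hi⟩
        have himg : T₀.1.image (π ∘ felem k p G' lam) = S.1.image (π ∘ felem k p G' lam) := by
          rw [← hAT]; exact hJeq
        have hST : S.1 = T₀.1 := by
          apply Finset.Subset.antisymm
          · intro a ha
            have h1 : (π ∘ felem k p G' lam) a ∈ T₀.1.image (π ∘ felem k p G' lam) := by
              rw [himg]; exact Finset.mem_image_of_mem _ ha
            rw [Finset.mem_image] at h1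
            obtain ⟨b, hb, hba⟩ := h1
            rwa [← hρinj ((mem_B k T₀.2).1 hb) ((mem_B k S.2).1 ha) hba]
          · intro a ha
            have h1 : (π ∘ felem k p G' lam) a ∈ S.1.image (π ∘ felem k p G' lam) := by
              rw [← himg]; exact Finset.mem_image_of_mem _ ha
            rw [Finset.mem_image] at h1
            obtain ⟨b, hb, hba⟩ := h1
            rwa [← hρinj ((mem_B k S.2).1 hb) ((mem_B k T₀.2).1 ha) hba]
        have : S = T₀ := Subtype.ext hST
        rw [this]
        exact hDG T₀ hT₀
      · -- different classes : empty intersection, contradiction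
        exfalso
        have h0 : FF k p G lam ∩ FF k p G' lam'' = ∅ :=
          FF_disjoint k p (fun h => hGG h.symm)
        rw [h0, Finset.image_empty] at hJeq
        rw [← hJeq, Finset.card_empty] at hcardJ
        have := tt_pos k hk
        omega

  -- Step A : classes that are not good are small
  have stepA : ∀ G : Finset (ι k),
      ¬ (∃ lam, (G, lam) ∈ W ∧ ∀ S ∈ G, ∃ lam', (G, lam') ∈ W ∧ lam' ≠ lam ∧
          ∀ T : ι k, T ≠ S → lam' T = lam T) →
      (W.filter (fun w => w.1 = G)).card ≤ C k * (p+1)^(C k - 1) := by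
    intro G hng
    push_neg at hng
    set Y := W.filter (fun w : Word k p => w.1 = G) with hYdef
    set Lone : ι k → Finset (Word k p) := fun S =>
      Y.filter (fun w => ¬ ∃ w' ∈ Y, w' ≠ w ∧
        Function.update w'.2 S 0 = Function.update w.2 S 0) with hLone
    have hcover : Y ⊆ G.biUnion Lone := by
      intro w hw
      have hw1 : w.1 = G := (Finset.mem_filter.mp hw).2
      have hwW : w ∈ W := (Finset.mem_filter.mp hw).1
      have hwW' : (G, w.2) ∈ W := by rw [← hw1]; exact hwW
      obtain ⟨S, hSG, hnop⟩ := hng w.2 hwW'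
      rw [Finset.mem_biUnion]
      refine ⟨S, hSG, ?_⟩
      rw [hLone, Finset.mem_filter]
      refine ⟨hw, ?_⟩
      rintro ⟨w', hw', hne, hupd⟩
      have hw'1 : w'.1 = G := (Finset.mem_filter.mp hw').2
      have hw'W : (G, w'.2) ∈ W := by rw [← hw'1]; exact (Finset.mem_filter.mp hw').1
      have hlamne : w'.2 ≠ w.2 := by
        intro h0
        apply hne
        have : w' = (w'.1, w'.2) := rfl
        rw [this, hw'1, h0, ← hw1]
      have hagree : ∀ T : ι k, T ≠ S → w'.2 T = w.2 T := by
        intro T hTS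
        have := congrFun hupd T
        rwa [Function.update_of_ne hTS, Function.update_of_ne hTS] at this
      obtain ⟨T, hTS, hTne⟩ := hnop w'.2 hw'W hlamne
      exact hTne (hagree T hTS)
    have hLcard : ∀ S : ι k, (Lone S).card ≤ (p+1)^(C k - 1) := by
      intro S
      have hinj : Set.InjOn (fun w : Word k p => (fun T : {T : ι k // T ≠ S} => w.2 T.1))
          (Lone S : Set (Word k p)) := by
        intro w1 h1 w2 h2 he
        by_contra hne
        have h1' : w1 ∈ Lone S := h1
        have h2' : w2 ∈ Lone S := h2
        have hupd : Function.update w2.2 S 0 = Function.update w1.2 S 0 := by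
          funext T
          by_cases hTS : T = S
          · subst hTS; simp
          · rw [Function.update_of_ne hTS, Function.update_of_ne hTS]
            exact (congrFun he ⟨T, hTS⟩ : _).symm
        have hl := (Finset.mem_filter.mp h1').2
        exact hl ⟨w2, Finset.filter_subset _ _ h2', fun h => hne h.symm, hupd⟩
      have hb := Finset.card_le_card_of_injOn _ (fun w _ => Finset.mem_univ
        (α := {T : ι k // T ≠ S} → Fin (p+1)) _) hinj
      rw [Finset.card_univ, Fintype.card_fun, Fintype.card_fin] at hb
      have hcs : Fintype.card {T : ι k // T ≠ S} = C k - 1 := by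
        have h2 := Fintype.card_subtype_compl (fun T : ι k => T = S)
        rw [Fintype.card_subtype_eq, card_iota] at h2
        exact h2
      rwa [hcs] at hb
    calc Y.card ≤ (G.biUnion Lone).card := Finset.card_le_card hcover
      _ ≤ ∑ S ∈ G, (Lone S).card := Finset.card_biUnion_le
      _ ≤ ∑ _S ∈ G, (p+1)^(C k - 1) := Finset.sum_le_sum (fun S _ => hLcard S)
      _ = G.card * (p+1)^(C k - 1) := by rw [Finset.sum_const, smul_eq_mul]
      _ ≤ C k * (p+1)^(C k - 1) := Nat.mul_le_mul_right _
          (by rw [← card_iota k]; exact Finset.card_le_univ G)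
  -- Step C : at most k! good classes
  have stepC : (Finset.univ.filter (fun G : Finset (ι k) =>
      ∃ lam, (G, lam) ∈ W ∧ ∀ S ∈ G, ∃ lam', (G, lam') ∈ W ∧ lam' ≠ lam ∧
        ∀ T : ι k, T ≠ S → lam' T = lam T)).card ≤ k.factorial := by
    have hsubemb : (Finset.univ.filter (fun G : Finset (ι k) =>
        ∃ lam, (G, lam) ∈ W ∧ ∀ S ∈ G, ∃ lam', (G, lam') ∈ W ∧ lam' ≠ lam ∧
          ∀ T : ι k, T ≠ S → lam' T = lam T)) ⊆
        (Finset.univ : Finset (↥(K k) ↪ ↥(K k))).image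
          (fun e => Finset.univ.filter (fun S : ι k =>
            S.1.image (fun i => if h : i ∈ K k then ((e ⟨i, h⟩ : ↥(K k)) : ℕ) else 0) ∈ 𝓘)) := by
      intro G hG
      rw [Finset.mem_filter] at hG
      obtain ⟨-, lam, hWlam, hgood⟩ := hG
      obtain ⟨hρinj, hρK⟩ := hrho G lam hWlam
      set e : ↥(K k) ↪ ↥(K k) :=
        ⟨fun i => ⟨(π ∘ felem k p G lam) i.1, hρK i.1 i.2⟩, by
          intro a b hab
          apply Subtype.ext
          exact hρinj a.2 b.2 (congrArg Subtype.val hab)⟩ with he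
      rw [Finset.mem_image]
      refine ⟨e, Finset.mem_univ _, ?_⟩
      have himgs : ∀ S : ι k,
          S.1.image (fun i => if h : i ∈ K k then ((e ⟨i, h⟩ : ↥(K k)) : ℕ) else 0)
            = S.1.image (π ∘ felem k p G lam) := by
        intro S
        apply Finset.image_congr
        intro i hi
        have hiK : i ∈ K k := (mem_B k S.2).1 hi
        show (if h : i ∈ K k then ((e ⟨i, h⟩ : ↥(K k)) : ℕ) else 0) = (π ∘ felem k p G lam) i
        rw [dif_pos hiK]
        rfl
      rw [stepB G lam hWlam hgood]
      apply Finset.filter_congr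
      intro S _
      exact iff_of_eq (congrArg (· ∈ 𝓘) (himgs S))
    calc _ ≤ _ := Finset.card_le_card hsubemb
      _ ≤ (Finset.univ : Finset (↥(K k) ↪ ↥(K k))).card := Finset.card_image_le
      _ = k.factorial := by
          rw [Finset.card_univ, Fintype.card_embedding_eq, Fintype.card_coe, card_K,
            Nat.descFactorial_self]

  -- assemble everything
  have hsplit : W.card = ∑ G ∈ (Finset.univ : Finset (Finset (ι k))),
      (W.filter (fun w => w.1 = G)).card :=
    Finset.card_eq_sum_card_fiberwise (fun w _ => Finset.mem_univ w.1)
  have hYle : ∀ G : Finset (ι k), (W.filter (fun w => w.1 = G)).card ≤ (p+1)^(C k) := by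
    intro G
    have hb := Finset.card_le_card_of_injOn
      (s := W.filter (fun w : Word k p => w.1 = G))
      (t := (Finset.univ : Finset (ι k → Fin (p+1)))) (fun w : Word k p => w.2)
      (fun w _ => Finset.mem_univ _) (by
        intro w1 h1 w2 h2 he
        have e1 : w1.1 = G := (Finset.mem_filter.mp h1).2
        have e2 : w2.1 = G := (Finset.mem_filter.mp h2).2
        exact Prod.ext (e1.trans e2.symm) he)
    rwa [Finset.card_univ, Fintype.card_fun, card_iota, Fintype.card_fin] at hb
  have hbadcard : (Finset.univ.filter (fun G : Finset (ι k) =>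
      ¬ ∃ lam, (G, lam) ∈ W ∧ ∀ S ∈ G, ∃ lam', (G, lam') ∈ W ∧ lam' ≠ lam ∧
        ∀ T : ι k, T ≠ S → lam' T = lam T)).card ≤ 2^(C k) := by
    calc _ ≤ (Finset.univ : Finset (Finset (ι k))).card := Finset.card_le_card
          (Finset.filter_subset _ _)
      _ = 2^(C k) := by rw [Finset.card_univ, Fintype.card_finset, card_iota]
  calc 𝓕'.card = W.card := hcard'
    _ = ∑ G ∈ (Finset.univ : Finset (Finset (ι k))), (W.filter (fun w => w.1 = G)).card := hsplit
    _ = (∑ G ∈ Finset.univ.filter (fun G : Finset (ι k) =>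
          ∃ lam, (G, lam) ∈ W ∧ ∀ S ∈ G, ∃ lam', (G, lam') ∈ W ∧ lam' ≠ lam ∧
            ∀ T : ι k, T ≠ S → lam' T = lam T), (W.filter (fun w => w.1 = G)).card)
        + ∑ G ∈ Finset.univ.filter (fun G : Finset (ι k) =>
          ¬ ∃ lam, (G, lam) ∈ W ∧ ∀ S ∈ G, ∃ lam', (G, lam') ∈ W ∧ lam' ≠ lam ∧
            ∀ T : ι k, T ≠ S → lam' T = lam T), (W.filter (fun w => w.1 = G)).card :=
        (Finset.sum_filter_add_sum_filter_not _ _ _).symm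
    _ ≤ k.factorial * (p+1)^(C k) + 2^(C k) * (C k * (p+1)^(C k - 1)) := by
        apply Nat.add_le_add
        · calc _ ≤ (Finset.univ.filter (fun G : Finset (ι k) =>
                ∃ lam, (G, lam) ∈ W ∧ ∀ S ∈ G, ∃ lam', (G, lam') ∈ W ∧ lam' ≠ lam ∧
                  ∀ T : ι k, T ≠ S → lam' T = lam T)).card * (p+1)^(C k) := by
                have := Finset.sum_le_card_nsmul (Finset.univ.filter (fun G : Finset (ι k) =>
                  ∃ lam, (G, lam) ∈ W ∧ ∀ S ∈ G, ∃ lam', (G, lam') ∈ W ∧ lam' ≠ lam ∧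
                    ∀ T : ι k, T ≠ S → lam' T = lam T))
                  (fun G => (W.filter (fun w => w.1 = G)).card) ((p+1)^(C k))
                  (fun G _ => hYle G)
                simpa [smul_eq_mul] using this
            _ ≤ k.factorial * (p+1)^(C k) := Nat.mul_le_mul_right _ stepC
        · calc _ ≤ (Finset.univ.filter (fun G : Finset (ι k) =>
                ¬ ∃ lam, (G, lam) ∈ W ∧ ∀ S ∈ G, ∃ lam', (G, lam') ∈ W ∧ lam' ≠ lam ∧
                  ∀ T : ι k, T ≠ S → lam' T = lam T)).card * (C k * (p+1)^(C k - 1)) := by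
                have := Finset.sum_le_card_nsmul (Finset.univ.filter (fun G : Finset (ι k) =>
                  ¬ ∃ lam, (G, lam) ∈ W ∧ ∀ S ∈ G, ∃ lam', (G, lam') ∈ W ∧ lam' ≠ lam ∧
                    ∀ T : ι k, T ≠ S → lam' T = lam T))
                  (fun G => (W.filter (fun w => w.1 = G)).card) (C k * (p+1)^(C k - 1))
                  (fun G hG => stepA G (Finset.mem_filter.mp hG).2)
                simpa [smul_eq_mul] using this
            _ ≤ 2^(C k) * (C k * (p+1)^(C k - 1)) := Nat.mul_le_mul_right _ hbadcard




lemma C_pos (hk : 3 ≤ k) : 1 ≤ C k := by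
  have := Nat.choose_pos (le_of_lt (tt_lt_k k hk))
  exact this

lemma Fam_side (hk : 3 ≤ k) :
    ∀ F ∈ Fam k p, F ⊆ Finset.Icc 1 ((Fam k p).sup (fun F => F.sup id)) ∧ F.card = k := by
  intro F hF
  constructor
  · intro x hx
    rw [Finset.mem_Icc]
    constructor
    · obtain ⟨w, -, rfl⟩ := Finset.mem_image.mp hF
      obtain ⟨i, hi, rfl⟩ := (mem_FF k p).mp hx
      have : 1 ≤ i := ((mem_K k).mp hi).1
      unfold felem
      omega
    · calc x = id x := rfl
        _ ≤ F.sup id := Finset.le_sup hx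
        _ ≤ (Fam k p).sup (fun F => F.sup id) := Finset.le_sup hF
  · obtain ⟨w, -, rfl⟩ := Finset.mem_image.mp hF
    exact card_FF k p _ _

end SF14

theorem stmt_14 (k m : ℕ) (hk : 3 ≤ k) (hm : 2 ≤ m) (α : ℝ)
    (H : ∀ (n : ℕ) (𝓕 : Finset (Finset ℕ)),
      (∀ F ∈ 𝓕, F ⊆ Finset.Icc 1 n ∧ F.card = k) →
      ∃ 𝓕' ⊆ 𝓕, α * (𝓕.card : ℝ) ≤ (𝓕'.card : ℝ) ∧
        ∃ π : ℕ → ℕ,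
          -- 𝓕' is k-partite with parts given by the fibres of π
          (∀ F ∈ 𝓕', ∀ i ∈ Finset.Icc 1 k, (F.filter (fun x => π x = i)).card = 1) ∧
          -- (1) each pairwise intersection is the kernel of an m-petal sunflower in 𝓕'
          (∀ F₁ ∈ 𝓕', ∀ F₂ ∈ 𝓕', F₁ ≠ F₂ → IsSunflowerKernel 𝓕' m (F₁ ∩ F₂)) ∧
          -- (3) all projected intersection patterns coincide
          (∃ 𝓘 : Finset (Finset ℕ),
            (∀ I ∈ 𝓘, I ⊆ Finset.Icc 1 k ∧ I ≠ Finset.Icc 1 k) ∧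
            ∀ F ∈ 𝓕',
              (𝓕'.erase F).image (fun F' => (F ∩ F').image π) = 𝓘)) :
    α ≤ (Nat.factorial k : ℝ) / 2 ^ (Nat.choose k ((k + 1) / 2)) := by
  have hCdef : SF14.C k = Nat.choose k ((k + 1) / 2) := rfl
  rw [← hCdef]
  set c := SF14.C k with hc
  have hc1 : 1 ≤ c := SF14.C_pos k hk
  -- the key estimate, for every p
  have key : ∀ p : ℕ, α ≤ (Nat.factorial k : ℝ) / 2 ^ c + (c : ℝ) / ((p : ℝ) + 1) := by
    intro p
    obtain ⟨𝓕', hsub, hineq, π, hπ, -, 𝓘, -, h𝓘⟩ :=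
      H ((SF14.Fam k p).sup (fun F => F.sup id)) (SF14.Fam k p) (SF14.Fam_side k p hk)
    have hcount := SF14.main_count k p hk 𝓕' hsub π hπ 𝓘 h𝓘
    have hcardF : ((SF14.Fam k p).card : ℝ) = 2 ^ c * ((p : ℝ) + 1) ^ c := by
      rw [SF14.card_Fam k p hk]
      push_cast
      ring
    have h2 : (𝓕'.card : ℝ) ≤ (Nat.factorial k : ℝ) * ((p : ℝ) + 1) ^ c
        + 2 ^ c * ((c : ℝ) * ((p : ℝ) + 1) ^ (c - 1)) := by
      have := hcount
      have hcast : ((k.factorial * (p+1)^(SF14.C k) + 2^(SF14.C k) * (SF14.C k * (p+1)^(SF14.C k - 1)) : ℕ) : ℝ)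
          = (Nat.factorial k : ℝ) * ((p : ℝ) + 1) ^ c + 2 ^ c * ((c : ℝ) * ((p : ℝ) + 1) ^ (c - 1)) := by
        push_cast
        ring
      calc (𝓕'.card : ℝ) ≤ _ := Nat.cast_le.mpr this
        _ = _ := hcast
    have hkey : α * (2 ^ c * ((p : ℝ) + 1) ^ c)
        ≤ (Nat.factorial k : ℝ) * ((p : ℝ) + 1) ^ c
          + 2 ^ c * ((c : ℝ) * ((p : ℝ) + 1) ^ (c - 1)) := by
      calc α * (2 ^ c * ((p : ℝ) + 1) ^ c) = α * ((SF14.Fam k p).card : ℝ) := by rw [hcardF]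
        _ ≤ (𝓕'.card : ℝ) := hineq
        _ ≤ _ := h2
    have hqpow : ((p : ℝ) + 1) ^ c = ((p : ℝ) + 1) ^ (c - 1) * ((p : ℝ) + 1) := by
      rw [← pow_succ]
      congr 1
      omega
    have hD : (0 : ℝ) < 2 ^ c * ((p : ℝ) + 1) ^ c := by positivity
    rw [← mul_le_mul_iff_of_pos_right hD]
    calc α * (2 ^ c * ((p : ℝ) + 1) ^ c) ≤ _ := hkey
      _ = ((Nat.factorial k : ℝ) / 2 ^ c + (c : ℝ) / ((p : ℝ) + 1))
          * (2 ^ c * ((p : ℝ) + 1) ^ c) := by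
        rw [hqpow]
        have h2ne : (2 : ℝ) ^ c ≠ 0 := by positivity
        have hpne : ((p : ℝ) + 1) ≠ 0 := by positivity
        field_simp
  -- let p → ∞
  apply le_of_forall_pos_le_add
  intro ε hε
  set p : ℕ := ⌈(c : ℝ) / ε⌉₊ with hp
  have h1 : (c : ℝ) / ε ≤ (p : ℝ) := Nat.le_ceil _
  have h2 : (c : ℝ) / ((p : ℝ) + 1) ≤ ε := by
    rw [div_le_iff₀ (by positivity)]
    have : (c : ℝ) ≤ ε * p := by
      rw [div_le_iff₀ hε] at h1
      linarith
    nlinarith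
  calc α ≤ (Nat.factorial k : ℝ) / 2 ^ c + (c : ℝ) / ((p : ℝ) + 1) := key p
    _ ≤ (Nat.factorial k : ℝ) / 2 ^ c + ε := by linarith
end

section
/- Let k ≥ 4 be an even integer and let L be the set of odd positive integers. For infinitely many positive integers N, there exists a family 𝓕 of N sets, each of size k, such that 𝓕 contains no 2^{k/2}+1 members with pairwise intersections of odd size, yet the chromatic number of the graph on 𝓕 in which two sets are adjacent exactly when their intersection has odd size is at least c(k)·log N for some constant c(k) > 0 depending only on k. -/
open Finset

namespace Stmt15

def core (i j : ℕ) : Finset ℕ := {5*i, 5*i+1, 5*j, 5*j+2}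

def padF (k n i j : ℕ) : Finset ℕ :=
  (Finset.range (k-4)).image (fun t => 5*((i*n+j)*k + t) + 3)

def Fst (k n i j : ℕ) : Finset ℕ := core i j ∪ padF k n i j

lemma mem_core {x i j : ℕ} : x ∈ core i j ↔ x = 5*i ∨ x = 5*i+1 ∨ x = 5*j ∨ x = 5*j+2 := by
  simp [core]

lemma mem_padF {x k n i j : ℕ} :
    x ∈ padF k n i j ↔ ∃ t, t < k-4 ∧ x = 5*((i*n+j)*k + t) + 3 := by
  simp [padF, eq_comm]

lemma mul_add_inj {a b t t' m : ℕ} (ht : t < m) (ht' : t' < m)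
    (h : a*m + t = b*m + t') : a = b ∧ t = t' := by
  have hm : 0 < m := lt_of_le_of_lt (Nat.zero_le t) ht
  have h1 : (a*m + t) / m = a := by
    rw [Nat.add_comm, Nat.add_mul_div_right _ _ hm, Nat.div_eq_of_lt ht, Nat.zero_add]
  have h2 : (b*m + t') / m = b := by
    rw [Nat.add_comm, Nat.add_mul_div_right _ _ hm, Nat.div_eq_of_lt ht', Nat.zero_add]
  have hab : a = b := by rw [← h1, ← h2, h]
  subst hab
  exact ⟨rfl, Nat.add_left_cancel h⟩

lemma card_core {i j : ℕ} (h : i ≠ j) : (core i j).card = 4 := by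
  rw [core, card_insert_of_notMem (by simp only [mem_insert, mem_singleton]; omega), card_insert_of_notMem (by simp only [mem_insert, mem_singleton]; omega),
    card_insert_of_notMem (by simp only [mem_insert, mem_singleton]; omega), card_singleton]

lemma card_padF {k n i j : ℕ} : (padF k n i j).card = k - 4 := by
  rw [padF, card_image_of_injective _ ?_, card_range]
  intro a b h
  dsimp only at h
  set C := (i*n+j)*k with hC
  omega

lemma disj_core_padF {k n i j i' j' : ℕ} : Disjoint (core i j) (padF k n i' j') := by
  rw [Finset.disjoint_left]
  intro x hx hx'
  rw [mem_core] at hx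
  rw [mem_padF] at hx'
  obtain ⟨t, _, ht⟩ := hx'
  set C := (i'*n+j')*k + t
  omega

lemma card_Fst {k n i j : ℕ} (hk : 4 ≤ k) (h : i ≠ j) : (Fst k n i j).card = k := by
  rw [Fst, card_union_of_disjoint disj_core_padF, card_core h, card_padF]
  omega

lemma Fst_inj {k n i j i' j' : ℕ} (h : Fst k n i j = Fst k n i' j') : i = i' ∧ j = j' := by
  have h1 : (5*i+1 : ℕ) ∈ Fst k n i' j' := by
    rw [← h, Fst, mem_union, mem_core]; tauto
  have h2 : (5*j+2 : ℕ) ∈ Fst k n i' j' := by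
    rw [← h, Fst, mem_union, mem_core]; tauto
  rw [Fst, mem_union, mem_core, mem_padF] at h1 h2
  constructor
  · rcases h1 with (h1|h1|h1|h1) | ⟨t, _, ht⟩
    · omega
    · omega
    · omega
    · omega
    · set C := (i'*n+j')*k + t; omega
  · rcases h2 with (h2|h2|h2|h2) | ⟨t, _, ht⟩
    · omega
    · omega
    · omega
    · omega
    · set C := (i'*n+j')*k + t; omega

lemma disj_padF {k n i j i' j' : ℕ} (hj : j < n) (hj' : j' < n)
    (hne : ¬(i = i' ∧ j = j')) : Disjoint (padF k n i j) (padF k n i' j') := by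
  rw [Finset.disjoint_left]
  intro x hx hx'
  rw [mem_padF] at hx hx'
  obtain ⟨t, ht, hxe⟩ := hx
  obtain ⟨t', ht', hxe'⟩ := hx'
  have hk4 : t < k ∧ t' < k := by omega
  have he : (i*n+j)*k + t = (i'*n+j')*k + t' := by omega
  have h1 := mul_add_inj hk4.1 hk4.2 he
  have h2 := mul_add_inj hj hj' h1.1
  exact hne ⟨h2.1, h2.2⟩

lemma inter_eq {k n i j i' j' : ℕ} (hj : j < n) (hj' : j' < n)
    (hne : ¬(i = i' ∧ j = j')) :
    Fst k n i j ∩ Fst k n i' j' = core i j ∩ core i' j' := by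
  ext x
  simp only [mem_inter, Fst, mem_union]
  constructor
  · rintro ⟨h1 | h1, h2 | h2⟩
    · exact ⟨h1, h2⟩
    · exact absurd h2 (Finset.disjoint_left.mp (disj_core_padF) h1)
    · exact absurd h1 (Finset.disjoint_left.mp (disj_core_padF) h2)
    · exact absurd h2 (Finset.disjoint_left.mp (disj_padF hj hj' hne) h1)
  · rintro ⟨h1, h2⟩; exact ⟨Or.inl h1, Or.inl h2⟩

lemma odd_iff {k n i j i' j' : ℕ} (hij : i < j) (hij' : i' < j')
    (hj : j < n) (hj' : j' < n) (hne : ¬(i = i' ∧ j = j')) :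
    Odd ((Fst k n i j ∩ Fst k n i' j').card) ↔ (j = i' ∨ i = j') := by
  rw [inter_eq hj hj' hne]
  by_cases h1 : j = i'
  · have : core i j ∩ core i' j' = {5*j} := by
      ext x; simp only [mem_inter, mem_core, mem_singleton]; omega
    rw [this]; simp [h1]
  by_cases h2 : i = j'
  · have : core i j ∩ core i' j' = {5*i} := by
      ext x; simp only [mem_inter, mem_core, mem_singleton]; omega
    rw [this]; simp [h2]
  by_cases h3 : i = i'
  · have : core i j ∩ core i' j' = {5*i, 5*i+1} := by
      ext x; simp only [mem_inter, mem_core, mem_insert, mem_singleton]; omega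
    rw [this]
    have : ({5*i, 5*i+1} : Finset ℕ).card = 2 := by
      rw [card_insert_of_notMem (by simp), card_singleton]
    rw [this]; simp [h1, h2]
  by_cases h4 : j = j'
  · have : core i j ∩ core i' j' = {5*j, 5*j+2} := by
      ext x; simp only [mem_inter, mem_core, mem_insert, mem_singleton]; omega
    rw [this]
    have : ({5*j, 5*j+2} : Finset ℕ).card = 2 := by
      rw [card_insert_of_notMem (by simp), card_singleton]
    rw [this]; simp [h1, h2]
  · have : core i j ∩ core i' j' = ∅ := by
      ext x; simp only [mem_inter, mem_core, notMem_empty, iff_false, not_and]; omega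
    rw [this]; simp [h1, h2]



def Pset (n : ℕ) : Finset (ℕ × ℕ) :=
  (Finset.range n ×ˢ Finset.range n).filter (fun p => p.1 < p.2)

lemma mem_Pset {n : ℕ} {p : ℕ × ℕ} : p ∈ Pset n ↔ p.1 < p.2 ∧ p.2 < n := by
  simp [Pset]; omega

def Fam (k n : ℕ) : Finset (Finset ℕ) := (Pset n).image (fun p => Fst k n p.1 p.2)

lemma card_Fam {k n : ℕ} : (Fam k n).card = (Pset n).card := by
  apply Finset.card_image_of_injOn
  intro p _ q _ h
  obtain ⟨h1, h2⟩ := Fst_inj h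
  exact Prod.ext h1 h2

lemma card_Fam_lower {k n : ℕ} : n - 1 ≤ (Fam k n).card := by
  rw [card_Fam]
  have h := Finset.card_le_card_of_injOn (fun j => ((0:ℕ), j))
    (s := Finset.Ico 1 n) (t := Pset n)
    (fun j hj => by rw [Finset.mem_coe, mem_Pset]; simp at hj ⊢; omega)
    (fun a _ b _ h => by simpa using h)
  simpa using h

lemma card_Fam_upper {k n : ℕ} : (Fam k n).card ≤ n * n := by
  calc (Fam k n).card ≤ (Pset n).card := Finset.card_image_le
    _ ≤ ((Finset.range n) ×ˢ (Finset.range n)).card := Finset.card_filter_le _ _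
    _ = n * n := by rw [Finset.card_product, Finset.card_range]

end Stmt15

open Stmt15 in
theorem stmt_15 (k : ℕ) (hk : 4 ≤ k) (hke : Even k) :
    ∃ c : ℝ, 0 < c ∧ ∀ N₀ : ℕ, ∃ N : ℕ, N₀ ≤ N ∧
      ∃ 𝓕 : Finset (Finset ℕ), 𝓕.card = N ∧ (∀ F ∈ 𝓕, F.card = k) ∧
        (¬ ∃ S ⊆ 𝓕, S.card = 2 ^ (k / 2) + 1 ∧
          ∀ F₁ ∈ S, ∀ F₂ ∈ S, F₁ ≠ F₂ → Odd (F₁ ∩ F₂).card) ∧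
        (∀ (ℓ : ℕ) (f : Finset ℕ → ℕ),
          (∀ F ∈ 𝓕, f F < ℓ) →
          (∀ F₁ ∈ 𝓕, ∀ F₂ ∈ 𝓕, F₁ ≠ F₂ → Odd (F₁ ∩ F₂).card → f F₁ ≠ f F₂) →
          c * Real.log N ≤ (ℓ : ℝ)) := by
  have hlog2 : (0:ℝ) < Real.log 2 := Real.log_pos (by norm_num)
  refine ⟨1 / (2 * Real.log 2), by positivity, ?_⟩
  intro N₀
  set n := N₀ + 2 with hn
  refine ⟨(Fam k n).card, ?_, Fam k n, rfl, ?_, ?_, ?_⟩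
  · have := card_Fam_lower (k := k) (n := n)
    omega
  · -- all sets have size k
    intro F hF
    obtain ⟨p, hp, rfl⟩ := Finset.mem_image.mp hF
    exact card_Fst hk (Nat.ne_of_lt (mem_Pset.mp hp).1)
  · -- no large odd clique
    rintro ⟨S, hS, hcard, hodd⟩
    have h3 : 2 < S.card := by
      rw [hcard]
      have h4 : 4 ≤ 2 ^ (k / 2) := by
        calc (4:ℕ) = 2 ^ 2 := rfl
          _ ≤ 2 ^ (k / 2) := Nat.pow_le_pow_right (by norm_num) (by omega)
      omega
    obtain ⟨F₁, F₂, F₃, hF1, hF2, hF3, h12, h13, h23⟩ := Finset.two_lt_card_iff.mp h3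
    obtain ⟨p, hp, hpe⟩ := Finset.mem_image.mp (hS hF1)
    obtain ⟨q, hq, hqe⟩ := Finset.mem_image.mp (hS hF2)
    obtain ⟨r, hr, hre⟩ := Finset.mem_image.mp (hS hF3)
    rw [mem_Pset] at hp hq hr
    have hne_pq : ¬(p.1 = q.1 ∧ p.2 = q.2) := by
      rintro ⟨e1, e2⟩; exact h12 (by rw [← hpe, ← hqe, e1, e2])
    have hne_pr : ¬(p.1 = r.1 ∧ p.2 = r.2) := by
      rintro ⟨e1, e2⟩; exact h13 (by rw [← hpe, ← hre, e1, e2])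
    have hne_qr : ¬(q.1 = r.1 ∧ q.2 = r.2) := by
      rintro ⟨e1, e2⟩; exact h23 (by rw [← hqe, ← hre, e1, e2])
    have o1 : p.2 = q.1 ∨ p.1 = q.2 := by
      rw [← odd_iff hp.1 hq.1 hp.2 hq.2 hne_pq]
      rw [hpe, hqe]; exact hodd _ hF1 _ hF2 h12
    have o2 : p.2 = r.1 ∨ p.1 = r.2 := by
      rw [← odd_iff hp.1 hr.1 hp.2 hr.2 hne_pr]
      rw [hpe, hre]; exact hodd _ hF1 _ hF3 h13
    have o3 : q.2 = r.1 ∨ q.1 = r.2 := by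
      rw [← odd_iff hq.1 hr.1 hq.2 hr.2 hne_qr]
      rw [hqe, hre]; exact hodd _ hF2 _ hF3 h23
    have := hp.1; have := hq.1; have := hr.1
    omega
  · -- chromatic number bound
    intro ℓ f hf hproper
    set g : ℕ → Finset ℕ := fun i => (Finset.Ico (i+1) n).image (fun j => f (Fst k n i j)) with hg
    have key : ∀ i i', i < i' → i' < n → g i ≠ g i' := by
      intro i i' hii' hi'n heq
      have hmem : f (Fst k n i i') ∈ g i :=
        Finset.mem_image_of_mem _ (by simp [Finset.mem_Ico]; omega)
      rw [heq] at hmem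
      obtain ⟨j, hj, hfj⟩ := Finset.mem_image.mp hmem
      rw [Finset.mem_Ico] at hj
      have hF1 : Fst k n i i' ∈ Fam k n :=
        Finset.mem_image.mpr ⟨(i, i'), mem_Pset.mpr ⟨hii', hi'n⟩, rfl⟩
      have hF2 : Fst k n i' j ∈ Fam k n :=
        Finset.mem_image.mpr ⟨(i', j), mem_Pset.mpr ⟨by omega, by omega⟩, rfl⟩
      have hne : Fst k n i' j ≠ Fst k n i i' := by
        intro h; have := Fst_inj h; omega
      have hodd' : Odd ((Fst k n i' j ∩ Fst k n i i').card) := by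
        rw [odd_iff (by omega) hii' (by omega) hi'n (by omega)]
        exact Or.inr rfl
      exact hproper _ hF2 _ hF1 hne hodd' hfj
    have hcardle : n ≤ 2 ^ ℓ := by
      have h := Finset.card_le_card_of_injOn g
        (s := Finset.range n) (t := (Finset.range ℓ).powerset)
        (fun i hi => by
          rw [Finset.mem_coe, Finset.mem_powerset]
          intro x hx
          obtain ⟨j, hj, rfl⟩ := Finset.mem_image.mp hx
          rw [Finset.mem_Ico] at hj
          rw [Finset.mem_range]
          exact hf _ (Finset.mem_image.mpr ⟨(i, j), mem_Pset.mpr ⟨by omega, by omega⟩, rfl⟩))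
        (fun a ha b hb h => by
          by_contra hab
          rw [Finset.mem_coe, Finset.mem_range] at ha hb
          rcases Nat.lt_or_ge a b with hlt | hge
          · exact key a b hlt hb h
          · exact key b a (by omega) ha h.symm)
      simpa [Finset.card_powerset] using h
    set N := (Fam k n).card with hN
    have hN1 : 1 ≤ N := by have := card_Fam_lower (k := k) (n := n); omega
    have hNn : (N:ℝ) ≤ (n:ℝ) * n := by exact_mod_cast card_Fam_upper
    have hlogN : Real.log N ≤ 2 * Real.log n := by
      calc Real.log N ≤ Real.log ((n:ℝ) * n) := by
            apply Real.log_le_log (by exact_mod_cast hN1) hNn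
        _ = Real.log n + Real.log n := Real.log_mul (by positivity) (by positivity)
        _ = 2 * Real.log n := by ring
    have hlogn : Real.log n ≤ ℓ * Real.log 2 := by
      calc Real.log n ≤ Real.log ((2:ℝ) ^ ℓ) := by
            apply Real.log_le_log (by positivity) (by exact_mod_cast hcardle)
        _ = ℓ * Real.log 2 := by rw [Real.log_pow]
    calc 1 / (2 * Real.log 2) * Real.log N
        ≤ 1 / (2 * Real.log 2) * (2 * (ℓ * Real.log 2)) := by
          apply mul_le_mul_of_nonneg_left _ (by positivity)
          calc Real.log N ≤ 2 * Real.log n := hlogN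
            _ ≤ 2 * (ℓ * Real.log 2) := by linarith
      _ = ℓ := by field_simp
end

section
/- Let A_1,...,A_r, B_1,...,B_r be finite sets (for some r ≥ 1) such that for all i, j ∈ {1,...,r}, the quantity |A_i ∩ B_j| + |A_j ∩ B_i| equals zero if and only if i = j. If moreover |A_i| + |B_i| = k/2 for all i (for some even integer k), then r ≤ 2^{k/2}. -/
private lemma count_aux {α : Type*} [DecidableEq α] (U A B : Finset α)
    (hA : A ⊆ U) (hB : B ⊆ U) (hd : Disjoint A B) :
    ((U.powerset).filter (fun S => A ⊆ S ∧ Disjoint B S)).card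
      = 2 ^ (U.card - (A.card + B.card)) := by
  have hcard : ((U.powerset).filter (fun S => A ⊆ S ∧ Disjoint B S)).card
      = ((U \ (A ∪ B)).powerset).card := by
    apply Finset.card_bij' (fun S _ => S \ A) (fun T _ => T ∪ A)
    · intro S hS
      simp only [Finset.mem_filter, Finset.mem_powerset] at hS
      obtain ⟨hSU, hAS, hBS⟩ := hS
      rw [Finset.mem_powerset]
      intro x hx
      simp only [Finset.mem_sdiff, Finset.mem_union, not_or] at hx ⊢
      refine ⟨hSU hx.1, ?_, ?_⟩
      · exact hx.2
      · exact fun hxB => (Finset.disjoint_left.mp hBS) hxB hx.1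
    · intro T hT
      rw [Finset.mem_powerset] at hT
      simp only [Finset.mem_filter, Finset.mem_powerset]
      refine ⟨?_, Finset.subset_union_right, ?_⟩
      · intro x hx
        rcases Finset.mem_union.mp hx with hx | hx
        · exact (Finset.mem_sdiff.mp (hT hx)).1
        · exact hA hx
      · rw [Finset.disjoint_union_right]
        constructor
        · rw [Finset.disjoint_left]
          intro x hxB hxT
          have := hT hxT
          simp only [Finset.mem_sdiff, Finset.mem_union, not_or] at this
          exact this.2.2 hxB
        · exact hd.symm
    · intro S hS
      simp only [Finset.mem_filter, Finset.mem_powerset] at hS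
      exact Finset.sdiff_union_of_subset hS.2.1
    · intro T hT
      rw [Finset.mem_powerset] at hT
      rw [Finset.union_sdiff_right, Finset.sdiff_eq_self_iff_disjoint]
      rw [Finset.disjoint_left]
      intro x hxT hxA
      have := hT hxT
      simp only [Finset.mem_sdiff, Finset.mem_union, not_or] at this
      exact this.2.1 hxA
  rw [hcard, Finset.card_powerset, Finset.card_sdiff_of_subset (Finset.union_subset hA hB),
    Finset.card_union_of_disjoint hd]

theorem stmt_16 {α : Type*} [DecidableEq α] (r k : ℕ) (hr : 1 ≤ r) (hke : Even k)
    (A B : ℕ → Finset α)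
    (h : ∀ i ∈ Finset.Icc 1 r, ∀ j ∈ Finset.Icc 1 r,
      ((A i ∩ B j).card + (A j ∩ B i).card = 0 ↔ i = j))
    (hsize : ∀ i ∈ Finset.Icc 1 r, (A i).card + (B i).card = k / 2) :
    r ≤ 2 ^ (k / 2) := by
  classical
  set m := k / 2 with hm
  set I := Finset.Icc 1 r with hI
  set U : Finset α := I.biUnion (fun i => A i ∪ B i) with hU
  have hdisj : ∀ i ∈ I, Disjoint (A i) (B i) := by
    intro i hi
    have := (h i hi i hi).mpr rfl
    have : (A i ∩ B i).card = 0 := by omega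
    rw [Finset.card_eq_zero] at this
    exact Finset.disjoint_left.mpr (fun {x} hx hx' =>
      (Finset.notMem_empty x) (this ▸ Finset.mem_inter.mpr ⟨hx, hx'⟩))
  have hAU : ∀ i ∈ I, A i ⊆ U := fun i hi =>
    (Finset.subset_union_left).trans (Finset.subset_biUnion_of_mem (fun j => A j ∪ B j) hi)
  have hBU : ∀ i ∈ I, B i ⊆ U := fun i hi =>
    (Finset.subset_union_right).trans (Finset.subset_biUnion_of_mem (fun j => A j ∪ B j) hi)
  set F : ℕ → Finset (Finset α) :=
    fun i => (U.powerset).filter (fun S => A i ⊆ S ∧ Disjoint (B i) S) with hF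
  have hFcard : ∀ i ∈ I, (F i).card = 2 ^ (U.card - m) := by
    intro i hi
    rw [hF, count_aux U (A i) (B i) (hAU i hi) (hBU i hi) (hdisj i hi), hsize i hi]
  have hmU : m ≤ U.card := by
    have h1 : (1 : ℕ) ∈ I := by simp [hI]; omega
    have : (A 1 ∪ B 1).card ≤ U.card :=
      Finset.card_le_card (Finset.union_subset (hAU 1 h1) (hBU 1 h1))
    rwa [Finset.card_union_of_disjoint (hdisj 1 h1), hsize 1 h1] at this
  have hpd : ∀ i ∈ I, ∀ j ∈ I, i ≠ j → Disjoint (F i) (F j) := by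
    intro i hi j hj hij
    rw [Finset.disjoint_left]
    intro S hSi hSj
    simp only [hF, Finset.mem_filter] at hSi hSj
    obtain ⟨-, hAi, hBi⟩ := hSi
    obtain ⟨-, hAj, hBj⟩ := hSj
    have h1 : A i ∩ B j = ∅ := by
      rw [Finset.eq_empty_iff_forall_notMem]
      intro x hx
      rw [Finset.mem_inter] at hx
      exact Finset.disjoint_left.mp hBj hx.2 (hAi hx.1)
    have h2 : A j ∩ B i = ∅ := by
      rw [Finset.eq_empty_iff_forall_notMem]
      intro x hx
      rw [Finset.mem_inter] at hx
      exact Finset.disjoint_left.mp hBi hx.2 (hAj hx.1)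
    exact hij ((h i hi j hj).mp (by rw [h1, h2, Finset.card_empty]))
  have hsum : ∑ i ∈ I, (F i).card ≤ 2 ^ U.card := by
    rw [← Finset.card_biUnion hpd, ← Finset.card_powerset]
    apply Finset.card_le_card
    intro S hS
    rw [Finset.mem_biUnion] at hS
    obtain ⟨i, hi, hSi⟩ := hS
    exact (Finset.mem_filter.mp hSi).1
  have hsum2 : r * 2 ^ (U.card - m) ≤ 2 ^ U.card := by
    calc r * 2 ^ (U.card - m) = ∑ i ∈ I, (F i).card := by
          rw [Finset.sum_congr rfl hFcard, Finset.sum_const, Nat.card_Icc]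
          simp [smul_eq_mul]
      _ ≤ 2 ^ U.card := hsum
  have hsplit : 2 ^ U.card = 2 ^ m * 2 ^ (U.card - m) := by
    rw [← pow_add]
    congr 1
    omega
  rw [hsplit] at hsum2
  exact Nat.le_of_mul_le_mul_right hsum2 (Nat.pow_pos (by norm_num))
end

section
/- Let p be a prime, k ≥ p an integer, a ∈ ℤ/pℤ with a ≠ k mod p, and let L' = {ℓ ∈ {0,...,k-1} : ℓ mod p ≠ a}. For every n ≥ k, the family 𝓕 = all k-element subsets of {1,...,n} has the property that any subfamily 𝓖 ⊆ 𝓕 in which all pairwise intersection sizes are congruent to a modulo p satisfies |𝓖| ≤ C(n, p-1), where C(n,p-1) denotes the binomial coefficient. -/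
open Finset

private lemma aux_choose_mono (n : ℕ) : ∀ i, 1 ≤ i → 2 * i ≤ n → n.choose 1 ≤ n.choose i := by
  intro i
  induction i with
  | zero => omega
  | succ m ih =>
    intro h1 h2
    rcases Nat.eq_or_lt_of_le h1 with h | h
    · rw [← h]
    · have hm : 1 ≤ m := by omega
      refine (ih hm (by omega)).trans (Nat.choose_le_succ_of_lt_half_left ?_)
      omega

private lemma n_le_choose (n j : ℕ) (h1 : 1 ≤ j) (h2 : j + 1 ≤ n) : n ≤ n.choose j := by
  rcases le_or_gt (2 * j) n with h | h
  · have := aux_choose_mono n j h1 h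
    simpa [Nat.choose_one_right] using this
  · have hs : n.choose j = n.choose (n - j) := (Nat.choose_symm (by omega)).symm
    rw [hs]
    have := aux_choose_mono n (n - j) (by omega) (by omega)
    simpa [Nat.choose_one_right] using this

theorem stmt_19 (p k : ℕ) (hp : p.Prime) (hpk : p ≤ k) (a : ZMod p)
    (ha : a ≠ (k : ZMod p)) (n : ℕ) (hn : k ≤ n)
    (𝓖 : Finset (Finset ℕ))
    (h𝓖 : ∀ F ∈ 𝓖, F ⊆ Finset.Icc 1 n ∧ F.card = k)
    (hint : ∀ F₁ ∈ 𝓖, ∀ F₂ ∈ 𝓖, F₁ ≠ F₂ → ((F₁ ∩ F₂).card : ZMod p) = a) :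
    𝓖.card ≤ Nat.choose n (p - 1) := by
  classical
  haveI : Fact p.Prime := ⟨hp⟩
  have hp2 : 2 ≤ p := hp.two_le
  have hn1 : 1 ≤ n := by omega
  set S : Finset ℕ := Finset.Icc 1 n with hSdef
  have hScard : S.card = n := by simp [hSdef]
  -- the vectors
  let w : Option {F // F ∈ 𝓖} → (Option {x // x ∈ S} → ZMod p) :=
    fun t => Option.elim t
      (fun j => Option.elim j (-(k : ZMod p)) (fun _ => 1))
      (fun F => fun j => Option.elim j (-a) (fun x => if (x : ℕ) ∈ (F : Finset ℕ) then 1 else 0))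
  -- coefficient vectors for evaluation
  let c : Finset ℕ → (Option {x // x ∈ S} → ZMod p) :=
    fun G j => Option.elim j 1 (fun x => if (x : ℕ) ∈ G then 1 else 0)
  -- key sum: for T ⊆ S, counting
  have hcount : ∀ T : Finset ℕ, T ⊆ S →
      ∑ x : {x // x ∈ S}, (if (x : ℕ) ∈ T then (1 : ZMod p) else 0) = (T.card : ZMod p) := by
    intro T hT
    rw [Finset.sum_coe_sort S (fun x => if x ∈ T then (1 : ZMod p) else 0)]
    rw [Finset.sum_boole]
    congr 1
    rw [Finset.filter_mem_eq_inter, Finset.inter_eq_right.mpr hT]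
  -- evaluation of w against c
  have hEnone : ∀ G ∈ 𝓖, ∑ j : Option {x // x ∈ S}, c G j * w none j = 0 := by
    intro G hG
    rw [Fintype.sum_option]
    have : ∑ x : {x // x ∈ S}, c G (some x) * w none (some x)
        = ∑ x : {x // x ∈ S}, (if (x : ℕ) ∈ G then (1 : ZMod p) else 0) := by
      apply Finset.sum_congr rfl; intro x _; simp [c, w]
    rw [this, hcount G (h𝓖 G hG).1]
    simp [c, w, (h𝓖 G hG).2]
  have hEsome : ∀ G, G ∈ 𝓖 → ∀ F, (hF : F ∈ 𝓖) →
      ∑ j : Option {x // x ∈ S}, c G j * w (some ⟨F, hF⟩) j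
        = ((F ∩ G).card : ZMod p) - a := by
    intro G hG F hF
    rw [Fintype.sum_option]
    have h1 : ∑ x : {x // x ∈ S}, c G (some x) * w (some ⟨F, hF⟩) (some x)
        = ∑ x : {x // x ∈ S}, (if (x : ℕ) ∈ F ∩ G then (1 : ZMod p) else 0) := by
      apply Finset.sum_congr rfl; intro x _
      simp only [c, w, Option.elim]
      by_cases hxG : (x : ℕ) ∈ G <;> by_cases hxF : (x : ℕ) ∈ F <;>
        simp [hxG, hxF, Finset.mem_inter]
    rw [h1, hcount (F ∩ G) (fun x hx => (h𝓖 F hF).1 (Finset.mem_inter.mp hx).1)]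
    simp only [c, w, Option.elim]
    ring
  -- linear independence
  have hw : LinearIndependent (ZMod p) w := by
    rw [Fintype.linearIndependent_iff]
    intro g hg
    have hg' : ∀ j, ∑ t, g t * w t j = 0 := by
      intro j
      have := congrFun hg j
      simpa [Finset.sum_apply] using this
    -- first, the `some` coefficients vanish
    have hsome : ∀ (F : {F // F ∈ 𝓖}), g (some F) = 0 := by
      rintro ⟨G, hG⟩
      -- pair the dependency with c G
      have key : ∑ t, g t * (∑ j : Option {x // x ∈ S}, c G j * w t j) = 0 := by
        have : ∑ t, g t * (∑ j : Option {x // x ∈ S}, c G j * w t j)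
            = ∑ j : Option {x // x ∈ S}, c G j * (∑ t, g t * w t j) := by
          simp_rw [Finset.mul_sum]
          rw [Finset.sum_comm]
          apply Finset.sum_congr rfl; intro j _
          apply Finset.sum_congr rfl; intro t _; ring
        rw [this]
        simp [hg']
      rw [Fintype.sum_option] at key
      rw [hEnone G hG, mul_zero, zero_add] at key
      have key2 : ∑ F : {F // F ∈ 𝓖}, g (some F) * (∑ j : Option {x // x ∈ S}, c G j * w (some F) j)
          = g (some ⟨G, hG⟩) * ((k : ZMod p) - a) := by
        rw [Finset.sum_eq_single (⟨G, hG⟩ : {F // F ∈ 𝓖})]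
        · rw [hEsome G hG G hG, Finset.inter_self, (h𝓖 G hG).2]
        · rintro ⟨F, hF⟩ _ hne
          rw [hEsome G hG F hF]
          have hFG : F ≠ G := by
            intro h; apply hne; simp [h]
          rw [hint F hF G hG hFG]
          ring
        · intro h; exact absurd (Finset.mem_univ _) h
      rw [key2] at key
      have hka : (k : ZMod p) - a ≠ 0 := sub_ne_zero.mpr (Ne.symm ha)
      exact (mul_eq_zero.mp key).resolve_right hka
    intro t
    match t with
    | some F => exact hsome F
    | none =>
      have h1S : (1 : ℕ) ∈ S := by simp [hSdef]; omega
      have := hg' (some ⟨1, h1S⟩)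
      rw [Fintype.sum_option] at this
      have hz : ∑ F : {F // F ∈ 𝓖}, g (some F) * w (some F) (some ⟨1, h1S⟩) = 0 := by
        apply Finset.sum_eq_zero; intro F _; rw [hsome F, zero_mul]
      rw [hz, add_zero] at this
      simpa [w] using this
  -- card bound via dimension
  have hdim := hw.fintype_card_le_finrank
  rw [Module.finrank_fintype_fun_eq_card] at hdim
  simp only [Fintype.card_option, Fintype.card_coe] at hdim
  rw [hScard] at hdim
  have hcard : 𝓖.card ≤ n := by omega
  refine hcard.trans (n_le_choose n (p - 1) (by omega) (by omega))
end
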